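/- arXiv:2303.11402 — 15 statements merged into one kernel-verified Lean document; each statement's English description precedes it below -/
import Mathlib

section
/- The map g has exactly one fixed point in the interval [0,1]. -/
/-!
The generating function `G` is continuous and nondecreasing on `[0, 1]`, so `g` is continuous
and nonincreasing there, with `g 0 ≥ p ≥ 0` and `g 1 = p ≤ 1`. The intermediate value theorem
gives a fixed point, and an antitone map of a linear order has at most one fixed point.
-/

open Set

theorem AntitoneOn.eq_of_isFixedPt {α : Type*} [LinearOrder α] {f : α → α} {s : Set α}
    (hf : AntitoneOn f s) {x y : α} (hxs : x ∈ s) (hys : y ∈ s)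
    (hx : Function.IsFixedPt f x) (hy : Function.IsFixedPt f y) : x = y := by
  rcases le_total x y with h | h
  · exact le_antisymm h (by simpa only [hx.eq, hy.eq] using hf hxs hys h)
  · exact le_antisymm (by simpa only [hx.eq, hy.eq] using hf hys hxs h) h

theorem existsUnique_isFixedPt_of_antitoneOn_Icc {α : Type*} [ConditionallyCompleteLinearOrder α]
    [TopologicalSpace α] [OrderTopology α] [DenselyOrdered α] {f : α → α} {a b : α}
    (hle : a ≤ b) (hcont : ContinuousOn f (Icc a b)) (hanti : AntitoneOn f (Icc a b))
    (ha : a ≤ f a) (hb : f b ≤ b) : ∃! x, x ∈ Icc a b ∧ f x = x := by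
  obtain ⟨x, hx, hfx⟩ := exists_mem_Icc_isFixedPt hcont hle ha hb
  exact ⟨x, ⟨hx, hfx⟩, fun y ⟨hy, hfy⟩ => hanti.eq_of_isFixedPt hy hx hfy hfx⟩

section PowerSeries

variable {χ : ℕ → ℝ} (hχ_nonneg : ∀ m, 0 ≤ χ m)
include hχ_nonneg

theorem norm_mul_pow_le_of_mem_Icc {x : ℝ} (hx : x ∈ Icc (0 : ℝ) 1) (m : ℕ) :
    ‖χ m * x ^ m‖ ≤ χ m := by
  rw [Real.norm_of_nonneg (mul_nonneg (hχ_nonneg m) (pow_nonneg hx.1 m))]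
  exact mul_le_of_le_one_right (hχ_nonneg m) (pow_le_one₀ hx.1 hx.2)

variable (hχ : Summable χ)
include hχ

theorem summable_mul_pow_of_mem_Icc {x : ℝ} (hx : x ∈ Icc (0 : ℝ) 1) :
    Summable fun m => χ m * x ^ m :=
  .of_norm_bounded hχ (norm_mul_pow_le_of_mem_Icc hχ_nonneg hx)

theorem monotoneOn_tsum_mul_pow : MonotoneOn (fun x => ∑' m, χ m * x ^ m) (Icc 0 1) :=
  fun _ hx _ hy hxy => Summable.tsum_le_tsum
    (fun m => mul_le_mul_of_nonneg_left (pow_le_pow_left₀ hx.1 hxy m) (hχ_nonneg m))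
    (summable_mul_pow_of_mem_Icc hχ_nonneg hχ hx) (summable_mul_pow_of_mem_Icc hχ_nonneg hχ hy)

theorem continuousOn_tsum_mul_pow : ContinuousOn (fun x => ∑' m, χ m * x ^ m) (Icc 0 1) :=
  continuousOn_tsum (fun m => (continuous_const.mul (continuous_pow m)).continuousOn) hχ
    fun m _ hx => norm_mul_pow_le_of_mem_Icc hχ_nonneg hx m

end PowerSeries

theorem g_unique_fixed_point_general
    (χ : ℕ → ℝ) (hχ_nonneg : ∀ m, 0 ≤ χ m) (hχ_sum : ∑' m, χ m = 1)
    (p q : ℝ) (hp : 0 ≤ p) (hq : 0 ≤ q) (hpq1 : p + q < 1)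
    (G : ℝ → ℝ) (hG : ∀ x, G x = ∑' m, χ m * x ^ m)
    (g : ℝ → ℝ) (hg : ∀ x, g x = (1 - q) - (1 - p - q) * G x) :
    ∃! x, x ∈ Set.Icc (0 : ℝ) 1 ∧ g x = x := by
  obtain rfl : G = fun x => ∑' m, χ m * x ^ m := funext hG
  obtain rfl : g = fun x => (1 - q) - (1 - p - q) * ∑' m, χ m * x ^ m := funext hg
  have hχ : Summable χ := by
    by_contra h
    simp [tsum_eq_zero_of_not_summable h] at hχ_sum
  have hmono := monotoneOn_tsum_mul_pow hχ_nonneg hχ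
  have hG1 : ∑' m, χ m * (1 : ℝ) ^ m = 1 := by simpa using hχ_sum
  have hG0 : ∑' m, χ m * (0 : ℝ) ^ m ≤ 1 :=
    hG1 ▸ hmono (left_mem_Icc.2 zero_le_one) (right_mem_Icc.2 zero_le_one) zero_le_one
  have hslope : 0 ≤ 1 - p - q := by linarith
  refine existsUnique_isFixedPt_of_antitoneOn_Icc zero_le_one ?_ ?_ ?_ ?_
  · exact continuousOn_const.sub
      (continuousOn_const.mul (continuousOn_tsum_mul_pow hχ_nonneg hχ))
  · exact fun x hx y hy hxy => sub_le_sub_left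
      (mul_le_mul_of_nonneg_left (hmono hx hy hxy) hslope) _
  · linarith [mul_le_mul_of_nonneg_left hG0 hslope]
  · simp only [hG1]
    linarith

/-- The map g has exactly one fixed point in [0,1]. -/
theorem g_unique_fixed_point
    (χ : ℕ → ℝ) (hχ_nonneg : ∀ m, 0 ≤ χ m) (hχ_sum : ∑' m, χ m = 1) (hχ0 : χ 0 < 1)
    (p q : ℝ) (hp : 0 ≤ p) (hq : 0 ≤ q) (hpq0 : 0 < p + q) (hpq1 : p + q < 1)
    (G : ℝ → ℝ) (hG : ∀ x, G x = ∑' m, χ m * x ^ m)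
    (g : ℝ → ℝ) (hg : ∀ x, g x = (1 - q) - (1 - p - q) * G x) :
    ∃! x, x ∈ Set.Icc (0 : ℝ) 1 ∧ g x = x :=
  g_unique_fixed_point_general χ hχ_nonneg hχ_sum p q hp hq hpq1 G hG g hg
end

section
/- Define the sequence (a_n) by a_0 = p and a_{n+1} = (g∘g)(a_n). Then (a_n) is nondecreasing and converges; its limit w' lies in (0,1), is a fixed point of g∘g, and satisfies w' ≤ γ for every fixed point γ of g∘g in (0,1]. In particular, g∘g has a smallest fixed point in (0,1], namely w'. -/
/-!
Since `G` is increasing and `g = (1 - q) - (1 - p - q) • G` is decreasing, `g ∘ g` is a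
continuous increasing self-map of `[0, 1]` with values in `[p, 1 - q]`. Its orbit from `p`, which
lies below every value of `g ∘ g`, therefore increases to the least fixed point of `g ∘ g` that
is `≥ p`, i.e. the least fixed point in `(0, 1]`. The limit is positive because
`g (g p) > p` (`G < 1` on `[0, 1)` as `χ` charges some `m > 0`), and it is not `1` because
`g 1 = p` while `g p < 1`.
-/

open Set Filter Topology Function

section Iteration

variable {α : Type*} {f : α → α} {s : Set α} {a : ℕ → α}

theorem mem_of_mapsTo_of_eq_succ (hf : MapsTo f s s) (h0 : a 0 ∈ s)
    (ha : ∀ n, a (n + 1) = f (a n)) (n : ℕ) : a n ∈ s := by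
  induction n with
  | zero => exact h0
  | succ n ih => exact ha n ▸ hf ih

theorem monotone_of_monotoneOn_of_eq_succ [Preorder α] (hf : MonotoneOn f s)
    (hmem : ∀ n, a n ∈ s) (h01 : a 0 ≤ a 1) (ha : ∀ n, a (n + 1) = f (a n)) : Monotone a := by
  refine monotone_nat_of_le_succ fun n => ?_
  induction n with
  | zero => exact h01
  | succ n ih => rw [ha n, ha (n + 1)]; exact hf (hmem n) (hmem (n + 1)) ih

theorem le_of_isFixedPt_of_eq_succ [Preorder α] (hf : MonotoneOn f s) (hmem : ∀ n, a n ∈ s)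
    {γ : α} (hγ : γ ∈ s) (hfix : IsFixedPt f γ) (h0 : a 0 ≤ γ) (ha : ∀ n, a (n + 1) = f (a n))
    (n : ℕ) : a n ≤ γ := by
  induction n with
  | zero => exact h0
  | succ n ih => rw [ha n, ← hfix.eq]; exact hf (hmem n) hγ ih

theorem isFixedPt_of_tendsto_of_eq_succ [TopologicalSpace α] [T2Space α] {w : α}
    (hmem : ∀ n, a n ∈ s) (hf : ContinuousWithinAt f s w) (hlim : Tendsto a atTop (𝓝 w))
    (ha : ∀ n, a (n + 1) = f (a n)) : IsFixedPt f w := by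
  have hfa : Tendsto (fun n => f (a n)) atTop (𝓝 (f w)) :=
    hf.tendsto.comp (tendsto_nhdsWithin_iff.mpr ⟨hlim, Eventually.of_forall hmem⟩)
  simp only [← ha] at hfa
  exact tendsto_nhds_unique hfa (hlim.comp (tendsto_add_atTop_nat 1))

theorem exists_tendsto_isFixedPt_of_eq_succ [ConditionallyCompleteLinearOrder α]
    [TopologicalSpace α] [OrderTopology α] (hs : IsClosed s) (hbdd : BddAbove s)
    (hfs : MapsTo f s s) (hf : MonotoneOn f s) (hfc : ContinuousOn f s) (h0 : a 0 ∈ s)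
    (h01 : a 0 ≤ a 1) (ha : ∀ n, a (n + 1) = f (a n)) :
    Monotone a ∧ ∃ w ∈ s, Tendsto a atTop (𝓝 w) ∧ IsFixedPt f w ∧
      ∀ γ ∈ s, IsFixedPt f γ → a 0 ≤ γ → w ≤ γ := by
  have hmem := mem_of_mapsTo_of_eq_succ hfs h0 ha
  have hmono := monotone_of_monotoneOn_of_eq_succ hf hmem h01 ha
  have hlim := tendsto_atTop_ciSup hmono (hbdd.mono (range_subset_iff.mpr hmem))
  have hw := hs.mem_of_tendsto hlim (Eventually.of_forall hmem)
  refine ⟨hmono, _, hw, hlim, isFixedPt_of_tendsto_of_eq_succ hmem (hfc _ hw) hlim ha, ?_⟩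
  exact fun γ hγ hfix h0γ => ciSup_le (le_of_isFixedPt_of_eq_succ hf hmem hγ hfix h0γ ha)

end Iteration

theorem exists_pos_apply_pos_of_apply_zero_lt_tsum {χ : ℕ → ℝ} (hχ : ∀ m, 0 ≤ χ m)
    (h : χ 0 < ∑' m, χ m) : ∃ m, 0 < m ∧ 0 < χ m := by
  by_contra! hzero
  rw [tsum_eq_single 0 fun m hm => (hzero m (Nat.pos_of_ne_zero hm)).antisymm (hχ m)] at h
  exact h.false

noncomputable def pgf (χ : ℕ → ℝ) (x : ℝ) : ℝ := ∑' m, χ m * x ^ m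

section Pgf

variable {χ : ℕ → ℝ}

theorem pgf_one (χ : ℕ → ℝ) : pgf χ 1 = ∑' m, χ m := by simp [pgf]

theorem pgf_nonneg (hχ : ∀ m, 0 ≤ χ m) {x : ℝ} (hx : 0 ≤ x) : 0 ≤ pgf χ x :=
  tsum_nonneg fun m => mul_nonneg (hχ m) (pow_nonneg hx m)

theorem mul_pow_le_of_mem_Icc (hχ : ∀ m, 0 ≤ χ m) {x : ℝ} (hx : x ∈ Icc (0 : ℝ) 1) (m : ℕ) :
    χ m * x ^ m ≤ χ m :=
  mul_le_of_le_one_right (hχ m) (pow_le_one₀ hx.1 hx.2)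

theorem summable_mul_pow (hχ : ∀ m, 0 ≤ χ m) (hs : Summable χ) {x : ℝ}
    (hx : x ∈ Icc (0 : ℝ) 1) : Summable fun m => χ m * x ^ m :=
  hs.of_nonneg_of_le (fun m => mul_nonneg (hχ m) (pow_nonneg hx.1 m))
    (mul_pow_le_of_mem_Icc hχ hx)

theorem pgf_monotoneOn (hχ : ∀ m, 0 ≤ χ m) (hs : Summable χ) :
    MonotoneOn (pgf χ) (Icc 0 1) := fun _ hx _ hy hxy =>
  Summable.tsum_le_tsum
    (fun m => mul_le_mul_of_nonneg_left (pow_le_pow_left₀ hx.1 hxy m) (hχ m))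
    (summable_mul_pow hχ hs hx) (summable_mul_pow hχ hs hy)

theorem pgf_strictMonoOn (hχ : ∀ m, 0 ≤ χ m) (hs : Summable χ) {m₀ : ℕ} (hm₀ : 0 < m₀)
    (hχm₀ : 0 < χ m₀) : StrictMonoOn (pgf χ) (Icc 0 1) := by
  intro x hx y hy hxy
  refine Summable.tsum_lt_tsum (i := m₀)
    (fun m => mul_le_mul_of_nonneg_left (pow_le_pow_left₀ hx.1 hxy.le m) (hχ m)) ?_
    (summable_mul_pow hχ hs hx) (summable_mul_pow hχ hs hy)
  exact mul_lt_mul_of_pos_left (pow_lt_pow_left₀ hxy hx.1 hm₀.ne') hχm₀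

theorem pgf_continuousOn (hχ : ∀ m, 0 ≤ χ m) (hs : Summable χ) :
    ContinuousOn (pgf χ) (Icc 0 1) := by
  refine continuousOn_tsum (fun m => (continuous_const.mul (continuous_pow m)).continuousOn)
    hs fun m x hx => ?_
  rw [Real.norm_of_nonneg (mul_nonneg (hχ m) (pow_nonneg hx.1 m))]
  exact mul_pow_le_of_mem_Icc hχ hx m

theorem pgf_mapsTo_Icc (hχ : ∀ m, 0 ≤ χ m) (hs : Summable χ) (hsum : ∑' m, χ m = 1) :
    MapsTo (pgf χ) (Icc 0 1) (Icc 0 1) := fun _ hx =>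
  ⟨pgf_nonneg hχ hx.1, (pgf_monotoneOn hχ hs hx (right_mem_Icc.2 zero_le_one) hx.2).trans_eq
    ((pgf_one χ).trans hsum)⟩

end Pgf

section AffineReflection

variable {G g : ℝ → ℝ} {p q : ℝ}

theorem mapsTo_Icc_of_eq_sub_mul (hg : ∀ x, g x = 1 - q - (1 - p - q) * G x) (hpq : p + q ≤ 1)
    {s : Set ℝ} (hG : MapsTo G s (Icc 0 1)) : MapsTo g s (Icc p (1 - q)) := fun x hx => by
  obtain ⟨h0, h1⟩ := hG hx
  rw [mem_Icc, hg]
  constructor <;> nlinarith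

theorem antitoneOn_of_eq_sub_mul (hg : ∀ x, g x = 1 - q - (1 - p - q) * G x) (hpq : p + q ≤ 1)
    {s : Set ℝ} (hG : MonotoneOn G s) : AntitoneOn g s := fun x hx y hy hxy => by
  rw [hg, hg]
  nlinarith [hG hx hy hxy]

theorem lt_apply_of_eq_sub_mul (hg : ∀ x, g x = 1 - q - (1 - p - q) * G x) (hpq : p + q < 1)
    {x : ℝ} (hx : G x < 1) : p < g x := by
  rw [hg]
  nlinarith

theorem apply_lt_of_eq_sub_mul (hg : ∀ x, g x = 1 - q - (1 - p - q) * G x) (hpq : p + q < 1)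
    {x : ℝ} (hx : 0 < G x) : g x < 1 - q := by
  rw [hg]
  nlinarith

end AffineReflection

theorem gg_smallest_fixed_point_of_strictMonoOn {G g : ℝ → ℝ} {p q : ℝ} (hp : 0 ≤ p)
    (hq : 0 ≤ q) (hpq0 : 0 < p + q) (hpq1 : p + q < 1) (hGmaps : MapsTo G (Icc 0 1) (Icc 0 1))
    (hGmono : StrictMonoOn G (Icc 0 1)) (hGcont : ContinuousOn G (Icc 0 1)) (hG1 : G 1 = 1)
    (hg : ∀ x, g x = 1 - q - (1 - p - q) * G x) {a : ℕ → ℝ} (ha0 : a 0 = p)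
    (ha : ∀ n, a (n + 1) = (g ∘ g) (a n)) :
    Monotone a ∧ ∃ w, Tendsto a atTop (𝓝 w) ∧ w ∈ Ioo 0 1 ∧ (g ∘ g) w = w ∧
      ∀ γ ∈ Ioc 0 1, (g ∘ g) γ = γ → w ≤ γ := by
  have hgmaps := mapsTo_Icc_of_eq_sub_mul hg hpq1.le hGmaps
  have hgmaps' : MapsTo g (Icc 0 1) (Icc 0 1) :=
    hgmaps.mono_right (Icc_subset_Icc hp (by linarith))
  have hganti := antitoneOn_of_eq_sub_mul hg hpq1.le hGmono.monotoneOn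
  have hgcont : ContinuousOn g (Icc 0 1) :=
    (continuousOn_const.sub (continuousOn_const.mul hGcont)).congr fun x _ => hg x
  have hp1 : p ∈ Icc (0 : ℝ) 1 := ⟨hp, by linarith⟩
  have hgp : g p < 1 := by
    rcases hp.eq_or_lt with rfl | hp0
    · linarith [(hgmaps hp1).2]
    · have hGp := (hGmaps (left_mem_Icc.2 zero_le_one)).1.trans_lt
        (hGmono (left_mem_Icc.2 zero_le_one) hp1 hp0)
      linarith [apply_lt_of_eq_sub_mul hg hpq1 hGp]
  have hggp : p < g (g p) :=
    lt_apply_of_eq_sub_mul hg hpq1 (hG1 ▸ hGmono (hgmaps' hp1) (right_mem_Icc.2 zero_le_one) hgp)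
  obtain ⟨hmono, w, hw, hlim, hfix, hleast⟩ :=
    exists_tendsto_isFixedPt_of_eq_succ isClosed_Icc bddAbove_Icc (hgmaps'.comp hgmaps')
      (hganti.comp hganti hgmaps') (hgcont.comp hgcont hgmaps') (ha0 ▸ hp1)
      (by rw [ha 0, ha0]; exact hggp.le) ha
  refine ⟨hmono, w, hlim, ⟨?_, ?_⟩, hfix, fun γ hγ hγfix => ?_⟩
  · calc 0 ≤ p := hp
      _ < g (g p) := hggp
      _ = a 1 := by rw [ha 0, ha0]; rfl
      _ ≤ w := hmono.ge_of_tendsto hlim 1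
  · refine hw.2.lt_of_ne fun hw1 => hgp.ne ?_
    have hg1 : g 1 = p := by rw [hg, hG1]; ring
    rw [← hg1, ← hw1]
    exact hfix
  · refine hleast γ (Ioc_subset_Icc_self hγ) hγfix (ha0 ▸ ?_)
    exact hγfix ▸ (hgmaps (hgmaps' (Ioc_subset_Icc_self hγ))).1

/-- the iterates a₀ = p, a_{n+1} = (g∘g)(a_n) are nondecreasing and converge
to a limit w' ∈ (0,1) which is the smallest fixed point of g∘g in (0,1]. -/
theorem gg_smallest_fixed_point
    (χ : ℕ → ℝ) (hχ_nonneg : ∀ m, 0 ≤ χ m) (hχ_sum : ∑' m, χ m = 1) (hχ0 : χ 0 < 1)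
    (p q : ℝ) (hp : 0 ≤ p) (hq : 0 ≤ q) (hpq0 : 0 < p + q) (hpq1 : p + q < 1)
    (G : ℝ → ℝ) (hG : ∀ x, G x = ∑' m, χ m * x ^ m)
    (g : ℝ → ℝ) (hg : ∀ x, g x = (1 - q) - (1 - p - q) * G x)
    (a : ℕ → ℝ) (ha0 : a 0 = p) (ha : ∀ n, a (n + 1) = (g ∘ g) (a n)) :
    Monotone a ∧
      ∃ w', Filter.Tendsto a Filter.atTop (nhds w') ∧
        w' ∈ Set.Ioo (0 : ℝ) 1 ∧ (g ∘ g) w' = w' ∧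
        ∀ γ ∈ Set.Ioc (0 : ℝ) 1, (g ∘ g) γ = γ → w' ≤ γ := by
  obtain rfl : G = pgf χ := funext hG
  have hs : Summable χ := by
    by_contra h
    simp [tsum_eq_zero_of_not_summable h] at hχ_sum
  obtain ⟨m₀, hm₀, hχm₀⟩ :=
    exists_pos_apply_pos_of_apply_zero_lt_tsum hχ_nonneg (hχ_sum ▸ hχ0)
  exact gg_smallest_fixed_point_of_strictMonoOn hp hq hpq0 hpq1
    (pgf_mapsTo_Icc hχ_nonneg hs hχ_sum) (pgf_strictMonoOn hχ_nonneg hs hm₀ hχm₀)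
    (pgf_continuousOn hχ_nonneg hs) ((pgf_one χ).trans hχ_sum) hg ha0 ha
end

section
/- Let w' be the smallest fixed point of g∘g in (0,1], and let α be the unique fixed point of g in [0,1]. Then w' = α if and only if g∘g has exactly one fixed point in [0,1]. -/
/-- the smallest fixed point w' of g∘g in (0,1] equals the unique fixed point α
of g in [0,1] iff g∘g has exactly one fixed point in [0,1]. -/
theorem smallest_fixed_point_eq_alpha_iff_unique
    (χ : ℕ → ℝ) (hχ_nonneg : ∀ m, 0 ≤ χ m) (hχ_sum : ∑' m, χ m = 1) (hχ0 : χ 0 < 1)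
    (p q : ℝ) (hp : 0 ≤ p) (hq : 0 ≤ q) (hpq0 : 0 < p + q) (hpq1 : p + q < 1)
    (G : ℝ → ℝ) (hG : ∀ x, G x = ∑' m, χ m * x ^ m)
    (g : ℝ → ℝ) (hg : ∀ x, g x = (1 - q) - (1 - p - q) * G x)
    (w' : ℝ) (hw'_mem : w' ∈ Set.Ioc (0 : ℝ) 1) (hw'_fix : (g ∘ g) w' = w')
    (hw'_min : ∀ γ ∈ Set.Ioc (0 : ℝ) 1, (g ∘ g) γ = γ → w' ≤ γ)
    (α : ℝ) (hα_mem : α ∈ Set.Icc (0 : ℝ) 1) (hα_fix : g α = α)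
    (hα_unique : ∀ x ∈ Set.Icc (0 : ℝ) 1, g x = x → x = α) :
    w' = α ↔ (∃! x, x ∈ Set.Icc (0 : ℝ) 1 ∧ (g ∘ g) x = x) := by
  have hpq : 0 < 1 - p - q := by linarith
  have hSχ : Summable χ := by
    by_contra h
    rw [tsum_eq_zero_of_not_summable h] at hχ_sum
    norm_num at hχ_sum
  have hsum : ∀ x : ℝ, 0 ≤ x → x ≤ 1 → Summable (fun m => χ m * x ^ m) := by
    intro x hx0 hx1
    refine hSχ.of_nonneg_of_le (fun m => ?_) (fun m => ?_)
    · exact mul_nonneg (hχ_nonneg m) (pow_nonneg hx0 m)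
    · nlinarith [hχ_nonneg m, pow_le_one₀ hx0 hx1 (n := m), pow_nonneg hx0 m]
  have hG0 : ∀ x : ℝ, 0 ≤ x → x ≤ 1 → 0 ≤ G x := by
    intro x hx0 hx1
    rw [hG]
    exact tsum_nonneg fun m => mul_nonneg (hχ_nonneg m) (pow_nonneg hx0 m)
  have hG1 : ∀ x : ℝ, 0 ≤ x → x ≤ 1 → G x ≤ 1 := by
    intro x hx0 hx1
    rw [hG, ← hχ_sum]
    refine Summable.tsum_le_tsum (fun m => ?_) (hsum x hx0 hx1) hSχ
    nlinarith [hχ_nonneg m, pow_le_one₀ hx0 hx1 (n := m), pow_nonneg hx0 m]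
  have hGmono : ∀ a b : ℝ, 0 ≤ a → a ≤ b → b ≤ 1 → G a ≤ G b := by
    intro a b ha hab hb1
    rw [hG, hG]
    refine Summable.tsum_le_tsum (fun m => ?_) (hsum a ha (hab.trans hb1)) (hsum b (ha.trans hab) hb1)
    exact mul_le_mul_of_nonneg_left (pow_le_pow_left₀ ha hab m) (hχ_nonneg m)
  have hgmem : ∀ x : ℝ, 0 ≤ x → x ≤ 1 → p ≤ g x ∧ g x ≤ 1 - q := by
    intro x hx0 hx1
    rw [hg]
    constructor
    · nlinarith [hG1 x hx0 hx1]
    · nlinarith [hG0 x hx0 hx1]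
  have hganti : ∀ a b : ℝ, 0 ≤ a → a ≤ b → b ≤ 1 → g b ≤ g a := by
    intro a b ha hab hb1
    rw [hg, hg]
    nlinarith [hGmono a b ha hab hb1]
  -- there is some m ≥ 1 with χ m > 0
  have hm : ∃ m, 1 ≤ m ∧ 0 < χ m := by
    by_contra h
    push_neg at h
    have hz : ∀ m : ℕ, m ≠ 0 → χ m = 0 := by
      intro m hm0
      exact le_antisymm (h m (Nat.one_le_iff_ne_zero.mpr hm0)) (hχ_nonneg m)
    rw [tsum_eq_single 0 hz] at hχ_sum
    linarith
  have hGlt : ∀ y : ℝ, 0 ≤ y → y < 1 → G y < 1 := by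
    intro y hy0 hy1
    obtain ⟨m₀, hm₀, hχm₀⟩ := hm
    have hs1 := hsum y hy0 hy1.le
    have hs2 : Summable (fun m => χ m - χ m * y ^ m) := hSχ.sub hs1
    have key : χ m₀ - χ m₀ * y ^ m₀ ≤ ∑' m, (χ m - χ m * y ^ m) := by
      refine Summable.le_tsum hs2 m₀ (fun j _ => ?_)
      nlinarith [hχ_nonneg j, pow_le_one₀ hy0 hy1.le (n := j)]
    have hts : ∑' m, (χ m - χ m * y ^ m) = 1 - G y := by
      rw [Summable.tsum_sub hSχ hs1, hχ_sum, hG]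
    have hpow : y ^ m₀ < 1 := pow_lt_one₀ hy0 hy1 (Nat.one_le_iff_ne_zero.mp hm₀)
    nlinarith
  -- 0 is not a fixed point of g ∘ g
  have hzero : (0 : ℝ) < g (g 0) := by
    have h0 := hgmem 0 le_rfl zero_le_one
    have hg0mem : 0 ≤ g 0 ∧ g 0 ≤ 1 := ⟨hp.trans h0.1, h0.2.trans (by linarith)⟩
    rcases lt_or_eq_of_le hp with hp' | hp'
    · exact lt_of_lt_of_le hp' (hgmem (g 0) hg0mem.1 hg0mem.2).1
    · -- p = 0, so q > 0 and g 0 ≤ 1 - q < 1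
      have hq' : 0 < q := by linarith
      have hlt : g 0 < 1 := lt_of_le_of_lt h0.2 (by linarith)
      have hGlt' := hGlt (g 0) hg0mem.1 hlt
      rw [hg]
      nlinarith
  have hpos : ∀ x : ℝ, x ∈ Set.Icc (0 : ℝ) 1 → (g ∘ g) x = x → 0 < x := by
    intro x hx hfx
    rcases lt_or_eq_of_le hx.1 with h | h
    · exact h
    · exfalso
      rw [← h] at hfx
      simp only [Function.comp_apply] at hfx
      linarith [hzero, hfx]
  have hαfix2 : (g ∘ g) α = α := by
    simp only [Function.comp_apply, hα_fix]
  constructor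
  · intro hwα
    refine ⟨α, ⟨hα_mem, hαfix2⟩, ?_⟩
    rintro x ⟨hx, hfx⟩
    simp only [Function.comp_apply] at hfx
    set y := g x with hy
    have hy_mem : y ∈ Set.Icc (0 : ℝ) 1 := by
      have := hgmem x hx.1 hx.2
      exact ⟨hp.trans this.1, this.2.trans (by linarith)⟩
    have hyfix : (g ∘ g) y = y := by
      rw [Function.comp_apply, hfx, hy]
    have hxpos := hpos x hx (by simpa [Function.comp] using hfx)
    have hypos := hpos y hy_mem hyfix
    have h1 : α ≤ x := by
      rw [← hwα]
      exact hw'_min x ⟨hxpos, hx.2⟩ (by simpa [Function.comp] using hfx)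
    have h2 : α ≤ y := by
      rw [← hwα]
      exact hw'_min y ⟨hypos, hy_mem.2⟩ hyfix
    have h3 : y ≤ α := by
      calc y = g x := hy
        _ ≤ g α := hganti α x hα_mem.1 h1 hx.2
        _ = α := hα_fix
    have hyα : y = α := le_antisymm h3 h2
    calc x = g y := hfx.symm
      _ = α := by rw [hyα, hα_fix]
  · rintro ⟨x₀, _, hun⟩
    have e1 := hun w' ⟨⟨hw'_mem.1.le, hw'_mem.2⟩, hw'_fix⟩
    have e2 := hun α ⟨hα_mem, hαfix2⟩
    rw [e1, e2]
end

section
/- Suppose that for every x ∈ [0,1] the map g∘g is differentiable at x within [0,1] and its derivative there is at most 1. Then g∘g has exactly one fixed point in [0,1]. -/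
open Set

/-!
`g ∘ g` maps `[0,1]` into `[p, 1 - q]`, so it has a fixed point by the intermediate value theorem.
The derivative bound makes `x ↦ g (g x) - x` antitone, so two distinct fixed points would force
`g ∘ g = id` between them. Since `g` is analytic on `(-1, 1)` and maps `(0, 1)` into `[0, 1)`,
the identity theorem then gives `g ∘ g = id` on all of `(0, 1)`, which is impossible because
`g ∘ g` takes values in `[p, 1 - q]` and `p + q > 0`.
-/

section PowerSeries

variable {a : ℕ → ℝ}

theorem Summable.mul_pow_of_abs_le_one (ha : Summable a) {x : ℝ} (hx : |x| ≤ 1) :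
    Summable fun m => a m * x ^ m :=
  ha.abs.of_norm_bounded fun m => by
    rw [norm_mul, norm_pow, Real.norm_eq_abs, Real.norm_eq_abs]
    exact mul_le_of_le_one_right (abs_nonneg _) (pow_le_one₀ (abs_nonneg _) hx)

theorem Summable.analyticOnNhd_tsum_mul_pow (ha : Summable a) :
    AnalyticOnNhd ℝ (fun x => ∑' m, a m * x ^ m) (Metric.ball 0 1) := by
  set P := FormalMultilinearSeries.ofScalars ℝ a
  have hrad : 1 ≤ P.radius := by
    simpa using P.le_radius_of_summable (r := 1) (by simpa [P] using ha.abs)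
  have hsum : P.sum = fun x => ∑' m, a m * x ^ m := by
    simp [P, ← FormalMultilinearSeries.ofScalarsSum.eq_def,
      FormalMultilinearSeries.ofScalarsSum_eq_tsum]
  rw [← hsum]
  refine ((P.hasFPowerSeriesOnBall (zero_lt_one.trans_le hrad)).analyticOnNhd).mono fun x hx => ?_
  rw [Metric.mem_ball, ← edist_lt_ofReal, ENNReal.ofReal_one] at hx
  exact hx.trans_le hrad

theorem tsum_mul_pow_le_tsum (ha₀ : ∀ m, 0 ≤ a m) (ha : Summable a) {x : ℝ}
    (hx : x ∈ Icc 0 1) : ∑' m, a m * x ^ m ≤ ∑' m, a m :=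
  (ha.mul_pow_of_abs_le_one (abs_le.2 ⟨by linarith [hx.1], hx.2⟩)).tsum_le_tsum
    (fun m => mul_le_of_le_one_right (ha₀ m) (pow_le_one₀ hx.1 hx.2)) ha

theorem tsum_mul_pow_pos (ha₀ : ∀ m, 0 ≤ a m) (ha : Summable a) {m : ℕ}
    (hm : 0 < a m) {x : ℝ} (hx : x ∈ Ioc 0 1) : 0 < ∑' m, a m * x ^ m :=
  (ha.mul_pow_of_abs_le_one (abs_le.2 ⟨by linarith [hx.1], hx.2⟩)).tsum_pos
    (fun n => mul_nonneg (ha₀ n) (pow_nonneg hx.1.le n)) m (mul_pos hm (pow_pos hx.1 m))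

end PowerSeries

section AffineImageOfGeneratingFunction

variable {χ : ℕ → ℝ} {p q : ℝ} {g : ℝ → ℝ}

theorem mapsTo_Icc_of_eq_sub_mul_tsum (hχ_nonneg : ∀ m, 0 ≤ χ m) (hχ : Summable χ)
    (hχ_sum : ∑' m, χ m ≤ 1) (hpq : p + q ≤ 1)
    (hg : ∀ x, g x = (1 - q) - (1 - p - q) * ∑' m, χ m * x ^ m) :
    MapsTo g (Icc 0 1) (Icc p (1 - q)) := by
  intro x hx
  have h₀ : 0 ≤ ∑' m, χ m * x ^ m :=
    tsum_nonneg fun m => mul_nonneg (hχ_nonneg m) (pow_nonneg hx.1 m)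
  have h₁ := (tsum_mul_pow_le_tsum hχ_nonneg hχ hx).trans hχ_sum
  rw [mem_Icc, hg]
  constructor <;> nlinarith

theorem lt_one_sub_of_eq_sub_mul_tsum (hχ_nonneg : ∀ m, 0 ≤ χ m) (hχ : Summable χ)
    (hχ_sum : ∑' m, χ m = 1) (hpq : p + q < 1)
    (hg : ∀ x, g x = (1 - q) - (1 - p - q) * ∑' m, χ m * x ^ m) {x : ℝ} (hx : x ∈ Ioc 0 1) :
    g x < 1 - q := by
  obtain ⟨m, hm⟩ : ∃ m, χ m ≠ 0 := by
    by_contra! h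
    simp [h] at hχ_sum
  have := tsum_mul_pow_pos hχ_nonneg hχ ((hχ_nonneg m).lt_of_ne' hm) hx
  rw [hg]
  nlinarith

theorem analyticOnNhd_of_eq_sub_mul_tsum (hχ : Summable χ)
    (hg : ∀ x, g x = (1 - q) - (1 - p - q) * ∑' m, χ m * x ^ m) :
    AnalyticOnNhd ℝ g (Metric.ball 0 1) := by
  rw [funext hg]
  exact analyticOnNhd_const.sub (analyticOnNhd_const.mul hχ.analyticOnNhd_tsum_mul_pow)

end AffineImageOfGeneratingFunction

theorem antitoneOn_sub_id_of_hasDerivWithinAt_le_one {f : ℝ → ℝ} {s : Set ℝ} (hs : Convex ℝ s)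
    (hf : ∀ x ∈ s, ∃ d, HasDerivWithinAt f d s x ∧ d ≤ 1) :
    AntitoneOn (fun x => f x - x) s := by
  have hderiv : ∀ x ∈ interior s, ∃ d ≤ 0, HasDerivAt (fun y => f y - y) d x := fun x hx => by
    obtain ⟨d, hd, hd1⟩ := hf x (interior_subset hx)
    exact ⟨d - 1, by linarith,
      (hd.hasDerivAt (mem_interior_iff_mem_nhds.1 hx)).sub (hasDerivAt_id' x)⟩
  refine antitoneOn_of_deriv_nonpos hs (fun x hx => ?_) (fun x hx => ?_) (fun x hx => ?_)
  · obtain ⟨d, hd, -⟩ := hf x hx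
    exact hd.continuousWithinAt.sub continuousWithinAt_id
  · obtain ⟨d, -, hd⟩ := hderiv x hx
    exact hd.differentiableAt.differentiableWithinAt
  · obtain ⟨d, hd0, hd⟩ := hderiv x hx
    rwa [hd.deriv]

section FixedPoints

variable {f : ℝ → ℝ} {a b : ℝ}

theorem AnalyticOnNhd.eqOn_id_of_antitoneOn_sub_id (hf : AnalyticOnNhd ℝ f (Ioo a b))
    (hanti : AntitoneOn (fun x => f x - x) (Icc a b)) {x y : ℝ} (hx : x ∈ Icc a b)
    (hy : y ∈ Icc a b) (hxy : x < y) (hfx : f x = x) (hfy : f y = y) :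
    EqOn f id (Ioo a b) := by
  have hmid : (x + y) / 2 ∈ Ioo a b := ⟨by linarith [hx.1], by linarith [hy.2]⟩
  refine hf.eqOn_of_preconnected_of_eventuallyEq analyticOnNhd_id isPreconnected_Ioo hmid ?_
  filter_upwards [Ioo_mem_nhds (by linarith : x < (x + y) / 2) (by linarith : (x + y) / 2 < y)]
    with z hz
  have hz' : z ∈ Icc a b := ⟨hx.1.trans hz.1.le, hz.2.le.trans hy.2⟩
  have h₁ := hanti hx hz' hz.1.le
  have h₂ := hanti hz' hy hz.2.le
  simp only at h₁ h₂
  simp only [id]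
  linarith

theorem subsingleton_fixedPoints_of_antitoneOn_sub_id (hf : AnalyticOnNhd ℝ f (Ioo a b))
    (hanti : AntitoneOn (fun x => f x - x) (Icc a b)) (hne : ∃ z ∈ Ioo a b, f z ≠ z) :
    {x ∈ Icc a b | Function.IsFixedPt f x}.Subsingleton := by
  rintro x ⟨hx, hfx⟩ y ⟨hy, hfy⟩
  by_contra hxy
  obtain ⟨z, hz, hfz⟩ := hne
  rcases lt_or_gt_of_ne hxy with h | h
  · exact hfz (hf.eqOn_id_of_antitoneOn_sub_id hanti hx hy h hfx hfy hz)
  · exact hfz (hf.eqOn_id_of_antitoneOn_sub_id hanti hy hx h hfy hfx hz)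

end FixedPoints

theorem exists_mem_Ioo_notMem_Icc {p q : ℝ} (hp : 0 ≤ p) (hq : 0 ≤ q) (hpq0 : 0 < p + q)
    (hpq1 : p + q < 1) : ∃ x ∈ Ioo (0 : ℝ) 1, x ∉ Icc p (1 - q) := by
  rcases hp.lt_or_eq with hp | rfl
  · exact ⟨p / 2, ⟨by linarith, by linarith⟩, fun h => by linarith [h.1]⟩
  · exact ⟨1 - q / 2, ⟨by linarith, by linarith⟩, fun h => by linarith [h.2]⟩

theorem gg_unique_fixed_point_of_deriv_le_one_general
    (χ : ℕ → ℝ) (hχ_nonneg : ∀ m, 0 ≤ χ m) (hχ_sum : ∑' m, χ m = 1)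
    (p q : ℝ) (hp : 0 ≤ p) (hq : 0 ≤ q) (hpq0 : 0 < p + q) (hpq1 : p + q < 1)
    (G : ℝ → ℝ) (hG : ∀ x, G x = ∑' m, χ m * x ^ m)
    (g : ℝ → ℝ) (hg : ∀ x, g x = (1 - q) - (1 - p - q) * G x)
    (hderiv : ∀ x ∈ Set.Icc (0 : ℝ) 1,
      ∃ d, HasDerivWithinAt (g ∘ g) d (Set.Icc (0 : ℝ) 1) x ∧ d ≤ 1) :
    ∃! x, x ∈ Set.Icc (0 : ℝ) 1 ∧ (g ∘ g) x = x := by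
  have hχ : Summable χ := by
    by_contra h
    simp [tsum_eq_zero_of_not_summable h] at hχ_sum
  have hg' : ∀ x, g x = (1 - q) - (1 - p - q) * ∑' m, χ m * x ^ m := fun x => by rw [hg, hG]
  have hIcc : Icc p (1 - q) ⊆ Icc 0 1 := Icc_subset_Icc hp (by linarith)
  have hgI := mapsTo_Icc_of_eq_sub_mul_tsum hχ_nonneg hχ hχ_sum.le hpq1.le hg'
  have hfI : MapsTo (g ∘ g) (Icc 0 1) (Icc p (1 - q)) := hgI.comp (hgI.mono_right hIcc)
  have hf_cont : ContinuousOn (g ∘ g) (Icc 0 1) := fun x hx =>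
    (hderiv x hx).choose_spec.1.continuousWithinAt
  obtain ⟨c, hc, hfc⟩ := exists_mem_Icc_isFixedPt_of_mapsTo hf_cont zero_le_one
    (hfI.mono_right hIcc)
  have hball : Metric.ball (0 : ℝ) 1 = Ioo (-1) 1 := by norm_num [Real.ball_eq_Ioo]
  have hg_ball : MapsTo g (Ioo 0 1) (Metric.ball 0 1) := fun x hx => by
    have h₁ := hgI (Ioo_subset_Icc_self hx)
    have h₂ := lt_one_sub_of_eq_sub_mul_tsum hχ_nonneg hχ hχ_sum hpq1 hg' (Ioo_subset_Ioc_self hx)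
    rw [hball]
    constructor <;> linarith [h₁.1]
  have hg_an := analyticOnNhd_of_eq_sub_mul_tsum hχ hg'
  have hf_an : AnalyticOnNhd ℝ (g ∘ g) (Ioo 0 1) :=
    hg_an.comp (hg_an.mono (hball ▸ Ioo_subset_Ioo_left (by norm_num))) hg_ball
  obtain ⟨z, hz, hz_out⟩ := exists_mem_Ioo_notMem_Icc hp hq hpq0 hpq1
  have hne : ∃ z ∈ Ioo 0 1, (g ∘ g) z ≠ z :=
    ⟨z, hz, fun h => hz_out (h ▸ hfI (Ioo_subset_Icc_self hz))⟩
  exact ⟨c, ⟨hc, hfc⟩, fun y hy => subsingleton_fixedPoints_of_antitoneOn_sub_id hf_an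
    (antitoneOn_sub_id_of_hasDerivWithinAt_le_one (convex_Icc 0 1) hderiv) hne hy ⟨hc, hfc⟩⟩

/-- if g∘g is differentiable within [0,1] at every point of [0,1] with derivative
at most 1, then g∘g has exactly one fixed point in [0,1]. -/
theorem gg_unique_fixed_point_of_deriv_le_one
    (χ : ℕ → ℝ) (hχ_nonneg : ∀ m, 0 ≤ χ m) (hχ_sum : ∑' m, χ m = 1) (hχ0 : χ 0 < 1)
    (p q : ℝ) (hp : 0 ≤ p) (hq : 0 ≤ q) (hpq0 : 0 < p + q) (hpq1 : p + q < 1)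
    (G : ℝ → ℝ) (hG : ∀ x, G x = ∑' m, χ m * x ^ m)
    (g : ℝ → ℝ) (hg : ∀ x, g x = (1 - q) - (1 - p - q) * G x)
    (hderiv : ∀ x ∈ Set.Icc (0 : ℝ) 1,
      ∃ d, HasDerivWithinAt (g ∘ g) d (Set.Icc (0 : ℝ) 1) x ∧ d ≤ 1) :
    ∃! x, x ∈ Set.Icc (0 : ℝ) 1 ∧ (g ∘ g) x = x :=
  gg_unique_fixed_point_of_deriv_le_one_general χ hχ_nonneg hχ_sum p q hp hq hpq0 hpq1 G hG g hg
    hderiv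
end

section
/- The composition g∘g has exactly one fixed point in the interval [0,1] if and only if (1−p−q)·π·(1−πq)^{d−1} ≤ (d+1)^{d−1}/d^d. -/
lemma pow_sub_pow_le_aux (n : ℕ) (a V : ℝ) (h0 : 0 ≤ a) (h : a ≤ V) :
    V^n - a^n ≤ n * V^(n-1) * (V - a) := by
  induction n with
  | zero => simp
  | succ n ih =>
    have hV : 0 ≤ V := le_trans h0 h
    cases n with
    | zero => simp
    | succ m =>
      have key : V^(m+2) - a^(m+2) = V*(V^(m+1) - a^(m+1)) + a^(m+1)*(V-a) := by ring
      rw [key]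
      have h1 : V*(V^(m+1) - a^(m+1)) ≤ V * ((m+1) * V^m * (V-a)) :=
        mul_le_mul_of_nonneg_left (by simpa using ih) hV
      have h2 : a^(m+1)*(V-a) ≤ V^(m+1)*(V-a) :=
        mul_le_mul_of_nonneg_right (pow_le_pow_left₀ h0 h _) (by linarith)
      calc V*(V^(m+1) - a^(m+1)) + a^(m+1)*(V-a)
          ≤ V * (((m:ℝ)+1) * V^m * (V-a)) + V^(m+1)*(V-a) := by
            refine add_le_add ?_ h2
            refine le_trans h1 (le_of_eq ?_)
            push_cast; ring
        _ = ((m+1+1 : ℕ) : ℝ) * V^(m+1+1-1) * (V - a) := by push_cast; ring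

lemma core_lemma (d : ℕ) (hd : 2 ≤ d) (β V : ℝ) (hβ : 0 < β) (hV : 0 < V)
    (hs : β * d * V^(d-1) ≤ 1) (A : ℝ) (hA0 : 0 ≤ A) (hAV : A < V) :
    β * ((V + β * (V^d - A^d))^d - V^d) < V - A := by
  have hd0 : (0:ℝ) < d := by positivity
  have hk0 : d - 1 ≠ 0 := by omega
  set H : ℝ → ℝ := fun a => β * ((V + β * (V^d - a^d))^d - V^d) + a with hH
  have hmono : StrictMonoOn H (Set.Icc 0 V) := by
    apply strictMonoOn_of_deriv_pos (convex_Icc 0 V)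
    · exact (Continuous.continuousOn (by continuity))
    · intro a ha
      rw [interior_Icc] at ha
      obtain ⟨ha0, haV⟩ := ha
      set Y : ℝ := V + β * (V^d - a^d) with hY
      have hdel0 : 0 ≤ β * (V^d - a^d) := by
        have : a^d ≤ V^d := pow_le_pow_left₀ ha0.le haV.le d
        nlinarith
      have hdel1 : β * (V^d - a^d) ≤ V - a := by
        have h1 : V^d - a^d ≤ d * V^(d-1) * (V - a) := pow_sub_pow_le_aux d a V ha0.le haV.le
        have h2 : β * (V^d - a^d) ≤ β * (d * V^(d-1) * (V - a)) :=
          mul_le_mul_of_nonneg_left h1 hβ.le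
        have h3 : β * (d * V^(d-1) * (V - a)) = (β * d * V^(d-1)) * (V - a) := by ring
        nlinarith
      have hYpos : 0 < Y := by simp only [hY]; linarith
      have haY : a * Y < V^2 := by nlinarith
      have hpow : a^(d-1) * Y^(d-1) < (V^(d-1))^2 := by
        have h4 : (a*Y)^(d-1) < (V^2)^(d-1) :=
          pow_lt_pow_left₀ haY (by positivity) hk0
        calc a^(d-1) * Y^(d-1) = (a*Y)^(d-1) := (mul_pow a Y _).symm
          _ < (V^2)^(d-1) := h4
          _ = (V^(d-1))^2 := by rw [← pow_mul, ← pow_mul, mul_comm]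
      have hder : HasDerivAt H (β * (d * Y^(d-1) * (β * -(d * a^(d-1)))) + 1) a := by
        have i1 : HasDerivAt (fun x : ℝ => V + β * (V^d - x^d)) (β * -(d * a^(d-1))) a :=
          (((hasDerivAt_pow d a).const_sub (V^d)).const_mul β).const_add V
        exact (((i1.pow d).sub_const (V^d)).const_mul β).add (hasDerivAt_id a)
      have hder' : HasDerivAt H (1 - (β*(d:ℝ))^2 * (a^(d-1) * Y^(d-1))) a := by
        convert hder using 1
        ring
      rw [hder'.deriv]
      have hs0 : 0 ≤ β * d * V^(d-1) := by positivity
      have hsq : (β * (d:ℝ) * V^(d-1))^2 ≤ 1 := by nlinarith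
      have e1 : (β*(d:ℝ))^2 * (V^(d-1))^2 = (β * (d:ℝ) * V^(d-1))^2 := by ring
      have hstep : (β*(d:ℝ))^2 * (a^(d-1)*Y^(d-1)) < (β*(d:ℝ))^2 * (V^(d-1))^2 :=
        mul_lt_mul_of_pos_left hpow (by positivity)
      linarith
  have hlt : H A < H V := hmono ⟨hA0, hAV.le⟩ ⟨hV.le, le_refl V⟩ hAV
  have hHV : H V = V := by simp [hH]
  rw [hHV] at hlt
  simp only [hH] at hlt
  linarith


lemma bridge_lemma (d : ℕ) (hd : 2 ≤ d) (β V : ℝ) (hβ : 0 < β) (hV : 0 < V) :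
    β * (V + β * V^d)^(d-1) ≤ ((d:ℝ)+1)^(d-1) / (d:ℝ)^d ↔ β * d * V^(d-1) ≤ 1 := by
  have hD : (0:ℝ) < (d:ℝ) := by positivity
  have hk0 : d - 1 ≠ 0 := by omega
  have hVd : V^d = V^(d-1) * V := by rw [← pow_succ]; congr 1; omega
  have hDd : (d:ℝ)^d = (d:ℝ)^(d-1) * (d:ℝ) := by rw [← pow_succ]; congr 1; omega
  have hrhs : ((d:ℝ)+1)^(d-1) / (d:ℝ)^d = (1/(d:ℝ)) * (((d:ℝ)+1)/(d:ℝ))^(d-1) := by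
    rw [div_pow, hDd]; field_simp
  have hfrac : (0:ℝ) < (((d:ℝ)+1)/(d:ℝ))^(d-1) := by positivity
  have hsplit : V * (((d:ℝ)+1)/(d:ℝ)) = V + (1/(d:ℝ)) * V := by field_simp
  constructor
  · intro hs
    by_contra hc
    push_neg at hc
    rw [hrhs] at hs
    have hb : 1/(d:ℝ) < β * V^(d-1) := by
      rw [div_lt_iff₀ hD]
      calc (1:ℝ) < β * ↑d * V^(d-1) := hc
        _ = β * V^(d-1) * ↑d := by ring
    have h2 : (1/(d:ℝ)) * V < β * V^d := by
      rw [hVd]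
      calc (1/(d:ℝ)) * V < (β * V^(d-1)) * V := mul_lt_mul_of_pos_right hb hV
        _ = β * (V^(d-1) * V) := by ring
    have h1 : V * (((d:ℝ)+1)/(d:ℝ)) < V + β * V^d := by linarith
    have h3 : (V * (((d:ℝ)+1)/(d:ℝ)))^(d-1) < (V + β * V^d)^(d-1) :=
      pow_lt_pow_left₀ h1 (by positivity) hk0
    have h4 : (1/(d:ℝ)) * (((d:ℝ)+1)/(d:ℝ))^(d-1) < (β * V^(d-1)) * (((d:ℝ)+1)/(d:ℝ))^(d-1) :=
      mul_lt_mul_of_pos_right hb hfrac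
    have h5 : (β * V^(d-1)) * (((d:ℝ)+1)/(d:ℝ))^(d-1) = β * (V * (((d:ℝ)+1)/(d:ℝ)))^(d-1) := by
      rw [mul_pow]; ring
    have h6 : β * (V * (((d:ℝ)+1)/(d:ℝ)))^(d-1) < β * (V + β * V^d)^(d-1) :=
      mul_lt_mul_of_pos_left h3 hβ
    linarith
  · intro hs
    rw [hrhs]
    have hb : β * V^(d-1) ≤ 1/(d:ℝ) := by
      rw [le_div_iff₀ hD]
      calc β * V^(d-1) * ↑d = β * ↑d * V^(d-1) := by ring
        _ ≤ 1 := hs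
    have h2 : β * V^d ≤ (1/(d:ℝ)) * V := by
      rw [hVd]
      calc β * (V^(d-1) * V) = (β * V^(d-1)) * V := by ring
        _ ≤ (1/(d:ℝ)) * V := mul_le_mul_of_nonneg_right hb hV.le
    have h1 : V + β * V^d ≤ V * (((d:ℝ)+1)/(d:ℝ)) := by linarith
    have h3 : (V + β * V^d)^(d-1) ≤ (V * (((d:ℝ)+1)/(d:ℝ)))^(d-1) :=
      pow_le_pow_left₀ (by positivity) h1 _
    calc β * (V + β * V^d)^(d-1) ≤ β * (V * (((d:ℝ)+1)/(d:ℝ)))^(d-1) :=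
          mul_le_mul_of_nonneg_left h3 hβ.le
      _ = (β * V^(d-1)) * (((d:ℝ)+1)/(d:ℝ))^(d-1) := by rw [mul_pow]; ring
      _ ≤ (1/(d:ℝ)) * (((d:ℝ)+1)/(d:ℝ))^(d-1) := mul_le_mul_of_nonneg_right hb hfrac.le


/-- Binomial(d,π) case: g∘g has exactly one fixed point in [0,1] iff
(1−p−q)·π·(1−πq)^{d−1} ≤ (d+1)^{d−1}/d^d. -/
theorem binomial_unique_fixed_point_iff
    (d : ℕ) (hd : 2 ≤ d) (π p q : ℝ) (hπ0 : 0 < π) (hπ1 : π ≤ 1)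
    (hp : 0 ≤ p) (hq : 0 ≤ q) (hpq0 : 0 < p + q) (hpq1 : p + q < 1)
    (g : ℝ → ℝ) (hg : ∀ x, g x = (1 - q) - (1 - p - q) * (π * x + 1 - π) ^ d) :
    (∃! x, x ∈ Set.Icc (0 : ℝ) 1 ∧ (g ∘ g) x = x) ↔
      (1 - p - q) * π * (1 - π * q) ^ (d - 1) ≤ ((d : ℝ) + 1) ^ (d - 1) / (d : ℝ) ^ d := by
  have hc : 0 < 1 - p - q := by linarith
  set c : ℝ := 1 - p - q with hcdef
  set β : ℝ := c * π with hβdef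
  have hβ : 0 < β := mul_pos hc hπ0
  -- continuity of g
  have hgc : Continuous g := by
    have : Continuous fun x : ℝ => (1 - q) - c * (π * x + 1 - π) ^ d := by continuity
    exact this.congr fun x => (hg x).symm
  -- base in [0,1]
  have hbase : ∀ x : ℝ, 0 ≤ x → x ≤ 1 → 0 ≤ π * x + 1 - π ∧ π * x + 1 - π ≤ 1 := by
    intro x hx0 hx1
    constructor <;> nlinarith
  -- g maps [0,1] into [0,1]
  have gmaps : ∀ x : ℝ, 0 ≤ x → x ≤ 1 → 0 ≤ g x ∧ g x ≤ 1 := by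
    intro x hx0 hx1
    obtain ⟨hb0, hb1⟩ := hbase x hx0 hx1
    have h1 : (π * x + 1 - π) ^ d ≤ 1 := pow_le_one₀ hb0 hb1
    have h0 : 0 ≤ (π * x + 1 - π) ^ d := pow_nonneg hb0 d
    rw [hg x]
    constructor <;> nlinarith
  -- g antitone on [0,1]
  have ganti : ∀ x y : ℝ, 0 ≤ x → x ≤ y → y ≤ 1 → g y ≤ g x := by
    intro x y hx0 hxy hy1
    rw [hg x, hg y]
    have hb0 := (hbase x hx0 (le_trans hxy hy1)).1
    have hpow : (π * x + 1 - π) ^ d ≤ (π * y + 1 - π) ^ d :=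
      pow_le_pow_left₀ hb0 (by nlinarith) d
    nlinarith
  -- key identity
  have key : ∀ x : ℝ, π * g x + 1 - π = (1 - π * q) - β * (π * x + 1 - π) ^ d := by
    intro x; rw [hg x]; ring
  -- fixed point of g exists
  have hg1 : g 1 = p := by
    rw [hg 1]
    have e : π * (1:ℝ) + 1 - π = 1 := by ring
    rw [e, one_pow]; ring
  have hg0 : 0 < g 0 := by
    rw [hg 0]
    have e : π * (0:ℝ) + 1 - π = 1 - π := by ring
    rw [e]
    have h1 : (1 - π) ^ d < 1 := pow_lt_one₀ (by linarith) (by linarith) (by omega)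
    nlinarith
  obtain ⟨xs, hxsmem, hxsfix⟩ : ∃ x ∈ Set.Icc (0:ℝ) 1, g x - x = 0 := by
    have hcont : ContinuousOn (fun x => g x - x) (Set.Icc (0:ℝ) 1) :=
      (hgc.sub continuous_id).continuousOn
    have hsub := intermediate_value_Icc' (zero_le_one (α := ℝ)) hcont
    have h0mem : (0:ℝ) ∈ Set.Icc (g 1 - 1) (g 0 - 0) := by
      constructor
      · rw [hg1]; linarith
      · simp; linarith
    obtain ⟨x, hx, hfx⟩ := hsub h0mem
    exact ⟨x, hx, hfx⟩
  rw [sub_eq_zero] at hxsfix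
  obtain ⟨hxs0, hxs1⟩ := hxsmem
  have hxspos : 0 < xs := by
    rcases eq_or_lt_of_le hxs0 with h | h
    · exfalso; rw [← h] at hxsfix; linarith
    · exact h
  have gfix_unique : ∀ z, 0 ≤ z → z ≤ 1 → g z = z → z = xs := by
    intro z hz0 hz1 hzfix
    rcases lt_trichotomy z xs with h | h | h
    · exfalso
      have h2 := ganti z xs hz0 h.le hxs1
      rw [hzfix, hxsfix] at h2
      linarith
    · exact h
    · exfalso
      have h2 := ganti xs z hxs0 h.le hz1
      rw [hzfix, hxsfix] at h2
      linarith
  set V : ℝ := π * xs + 1 - π with hVdef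
  have hVpos : 0 < V := by
    have h1 : 0 ≤ π * xs := by positivity
    nlinarith
  have hm : V + β * V ^ d = 1 - π * q := by
    have h1 := key xs
    rw [hxsfix] at h1
    linarith
  have hFxs : (g ∘ g) xs = xs := by
    show g (g xs) = xs
    rw [hxsfix, hxsfix]
  rw [← hm, bridge_lemma d hd β V hβ hVpos]
  constructor
  · -- ∃! → s ≤ 1, by contradiction
    intro hEx
    by_contra hcond
    push_neg at hcond
    -- derivative of g at xs
    have hder : HasDerivAt g (-(β * (d:ℝ) * V ^ (d - 1))) xs := by
      have i1 : HasDerivAt (fun x : ℝ => π * x + 1 - π) π xs := by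
        simpa using (((hasDerivAt_id xs).const_mul π).add_const 1).sub_const π
      have i2 := ((i1.pow d).const_mul c).const_sub (1 - q)
      have i4 : HasDerivAt g (-(c * ((d:ℝ) * (π * xs + 1 - π) ^ (d - 1) * π))) xs :=
        i2.congr_of_eventuallyEq (Filter.Eventually.of_forall hg)
      convert i4 using 1
      rw [hβdef]; ring
    have hderg2 : HasDerivAt g (-(β * (d:ℝ) * V ^ (d - 1))) (g xs) := by
      rw [hxsfix]; exact hder
    have hF : HasDerivAt (g ∘ g)
        ((-(β * (d:ℝ) * V ^ (d - 1))) * (-(β * (d:ℝ) * V ^ (d - 1)))) xs :=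
      hderg2.comp xs hder
    have hs2 : 1 < (-(β * (d:ℝ) * V ^ (d - 1))) * (-(β * (d:ℝ) * V ^ (d - 1))) := by
      nlinarith
    have hslope := hasDerivAt_iff_tendsto_slope.mp hF
    have hev : ∀ᶠ y in nhdsWithin xs {xs}ᶜ, 1 < slope (g ∘ g) xs y :=
      hslope.eventually (eventually_gt_nhds hs2)
    have hmono : nhdsWithin xs (Set.Iio xs) ≤ nhdsWithin xs {xs}ᶜ :=
      nhdsWithin_mono xs (fun y hy => Set.mem_compl_singleton_iff.mpr (ne_of_lt hy))
    have hev' : ∀ᶠ y in nhdsWithin xs (Set.Iio xs), 1 < slope (g ∘ g) xs y :=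
      hev.filter_mono hmono
    have hIoo : ∀ᶠ y in nhdsWithin xs (Set.Iio xs), y ∈ Set.Ioo 0 xs :=
      Ioo_mem_nhdsLT_of_mem ⟨hxspos, le_refl xs⟩
    obtain ⟨x₀, hsl, hx₀⟩ := (hev'.and hIoo).exists
    have hx₀F : (g ∘ g) x₀ < x₀ := by
      have hneg : x₀ - xs < 0 := by linarith [hx₀.2]
      rw [slope_def_field, lt_div_iff_of_neg hneg] at hsl
      rw [hFxs] at hsl
      linarith
    have hF0 : 0 ≤ (g ∘ g) 0 := by
      have h1 := gmaps 0 le_rfl zero_le_one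
      have h2 := gmaps (g 0) h1.1 h1.2
      exact h2.1
    have hcont : ContinuousOn (fun x => (g ∘ g) x - x) (Set.Icc 0 x₀) :=
      ((hgc.comp hgc).sub continuous_id).continuousOn
    have hsub := intermediate_value_Icc' (le_of_lt hx₀.1) hcont
    have h0mem : (0:ℝ) ∈ Set.Icc ((g ∘ g) x₀ - x₀) ((g ∘ g) 0 - 0) :=
      ⟨by linarith, by simpa using hF0⟩
    obtain ⟨y, hy, hyfix⟩ := hsub h0mem
    have hyfix' : (g ∘ g) y = y := by
      have : (g ∘ g) y - y = 0 := hyfix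
      linarith
    obtain ⟨w, hw, huniq⟩ := hEx
    have hx₀1 : x₀ ≤ 1 := by linarith [hx₀.2]
    have hy' : y = w := huniq y ⟨⟨hy.1, le_trans hy.2 hx₀1⟩, hyfix'⟩
    have hxs' : xs = w := huniq xs ⟨⟨hxs0, hxs1⟩, hFxs⟩
    have heq : y = xs := hy'.trans hxs'.symm
    have : y ≤ x₀ := hy.2
    rw [heq] at this
    linarith [hx₀.2]
  · -- s ≤ 1 → ∃!
    intro hs
    refine ⟨xs, ⟨⟨hxs0, hxs1⟩, hFxs⟩, ?_⟩
    rintro z ⟨⟨hz0, hz1⟩, hzF⟩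
    have hzF' : g (g z) = z := hzF
    by_contra hzne
    have hgz : g z ≠ z := fun h => hzne (gfix_unique z hz0 hz1 h)
    obtain ⟨a, ha0, ha1, haxs, hfa⟩ :
        ∃ a, 0 ≤ a ∧ a ≤ 1 ∧ a < xs ∧ g (g a) = a := by
      rcases lt_trichotomy z xs with h | h | h
      · exact ⟨z, hz0, hz1, h, hzF'⟩
      · exact absurd h hzne
      · obtain ⟨hgz0, hgz1⟩ := gmaps z hz0 hz1
        refine ⟨g z, hgz0, hgz1, ?_, congrArg g hzF'⟩
        have hle : g z ≤ xs := by
          have h2 := ganti xs z hxs0 h.le hz1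
          rw [hxsfix] at h2
          exact h2
        rcases eq_or_lt_of_le hle with he | hlt
        · exfalso
          apply hzne
          rw [← hzF', he, hxsfix]
        · exact hlt
    set A : ℝ := π * a + 1 - π with hAdef
    set B : ℝ := π * g a + 1 - π with hBdef2
    have hA0 : 0 ≤ A := (hbase a ha0 ha1).1
    have hAV : A < V := by
      have : π * a < π * xs := mul_lt_mul_of_pos_left haxs hπ0
      rw [hAdef, hVdef]; linarith
    have hBrel : B = (1 - π * q) - β * A ^ d := key a
    have hArel : A = (1 - π * q) - β * B ^ d := by
      have h1 := key (g a)
      rw [hfa] at h1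
      exact h1
    have hBV : B = V + β * (V ^ d - A ^ d) := by
      rw [hBrel, ← hm]; ring
    have hcore := core_lemma d hd β V hβ hVpos hs A hA0 hAV
    rw [← hBV] at hcore
    -- linear arithmetic contradiction
    have r1 : β * (B ^ d - V ^ d) = β * B ^ d - β * V ^ d := by ring
    have r2 : β * (V ^ d - A ^ d) = β * V ^ d - β * A ^ d := by ring
    have rB : B = (1 - π * q) - β * A ^ d := hBrel
    have rA : A = (1 - π * q) - β * B ^ d := hArel
    have rBV : B - V = β * V ^ d - β * A ^ d := by
      rw [hBV]; linarith [r2]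
    linarith
end

section
/- The composition g∘g has exactly one fixed point in the interval [0,1] if and only if (1−p−q)·λ·exp(−λq) ≤ e. -/
open Real Set

private lemma core_ineq (s x : ℝ) (hs0 : 0 < s) (hs1 : s ≤ 1) (hx : 0 < x) :
    s * (Real.exp (s * (1 - Real.exp (-x))) - 1) < x := by
  set F : ℝ → ℝ := fun y => y - s * (Real.exp (s * (1 - Real.exp (-y))) - 1) with hF
  have hd : ∀ y : ℝ, HasDerivAt F
      (1 - s * Real.exp (s * (1 - Real.exp (-y))) * (s * Real.exp (-y))) y := by
    intro y
    have h1 : HasDerivAt (fun t : ℝ => -t) (-1) y := (hasDerivAt_id y).neg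
    have h2 : HasDerivAt (fun t : ℝ => Real.exp (-t)) (Real.exp (-y) * (-1)) y := h1.exp
    have h3 : HasDerivAt (fun t : ℝ => s * (1 - Real.exp (-t)))
        (s * (0 - Real.exp (-y) * (-1))) y :=
      ((hasDerivAt_const y (1:ℝ)).sub h2).const_mul s
    have h4 := h3.exp
    have h5 := (h4.sub_const 1).const_mul s
    have h6 := (hasDerivAt_id y).sub h5
    refine h6.congr_deriv ?_
    ring
  have hcont : ContinuousOn F (Ici 0) := fun y _ => (hd y).continuousAt.continuousWithinAt
  have hmono : StrictMonoOn F (Ici 0) := by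
    apply strictMonoOn_of_deriv_pos (convex_Ici 0) hcont
    intro y hy
    rw [interior_Ici] at hy
    rw [(hd y).deriv]
    have e1 : Real.exp (-y) ≤ 1 := by
      rw [Real.exp_le_one_iff]; linarith [mem_Ioi.mp hy]
    have e2 : 1 - Real.exp (-y) < y := by
      have := Real.add_one_lt_exp (show -y ≠ 0 by
        have : (0:ℝ) < y := hy
        intro h; rw [neg_eq_zero] at h; linarith)
      linarith
    have e3 : s * (1 - Real.exp (-y)) ≤ 1 - Real.exp (-y) := by nlinarith
    have e6 : Real.exp (s * (1 - Real.exp (-y))) * Real.exp (-y) < 1 := by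
      rw [← Real.exp_add, Real.exp_lt_one_iff]
      linarith
    nlinarith [Real.exp_pos (s * (1 - Real.exp (-y))), Real.exp_pos (-y),
      mul_pos hs0 hs0]
  have h0 : F 0 = 0 := by simp [hF]
  have := hmono (self_mem_Ici) (mem_Ici.mpr hx.le) hx
  rw [h0] at this
  simp only [hF] at this
  linarith

private lemma no_two_cycle (lam K t u v : ℝ) (hlam : 0 < lam) (hK : 0 < K)
    (ht : t = K * Real.exp (-(lam * t))) (hs : lam * t ≤ 1)
    (hu : u = K * Real.exp (-(lam * v))) (hv : v = K * Real.exp (-(lam * u)))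
    (hvu : v < u) : False := by
  have ht0 : 0 < t := by rw [ht]; positivity
  have htu : t < u := by
    by_contra h
    push_neg at h  -- u ≤ t
    have h1 : t ≤ v := by
      rw [hv, ht]
      have : Real.exp (-(lam * t)) ≤ Real.exp (-(lam * u)) := by
        apply Real.exp_le_exp.mpr; nlinarith
      nlinarith
    linarith
  have hvt : v < t := by
    by_contra h
    push_neg at h  -- t ≤ v
    have h1 : u ≤ t := by
      rw [hu, ht]
      have : Real.exp (-(lam * v)) ≤ Real.exp (-(lam * t)) := by
        apply Real.exp_le_exp.mpr; nlinarith
      nlinarith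
    linarith
  set s := lam * t with hsdef
  set x := lam * (u - t) with hxdef
  set y := lam * (t - v) with hydef
  have hx0 : 0 < x := by rw [hxdef]; nlinarith
  have hy0 : 0 < y := by rw [hydef]; nlinarith
  have hs0 : 0 < s := by rw [hsdef]; positivity
  -- u = t * exp y
  have hue : u = t * Real.exp y := by
    rw [hu, ht, mul_assoc, ← Real.exp_add]
    congr 1
    rw [hydef, hsdef]; ring_nf
  -- v = t * exp (-x)
  have hve : v = t * Real.exp (-x) := by
    rw [hv, ht, mul_assoc, ← Real.exp_add]
    congr 1
    rw [hxdef, hsdef]; ring_nf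
  have hxeq : x = s * (Real.exp y - 1) := by
    rw [hxdef, hsdef, hue]; ring
  have hyeq : y = s * (1 - Real.exp (-x)) := by
    rw [hydef, hsdef]
    nth_rewrite 1 [hve]
    ring
  have := core_ineq s x hs0 hs hx0
  rw [← hyeq] at this
  rw [hxeq] at this
  exact lt_irrefl _ this

/-- Poisson(λ) case: g∘g has exactly one fixed point in [0,1] iff
(1−p−q)·λ·exp(−λq) ≤ e. -/
theorem poisson_unique_fixed_point_iff
    (lam p q : ℝ) (hlam : 0 < lam)
    (hp : 0 ≤ p) (hq : 0 ≤ q) (hpq0 : 0 < p + q) (hpq1 : p + q < 1)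
    (g : ℝ → ℝ) (hg : ∀ x, g x = (1 - q) - (1 - p - q) * Real.exp (lam * (x - 1))) :
    (∃! x, x ∈ Set.Icc (0 : ℝ) 1 ∧ (g ∘ g) x = x) ↔
      (1 - p - q) * lam * Real.exp (-(lam * q)) ≤ Real.exp 1 := by
  have hgf : g = fun x => (1 - q) - (1 - p - q) * Real.exp (lam * (x - 1)) := funext hg
  set c : ℝ := 1 - p - q with hcdef
  have hc : 0 < c := by rw [hcdef]; linarith
  set K : ℝ := c * Real.exp (-(lam * q)) with hKdef
  have hKpos : 0 < K := by positivity
  -- basic bounds on g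
  have hglt : ∀ x : ℝ, g x < 1 - q := by
    intro x; rw [hg]; nlinarith [Real.exp_pos (lam * (x - 1))]
  have hgtp : ∀ x : ℝ, x < 1 → p < g x := by
    intro x hx
    rw [hg]
    have : Real.exp (lam * (x - 1)) < 1 := by
      rw [Real.exp_lt_one_iff]; nlinarith
    nlinarith
  have hcontg : Continuous g := by rw [hgf]; continuity
  -- fixed point of g
  have hg1 : g 1 = p := by
    have h0 : lam * ((1:ℝ) - 1) = 0 := by ring
    rw [hg, h0, Real.exp_zero]; ring
  have hg0pos : 0 < g 0 := lt_of_le_of_lt hp (hgtp 0 one_pos)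
  obtain ⟨xs, hxsmem, hxs0⟩ :
      ∃ xs ∈ Icc (0:ℝ) 1, (fun x => g x - x) xs = 0 := by
    have hsub : Icc ((fun x => g x - x) 1) ((fun x => g x - x) 0) ⊆
        (fun x => g x - x) '' Icc 0 1 :=
      intermediate_value_Icc' (by norm_num) ((hcontg.sub continuous_id).continuousOn)
    have : (0:ℝ) ∈ Icc ((fun x => g x - x) 1) ((fun x => g x - x) 0) := by
      constructor
      · simp only [hg1]; linarith
      · simp only [sub_zero]; linarith
    obtain ⟨xs, hmem, heq⟩ := hsub this
    exact ⟨xs, hmem, heq⟩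
  have hxsfix : g xs = xs := by
    have := hxs0; simp only at this; linarith [this]
  have hxs_lt1 : xs < 1 := by
    have := hglt xs; rw [hxsfix] at this; linarith
  have hxs_pos : 0 < xs := by
    have := hgtp xs hxs_lt1; rw [hxsfix] at this; linarith
  set t : ℝ := 1 - q - xs with htdef
  have ht0 : 0 < t := by
    have := hglt xs; rw [hxsfix] at this; rw [htdef]; linarith
  have hcet : c * Real.exp (lam * (xs - 1)) = t := by
    have h1 := hg xs
    rw [hxsfix] at h1
    rw [htdef]; linarith
  have hKt : t = K * Real.exp (-(lam * t)) := by
    have h1 : K * Real.exp (-(lam * t)) = c * Real.exp (lam * (xs - 1)) := by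
      rw [hKdef, mul_assoc, ← Real.exp_add]
      congr 2
      rw [htdef]; ring
    rw [h1, hcet]
  -- condition equivalence
  have hmainiff : (c * lam * Real.exp (-(lam * q)) ≤ Real.exp 1) ↔ lam * t ≤ 1 := by
    have hKval : K = t * Real.exp (lam * t) := by
      have h1 : t * Real.exp (lam * t) = K := by
        nth_rewrite 1 [hKt]
        rw [mul_assoc, ← Real.exp_add, neg_add_cancel, Real.exp_zero, mul_one]
      exact h1.symm
    have heq : c * lam * Real.exp (-(lam * q)) = (lam * t) * Real.exp (lam * t) := by
      have : c * lam * Real.exp (-(lam * q)) = lam * K := by rw [hKdef]; ring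
      rw [this, hKval]; ring
    rw [heq]
    constructor
    · intro hle
      by_contra hgt
      push_neg at hgt
      have h2 : Real.exp 1 < Real.exp (lam * t) := Real.exp_lt_exp.mpr hgt
      nlinarith [Real.exp_pos (lam * t)]
    · intro hle
      have h2 : Real.exp (lam * t) ≤ Real.exp 1 := Real.exp_le_exp.mpr hle
      nlinarith [Real.exp_pos (lam * t), mul_pos hlam ht0]
  -- uniqueness of fixed point of g
  have hanti : StrictAnti g := by
    intro a b hab
    rw [hg a, hg b]
    have : Real.exp (lam * (a - 1)) < Real.exp (lam * (b - 1)) := by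
      apply Real.exp_lt_exp.mpr; nlinarith
    nlinarith
  have hfixuniq : ∀ z : ℝ, g z = z → z = xs := by
    intro z hz
    rcases lt_trichotomy z xs with h | h | h
    · have := hanti h; rw [hz, hxsfix] at this; linarith
    · exact h
    · have := hanti h; rw [hz, hxsfix] at this; linarith
  constructor
  · -- unique fixed point → condition
    intro hEx
    rw [hmainiff]
    by_contra hgt
    push_neg at hgt  -- 1 < lam * t
    -- derivative of g ∘ g at xs is (lam*t)^2 > 1
    have hgd : ∀ x : ℝ, HasDerivAt g (-(c * lam * Real.exp (lam * (x - 1)))) x := by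
      intro x
      rw [hgf]
      have h1 : HasDerivAt (fun x : ℝ => lam * (x - 1)) (lam * 1) x :=
        ((hasDerivAt_id x).sub_const 1).const_mul lam
      have h2 := h1.exp
      have h3 := h2.const_mul c
      have h4 := h3.const_sub (1 - q)
      refine h4.congr_deriv ?_
      ring
    have hcomp : HasDerivAt (fun x => g (g x))
        ((-(c * lam * Real.exp (lam * (g xs - 1)))) * (-(c * lam * Real.exp (lam * (xs - 1))))) xs :=
      (hgd (g xs)).comp xs (hgd xs)
    rw [hxsfix] at hcomp
    have hderval : (-(c * lam * Real.exp (lam * (xs - 1)))) *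
        (-(c * lam * Real.exp (lam * (xs - 1)))) = (lam * t) * (lam * t) := by
      have : c * lam * Real.exp (lam * (xs - 1)) = lam * t := by
        rw [← hcet]; ring
      rw [this]; ring
    rw [hderval] at hcomp
    set h : ℝ → ℝ := fun x => g (g x) - x with hhdef
    have hhd : HasDerivAt h ((lam * t) * (lam * t) - 1) xs :=
      hcomp.sub (hasDerivAt_id xs)
    have hhxs : h xs = 0 := by rw [hhdef]; simp [hxsfix]
    -- slope argument: find z < xs with h z < 0
    rw [hasDerivAt_iff_tendsto_slope] at hhd
    have hpos : ∀ᶠ z in nhdsWithin xs {xs}ᶜ, 0 < slope h xs z :=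
      hhd.eventually (eventually_gt_nhds (by nlinarith))
    have hposlt : ∀ᶠ z in nhdsWithin xs (Iio xs), 0 < slope h xs z :=
      hpos.filter_mono (nhdsWithin_mono xs (fun y hy => ne_of_lt hy))
    have hIoo : ∀ᶠ z in nhdsWithin xs (Iio xs), z ∈ Ioo 0 xs :=
      Filter.eventually_mem_set.mpr (Ioo_mem_nhdsLT_of_mem ⟨hxs_pos, le_refl xs⟩)
    obtain ⟨z, hzslope, hzmem⟩ := (hposlt.and hIoo).exists
    have hzlt : z < xs := hzmem.2
    have hhz : h z < 0 := by
      rw [slope_def_field, hhxs] at hzslope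
      rcases div_pos_iff.mp hzslope with ⟨h1, h2⟩ | ⟨h1, h2⟩
      · linarith
      · linarith
    have hh0 : 0 < h 0 := by
      rw [hhdef]
      simp only [sub_zero]
      have hg0lt1 : g 0 < 1 := by have := hglt 0; linarith
      have := hgtp (g 0) hg0lt1
      linarith
    -- IVT between 0 and z
    obtain ⟨z', hz'mem, hz'eq⟩ :
        ∃ z' ∈ Icc (0:ℝ) z, h z' = 0 := by
      have hcont : ContinuousOn h (Icc 0 z) :=
        (((hcontg.comp hcontg).sub continuous_id).continuousOn)
      have hsub : Icc (h z) (h 0) ⊆ h '' Icc 0 z :=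
        intermediate_value_Icc' (le_of_lt hzmem.1) hcont
      have : (0:ℝ) ∈ Icc (h z) (h 0) := ⟨le_of_lt hhz, le_of_lt hh0⟩
      obtain ⟨z', hmem, heq⟩ := hsub this
      exact ⟨z', hmem, heq⟩
    have hz'lt : z' < xs := lt_of_le_of_lt hz'mem.2 hzlt
    obtain ⟨w, _, hwuniq⟩ := hEx
    have e1 : xs = w := hwuniq xs ⟨hxsmem, by
      simp only [Function.comp_apply]; rw [hxsfix, hxsfix]⟩
    have e2 : z' = w := hwuniq z' ⟨⟨hz'mem.1, by linarith [hxsmem.2]⟩, by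
      simp only [Function.comp_apply]
      have : g (g z') - z' = 0 := hz'eq
      linarith⟩
    rw [← e1] at e2
    linarith
  · -- condition → unique fixed point
    intro hcond
    have hst : lam * t ≤ 1 := by
      rw [← hmainiff]
      exact hcond
    refine ⟨xs, ⟨hxsmem, by simp only [Function.comp_apply]; rw [hxsfix, hxsfix]⟩, ?_⟩
    rintro z ⟨hz01, hzfix⟩
    by_contra hne
    simp only [Function.comp_apply] at hzfix
    set w : ℝ := g z with hwdef
    have hwz : g w = z := hzfix
    have hwne : w ≠ z := by
      intro h
      rw [h] at hwz
      exact hne (hfixuniq z hwz)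
    rcases lt_or_gt_of_ne hwne with hlt | hgt
    · -- w < z : u = 1-q-w, v = 1-q-z
      apply no_two_cycle lam K t (1 - q - w) (1 - q - z) hlam hKpos hKt hst
      · -- 1-q-w = K * exp(-(lam*(1-q-z)))
        have h1 := hg z
        rw [← hwdef] at h1  -- w = (1-q) - c * exp(lam*(z-1))
        have h2 : c * Real.exp (lam * (z - 1)) = 1 - q - w := by linarith
        rw [← h2, hKdef, mul_assoc, ← Real.exp_add]
        congr 2
        ring
      · have h1 := hg w
        rw [hwz] at h1  -- z = (1-q) - c * exp(lam*(w-1))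
        have h2 : c * Real.exp (lam * (w - 1)) = 1 - q - z := by linarith
        rw [← h2, hKdef, mul_assoc, ← Real.exp_add]
        congr 2
        ring
      · linarith
    · -- z < w
      apply no_two_cycle lam K t (1 - q - z) (1 - q - w) hlam hKpos hKt hst
      · have h1 := hg w
        rw [hwz] at h1
        have h2 : c * Real.exp (lam * (w - 1)) = 1 - q - z := by linarith
        rw [← h2, hKdef, mul_assoc, ← Real.exp_add]
        congr 2
        ring
      · have h1 := hg z
        rw [← hwdef] at h1
        have h2 : c * Real.exp (lam * (z - 1)) = 1 - q - w := by linarith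
        rw [← h2, hKdef, mul_assoc, ← Real.exp_add]
        congr 2
        ring
      · linarith
end

section
/- The composition g∘g has exactly one fixed point in the interval [0,1] if and only if (r−1)^{r+1}·(1−π)·(1−p−q)·π^r ≤ (q + π − qπ)^{r+1}·r^r. -/
open Set Filter Topology

private lemma nbu_pow_aux {u : ℝ} (r : ℕ) (hr : 1 ≤ r) :
    u ^ (r - 1) * u ^ (r + 1) = (u ^ r) ^ 2 := by
  rw [← pow_add, ← pow_mul]
  congr 1
  omega

private lemma nbu_hasDerivAt_phi (A B : ℝ) (r : ℕ) (hr : 1 ≤ r) {u : ℝ} (hu : u ≠ 0) :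
    HasDerivAt (fun u : ℝ => A + B / u ^ r) (-((r : ℝ) * B / u ^ (r + 1))) u := by
  have h1 : HasDerivAt (fun u : ℝ => u ^ r) ((r : ℝ) * u ^ (r - 1)) u := hasDerivAt_pow r u
  have h2 := (hasDerivAt_const u B).div h1 (pow_ne_zero r hu)
  have h3 := (hasDerivAt_const u A).add h2
  refine h3.congr_deriv ?_
  have key : u ^ (r - 1) * u ^ (r + 1) = (u ^ r) ^ 2 := nbu_pow_aux r hr
  have hne1 : u ^ (r + 1) ≠ 0 := pow_ne_zero _ hu
  have hne2 : (u ^ r) ^ 2 ≠ 0 := pow_ne_zero _ (pow_ne_zero _ hu)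
  rw [← key]; field_simp; ring

/-- Core lemma: a genuine 2-cycle of `u ↦ A + B/u^r` around the fixed point `u0`
forces the strict reverse inequality. -/
private lemma nbu_cycle_forces (r : ℕ) (hr : 1 ≤ r) (A B : ℝ) (hA : 0 < A) (hB : 0 < B)
    {a b u0 : ℝ} (ha : 0 < a) (hau : a < u0) (hub : u0 < b)
    (hfa : A + B / a ^ r = b) (hfb : A + B / b ^ r = a) (hfu : A + B / u0 ^ r = u0) :
    A ^ (r + 1) * (r : ℝ) ^ r < ((r : ℝ) - 1) ^ (r + 1) * B := by
  have hu00 : 0 < u0 := lt_trans ha hau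
  have hb0 : 0 < b := lt_trans hu00 hub
  obtain ⟨φ, hφdef⟩ : ∃ φ : ℝ → ℝ, φ = fun u => A + B / u ^ r := ⟨_, rfl⟩
  have hφpos : ∀ u : ℝ, 0 < u → 0 < φ u := by
    intro u hu
    have h1 : 0 < B / u ^ r := div_pos hB (pow_pos hu r)
    rw [hφdef]
    dsimp only
    linarith
  obtain ⟨F, hFdef⟩ : ∃ F : ℝ → ℝ, F = fun u => φ (φ u) - u := ⟨_, rfl⟩
  obtain ⟨F', hF'def⟩ : ∃ F' : ℝ → ℝ,
      F' = fun u => -((r : ℝ) * B / (φ u) ^ (r + 1)) * -((r : ℝ) * B / u ^ (r + 1)) - 1 :=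
    ⟨_, rfl⟩
  have hFd : ∀ u : ℝ, 0 < u → HasDerivAt F (F' u) u := by
    intro u hu
    have h1 := nbu_hasDerivAt_phi A B r hr hu.ne'
    have h2 := nbu_hasDerivAt_phi A B r hr (hφpos u hu).ne'
    rw [hφdef] at h2
    simp only [hFdef, hF'def, hφdef, Function.comp]
    refine ((h2.comp u h1).sub (hasDerivAt_id u)).congr_deriv ?_
    ring
  have hφa : φ a = b := by rw [hφdef]; exact hfa
  have hφb : φ b = a := by rw [hφdef]; exact hfb
  have hφu : φ u0 = u0 := by rw [hφdef]; exact hfu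
  have hFa : F a = 0 := by rw [hFdef]; dsimp only; rw [hφa, hφb]; ring
  have hFb : F b = 0 := by rw [hFdef]; dsimp only; rw [hφb, hφa]; ring
  have hFu : F u0 = 0 := by rw [hFdef]; dsimp only; rw [hφu, hφu]; ring
  obtain ⟨ξ₁, hξ₁, hdξ₁⟩ := exists_hasDerivAt_eq_zero hau
    (fun x hx => (hFd x (lt_of_lt_of_le ha hx.1)).continuousAt.continuousWithinAt)
    (hFa.trans hFu.symm) (fun x hx => hFd x (lt_trans ha hx.1))
  obtain ⟨ξ₂, hξ₂, hdξ₂⟩ := exists_hasDerivAt_eq_zero hub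
    (fun x hx => (hFd x (lt_of_lt_of_le hu00 hx.1)).continuousAt.continuousWithinAt)
    (hFu.trans hFb.symm) (fun x hx => hFd x (lt_trans hu00 hx.1))
  have hξ₁pos : 0 < ξ₁ := lt_trans ha hξ₁.1
  have hξ₂pos : 0 < ξ₂ := lt_trans hu00 hξ₂.1
  have hsq : ∀ ξ : ℝ, 0 < ξ → F' ξ = 0 → ((r : ℝ) * B) ^ 2 = (ξ * φ ξ) ^ (r + 1) := by
    intro ξ hξ h
    have hφξ : 0 < φ ξ := hφpos ξ hξ
    rw [hF'def] at h
    dsimp only at h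
    rw [neg_mul_neg, sub_eq_zero, div_mul_div_comm,
      div_eq_one_iff_eq (mul_ne_zero (pow_ne_zero _ hφξ.ne') (pow_ne_zero _ hξ.ne'))] at h
    calc ((r : ℝ) * B) ^ 2 = (r : ℝ) * B * ((r : ℝ) * B) := sq ((r : ℝ) * B)
      _ = φ ξ ^ (r + 1) * ξ ^ (r + 1) := h
      _ = (ξ * φ ξ) ^ (r + 1) := by rw [mul_pow]; exact mul_comm _ _
  have h1 := hsq ξ₁ hξ₁pos hdξ₁
  have h2 := hsq ξ₂ hξ₂pos hdξ₂
  have hbase : ∀ x y : ℝ, 0 < x → 0 < y → x ^ (r + 1) = y ^ (r + 1) → x = y := by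
    intro x y hx hy hxy
    rcases lt_trichotomy x y with h | h | h
    · have h3 := pow_lt_pow_left₀ h hx.le (Nat.succ_ne_zero r)
      rw [hxy] at h3
      exact absurd h3 (lt_irrefl _)
    · exact h
    · have h3 := pow_lt_pow_left₀ h hy.le (Nat.succ_ne_zero r)
      rw [hxy] at h3
      exact absurd h3 (lt_irrefl _)
  have hKeq : ξ₁ * φ ξ₁ = ξ₂ * φ ξ₂ :=
    hbase _ _ (mul_pos hξ₁pos (hφpos _ hξ₁pos)) (mul_pos hξ₂pos (hφpos _ hξ₂pos))
      (h1.symm.trans h2)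
  have hξ₁ξ₂ : ξ₁ < ξ₂ := lt_trans hξ₁.2 hξ₂.1
  rcases Nat.lt_or_ge r 2 with hr1 | hr2
  · exfalso
    have hreq : r = 1 := by omega
    subst hreq
    have e1 : ξ₁ * φ ξ₁ = A * ξ₁ + B := by
      rw [hφdef]
      dsimp only
      rw [pow_one]
      field_simp
    have e2 : ξ₂ * φ ξ₂ = A * ξ₂ + B := by
      rw [hφdef]
      dsimp only
      rw [pow_one]
      field_simp
    rw [e1, e2] at hKeq
    linarith [mul_lt_mul_of_pos_left hξ₁ξ₂ hA]
  -- now r ≥ 2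
  have hn0 : (1 : ℤ) - (r : ℤ) ≠ 0 := by omega
  have hn1 : (1 : ℤ) - (r : ℤ) ≠ 1 := by omega
  have hmrep : ∀ u : ℝ, 0 < u → u * φ u = A * u + B * u ^ ((1 : ℤ) - (r : ℤ)) := by
    intro u hu
    rw [hφdef]
    dsimp only
    rw [zpow_sub₀ hu.ne', zpow_one, zpow_natCast]
    field_simp
  have hd : 0 < ξ₂ - ξ₁ := by linarith
  obtain ⟨lam, hlamdef⟩ : ∃ lam : ℝ, lam = (ξ₂ - u0) / (ξ₂ - ξ₁) := ⟨_, rfl⟩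
  obtain ⟨mu, hmudef⟩ : ∃ mu : ℝ, mu = (u0 - ξ₁) / (ξ₂ - ξ₁) := ⟨_, rfl⟩
  have hlam : 0 < lam := by rw [hlamdef]; exact div_pos (by linarith [hξ₂.1]) hd
  have hmu : 0 < mu := by rw [hmudef]; exact div_pos (by linarith [hξ₁.2]) hd
  have hsum : lam + mu = 1 := by
    rw [hlamdef, hmudef]
    field_simp
    ring
  have hcomb : lam * ξ₁ + mu * ξ₂ = u0 := by
    rw [hlamdef, hmudef]
    field_simp
    ring
  have hconv := (strictConvexOn_zpow hn0 hn1).2 (Set.mem_Ioi.mpr hξ₁pos)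
    (Set.mem_Ioi.mpr hξ₂pos) (ne_of_lt hξ₁ξ₂) hlam hmu hsum
  simp only [smul_eq_mul] at hconv
  rw [hcomb] at hconv
  have hmu0 : u0 * φ u0 = u0 ^ 2 := by rw [hφu]; ring
  have hlt : u0 ^ 2 < ξ₁ * φ ξ₁ := by
    have e0 := hmrep u0 hu00
    have e1 := hmrep ξ₁ hξ₁pos
    have e2 := hmrep ξ₂ hξ₂pos
    have h5 : B * u0 ^ ((1 : ℤ) - (r : ℤ)) <
        B * (lam * ξ₁ ^ ((1 : ℤ) - (r : ℤ)) + mu * ξ₂ ^ ((1 : ℤ) - (r : ℤ))) :=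
      mul_lt_mul_of_pos_left hconv hB
    calc u0 ^ 2 = A * u0 + B * u0 ^ ((1 : ℤ) - (r : ℤ)) := by rw [← hmu0, e0]
      _ < A * u0 + B * (lam * ξ₁ ^ ((1 : ℤ) - (r : ℤ)) + mu * ξ₂ ^ ((1 : ℤ) - (r : ℤ))) := by
          linarith
      _ = lam * (A * ξ₁ + B * ξ₁ ^ ((1 : ℤ) - (r : ℤ)))
          + mu * (A * ξ₂ + B * ξ₂ ^ ((1 : ℤ) - (r : ℤ))) := by rw [← hcomb]; ring
      _ = lam * (ξ₁ * φ ξ₁) + mu * (ξ₂ * φ ξ₂) := by rw [e1, e2]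
      _ = ξ₁ * φ ξ₁ := by rw [← hKeq, ← add_mul, hsum, one_mul]
  have hp1 : (u0 ^ 2) ^ (r + 1) < (ξ₁ * φ ξ₁) ^ (r + 1) :=
    pow_lt_pow_left₀ hlt (by positivity) (Nat.succ_ne_zero r)
  rw [← h1] at hp1
  have hp2 : u0 ^ (r + 1) < (r : ℝ) * B := by
    have h0 : (0 : ℝ) ≤ (r : ℝ) * B := by positivity
    have hsq2 : (u0 ^ (r + 1)) ^ 2 < ((r : ℝ) * B) ^ 2 := by
      calc (u0 ^ (r + 1)) ^ 2 = (u0 ^ 2) ^ (r + 1) := by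
            rw [← pow_mul, ← pow_mul, Nat.mul_comm]
        _ < ((r : ℝ) * B) ^ 2 := hp1
    exact lt_of_pow_lt_pow_left₀ 2 h0 hsq2
  have hBdiv : B / u0 ^ r = u0 - A := by linarith [hfu]
  have hBeq : B = (u0 - A) * u0 ^ r := (div_eq_iff (pow_ne_zero r hu00.ne')).1 hBdiv
  have hu0A : 0 < u0 - A := by
    have h9 : 0 < B / u0 ^ r := div_pos hB (pow_pos hu00 r)
    linarith [hBdiv]
  have hpow : (0 : ℝ) < u0 ^ r := pow_pos hu00 r
  have hstep : u0 < (r : ℝ) * (u0 - A) := by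
    have h6 : u0 * u0 ^ r < ((r : ℝ) * (u0 - A)) * u0 ^ r := by
      calc u0 * u0 ^ r = u0 ^ (r + 1) := by ring
        _ < (r : ℝ) * B := hp2
        _ = ((r : ℝ) * (u0 - A)) * u0 ^ r := by rw [hBeq]; ring
    exact (mul_lt_mul_iff_of_pos_right hpow).1 h6
  have hr1R : (2 : ℝ) ≤ (r : ℝ) := by exact_mod_cast hr2
  have hrne : (0 : ℝ) < (r : ℝ) - 1 := by linarith
  obtain ⟨w0, hw0def⟩ : ∃ w0 : ℝ, w0 = (r : ℝ) * A / ((r : ℝ) - 1) := ⟨_, rfl⟩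
  have hw0lt : w0 < u0 := by
    have h10 : u0 < (r : ℝ) * u0 - (r : ℝ) * A := by
      have h11 := hstep
      rwa [mul_sub] at h11
    rw [hw0def, div_lt_iff₀ hrne, mul_sub, mul_one, mul_comm u0 ((r : ℝ))]
    linarith
  have hw0A : A < w0 := by
    rw [hw0def, lt_div_iff₀ hrne, mul_sub, mul_one, mul_comm A ((r : ℝ))]
    linarith [hA]
  have hw0pos : 0 < w0 := lt_trans hA hw0A
  have hmono : w0 ^ r * (w0 - A) < u0 ^ r * (u0 - A) := by
    have h7 : w0 ^ r < u0 ^ r := pow_lt_pow_left₀ hw0lt hw0pos.le (by omega)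
    have h8 : 0 < w0 - A := by linarith
    linarith [mul_lt_mul_of_pos_right h7 h8,
      mul_lt_mul_of_pos_left (show w0 - A < u0 - A by linarith) hpow]
  have hval : ((r : ℝ) - 1) ^ (r + 1) * (w0 ^ r * (w0 - A)) = A ^ (r + 1) * (r : ℝ) ^ r := by
    have e1 : w0 - A = A / ((r : ℝ) - 1) := by
      rw [hw0def]
      field_simp
      ring
    have e2 : w0 ^ r = ((r : ℝ) * A) ^ r / ((r : ℝ) - 1) ^ r := by rw [hw0def, div_pow]
    rw [e1, e2, div_mul_div_comm, ← pow_succ, mul_comm,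
      div_mul_cancel₀ _ (pow_ne_zero _ hrne.ne'), mul_pow]
    ring
  calc A ^ (r + 1) * (r : ℝ) ^ r = ((r : ℝ) - 1) ^ (r + 1) * (w0 ^ r * (w0 - A)) := hval.symm
    _ < ((r : ℝ) - 1) ^ (r + 1) * (u0 ^ r * (u0 - A)) :=
        mul_lt_mul_of_pos_left hmono (pow_pos hrne _)
    _ = ((r : ℝ) - 1) ^ (r + 1) * B := by rw [hBeq]; ring

/-- Core lemma: if the inequality fails, the fixed point `u0` is unstable, so there is
`w < u0` close to `u0` with `φ(φ(w)) < w`. -/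
private lemma nbu_exists_below (r : ℕ) (hr : 1 ≤ r) (A B : ℝ) (hA : 0 < A) (hB : 0 < B)
    {u0 : ℝ} (hu0 : 0 < u0) (hfu : A + B / u0 ^ r = u0)
    (hineq : A ^ (r + 1) * (r : ℝ) ^ r < ((r : ℝ) - 1) ^ (r + 1) * B) :
    ∃ w, A < w ∧ w < u0 ∧ A + B / (A + B / w ^ r) ^ r < w := by
  have hr2 : 2 ≤ r := by
    by_contra hcon
    have hre : r = 1 := by omega
    subst hre
    norm_num at hineq
    nlinarith [sq_nonneg A, hineq]
  have hr1R : (2 : ℝ) ≤ (r : ℝ) := by exact_mod_cast hr2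
  have hrne : (0 : ℝ) < (r : ℝ) - 1 := by linarith
  have h9 : 0 < B / u0 ^ r := div_pos hB (pow_pos hu0 r)
  have hu0A : 0 < u0 - A := by linarith [hfu]
  have hAu0 : A < u0 := by linarith
  have hBdiv : B / u0 ^ r = u0 - A := by linarith [hfu]
  have hBeq : B = (u0 - A) * u0 ^ r := (div_eq_iff (pow_ne_zero r hu0.ne')).1 hBdiv
  obtain ⟨w0, hw0def⟩ : ∃ w0 : ℝ, w0 = (r : ℝ) * A / ((r : ℝ) - 1) := ⟨_, rfl⟩
  have hw0A : A < w0 := by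
    rw [hw0def, lt_div_iff₀ hrne, mul_sub, mul_one, mul_comm A ((r : ℝ))]
    linarith [hA]
  have hw0pos : 0 < w0 := lt_trans hA hw0A
  have hval : ((r : ℝ) - 1) ^ (r + 1) * (w0 ^ r * (w0 - A)) = A ^ (r + 1) * (r : ℝ) ^ r := by
    have e1 : w0 - A = A / ((r : ℝ) - 1) := by
      rw [hw0def]
      field_simp
      ring
    have e2 : w0 ^ r = ((r : ℝ) * A) ^ r / ((r : ℝ) - 1) ^ r := by rw [hw0def, div_pow]
    rw [e1, e2, div_mul_div_comm, ← pow_succ, mul_comm,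
      div_mul_cancel₀ _ (pow_ne_zero _ hrne.ne'), mul_pow]
    ring
  have hw0u0 : w0 < u0 := by
    by_contra hcon
    push_neg at hcon
    have hmono : u0 ^ r * (u0 - A) ≤ w0 ^ r * (w0 - A) :=
      mul_le_mul (pow_le_pow_left₀ hu0.le hcon r) (by linarith) hu0A.le
        (pow_pos hw0pos r).le
    have hfin : ((r : ℝ) - 1) ^ (r + 1) * B ≤ A ^ (r + 1) * (r : ℝ) ^ r := by
      calc ((r : ℝ) - 1) ^ (r + 1) * B
          = ((r : ℝ) - 1) ^ (r + 1) * (u0 ^ r * (u0 - A)) := by rw [hBeq]; ring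
        _ ≤ ((r : ℝ) - 1) ^ (r + 1) * (w0 ^ r * (w0 - A)) :=
            mul_le_mul_of_nonneg_left hmono (pow_pos hrne _).le
        _ = A ^ (r + 1) * (r : ℝ) ^ r := hval
    linarith
  have h12 : (r : ℝ) * A < u0 * ((r : ℝ) - 1) := by
    rw [hw0def, div_lt_iff₀ hrne] at hw0u0
    exact hw0u0
  have hstep : u0 < (r : ℝ) * (u0 - A) := by nlinarith [h12]
  have hrB : u0 ^ (r + 1) < (r : ℝ) * B := by
    calc u0 ^ (r + 1) = u0 * u0 ^ r := by ring
      _ < ((r : ℝ) * (u0 - A)) * u0 ^ r := (mul_lt_mul_iff_of_pos_right (pow_pos hu0 r)).2 hstep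
      _ = (r : ℝ) * B := by rw [hBeq]; ring
  obtain ⟨φ, hφdef⟩ : ∃ φ : ℝ → ℝ, φ = fun u => A + B / u ^ r := ⟨_, rfl⟩
  have hφpos : ∀ u : ℝ, 0 < u → 0 < φ u := by
    intro u hu
    have h1 : 0 < B / u ^ r := div_pos hB (pow_pos hu r)
    rw [hφdef]
    dsimp only
    linarith
  have hφu : φ u0 = u0 := by rw [hφdef]; exact hfu
  obtain ⟨h, hhdef⟩ : ∃ h : ℝ → ℝ, h = fun u => φ (φ u) := ⟨_, rfl⟩
  obtain ⟨D', hD'def⟩ : ∃ D' : ℝ → ℝ,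
      D' = fun u => -((r : ℝ) * B / (φ u) ^ (r + 1)) * -((r : ℝ) * B / u ^ (r + 1)) :=
    ⟨_, rfl⟩
  have hDd : ∀ u : ℝ, 0 < u → HasDerivAt h (D' u) u := by
    intro u hu
    have h1 := nbu_hasDerivAt_phi A B r hr hu.ne'
    have h2 := nbu_hasDerivAt_phi A B r hr (hφpos u hu).ne'
    rw [hφdef] at h2
    simp only [hhdef, hD'def, hφdef, Function.comp]
    refine (h2.comp u h1).congr_deriv ?_
    ring
  have hD1 : 1 < D' u0 := by
    rw [hD'def]
    dsimp only
    rw [hφu, neg_mul_neg]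
    have hgt : 1 < (r : ℝ) * B / u0 ^ (r + 1) := (one_lt_div (pow_pos hu0 _)).2 hrB
    nlinarith [hgt]
  have hD := hDd u0 hu0
  rw [hasDerivAt_iff_tendsto_slope] at hD
  have hev1 : ∀ᶠ y in 𝓝[≠] u0, 1 < slope h u0 y := hD.eventually_const_lt hD1
  have hle : 𝓝[<] u0 ≤ 𝓝[≠] u0 := nhdsWithin_mono _ fun x hx => ne_of_lt hx
  have hev2 : Ioo A u0 ∈ 𝓝[<] u0 := Ioo_mem_nhdsLT_of_mem ⟨hAu0, le_refl u0⟩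
  have hev1' : ∀ᶠ y in 𝓝[<] u0, 1 < slope h u0 y := hle hev1
  have hev2' : ∀ᶠ y in 𝓝[<] u0, y ∈ Ioo A u0 := eventually_of_mem hev2 fun x hx => hx
  obtain ⟨w, hw1, hw2⟩ := (hev1'.and hev2').exists
  have hhu0 : h u0 = u0 := by rw [hhdef]; dsimp only; rw [hφu, hφu]
  have hneg : w - u0 < 0 := by linarith [hw2.2]
  have hlt2 : h w < w := by
    rw [slope_def_field, hhu0] at hw1
    have h13 := (lt_div_iff_of_neg hneg).1 hw1
    linarith
  refine ⟨w, hw2.1, hw2.2, ?_⟩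
  have hrw : h w = A + B / (A + B / w ^ r) ^ r := by simp only [hhdef, hφdef]
  rwa [hrw] at hlt2

/-- Negative Binomial(r,π) case: g∘g has exactly one fixed point in [0,1] iff
(r−1)^{r+1}·(1−π)·(1−p−q)·π^r ≤ (q+π−qπ)^{r+1}·r^r. -/
theorem negBinomial_unique_fixed_point_iff
    (r : ℕ) (hr : 1 ≤ r) (π p q : ℝ) (hπ0 : 0 < π) (hπ1 : π ≤ 1)
    (hp : 0 ≤ p) (hq : 0 ≤ q) (hpq0 : 0 < p + q) (hpq1 : p + q < 1)
    (g : ℝ → ℝ) (hg : ∀ x, g x = (1 - q) - (1 - p - q) * (π / (1 - (1 - π) * x)) ^ r) :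
    (∃! x, x ∈ Set.Icc (0 : ℝ) 1 ∧ (g ∘ g) x = x) ↔
      ((r : ℝ) - 1) ^ (r + 1) * (1 - π) * (1 - p - q) * π ^ r ≤
        (q + π - q * π) ^ (r + 1) * (r : ℝ) ^ r := by
  have hc : 0 < 1 - p - q := by linarith
  have hq1 : q < 1 := by linarith
  have hp1 : p < 1 := by linarith
  rcases eq_or_lt_of_le hπ1 with hπeq | hπlt
  · -- case π = 1 : g is constant p, both sides hold
    apply iff_of_true
    · have hgp : ∀ x : ℝ, g x = p := by
        intro x
        rw [hg x, hπeq]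
        norm_num
      refine ⟨p, ⟨⟨hp, by linarith⟩, by simp [Function.comp_apply, hgp]⟩, ?_⟩
      rintro y ⟨hy, hyfix⟩
      simp [Function.comp_apply, hgp] at hyfix
      linarith
    · have h1 : ((r : ℝ) - 1) ^ (r + 1) * (1 - π) * (1 - p - q) * π ^ r = 0 := by
        rw [hπeq]
        ring
      rw [h1]
      have e : q + π - q * π = 1 := by rw [hπeq]; ring
      rw [e]
      positivity
  -- main case : π < 1
  have hσ : 0 < 1 - π := by linarith
  obtain ⟨A, hAdef⟩ : ∃ A : ℝ, A = q + π - q * π := ⟨_, rfl⟩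
  obtain ⟨B, hBdef⟩ : ∃ B : ℝ, B = (1 - p - q) * (1 - π) * π ^ r := ⟨_, rfl⟩
  have hA : 0 < A := by
    rw [hAdef]
    nlinarith [mul_nonneg hq hσ.le]
  have hπA : π ≤ A := by
    rw [hAdef]
    nlinarith [mul_nonneg hq hσ.le]
  have hB : 0 < B := by
    rw [hBdef]
    exact mul_pos (mul_pos hc hσ) (pow_pos hπ0 r)
  have eB : ((r : ℝ) - 1) ^ (r + 1) * (1 - π) * (1 - p - q) * π ^ r
      = ((r : ℝ) - 1) ^ (r + 1) * B := by rw [hBdef]; ring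
  have eA : (q + π - q * π) ^ (r + 1) * (r : ℝ) ^ r = A ^ (r + 1) * (r : ℝ) ^ r := by
    rw [hAdef]
  -- coordinate change
  have key : ∀ u : ℝ, u ≠ 0 →
      g ((1 - u) / (1 - π)) = (1 - (A + B / u ^ r)) / (1 - π) := by
    intro u hu
    rw [hg]
    have e1 : 1 - (1 - π) * ((1 - u) / (1 - π)) = u := by field_simp; ring
    rw [e1, div_pow, hAdef, hBdef]
    field_simp
    ring
  have keyx : ∀ x : ℝ, 1 - (1 - π) * x ≠ 0 →
      g x = (1 - (A + B / (1 - (1 - π) * x) ^ r)) / (1 - π) := by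
    intro x hx
    have e2 : x = (1 - (1 - (1 - π) * x)) / (1 - π) := by
      rw [eq_div_iff hσ.ne']
      ring
    calc g x = g ((1 - (1 - (1 - π) * x)) / (1 - π)) := by rw [← e2]
      _ = (1 - (A + B / (1 - (1 - π) * x) ^ r)) / (1 - π) := key _ hx
  have hu_mem : ∀ x : ℝ, x ∈ Set.Icc (0 : ℝ) 1 →
      π ≤ 1 - (1 - π) * x ∧ 1 - (1 - π) * x ≤ 1 := by
    intro x hx
    constructor
    · nlinarith [mul_le_mul_of_nonneg_left hx.2 hσ.le]
    · nlinarith [mul_nonneg hσ.le hx.1]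
  have hden : ∀ x ∈ Set.Icc (0 : ℝ) 1, 1 - (1 - π) * x ≠ 0 := by
    intro x hx
    have h1 := (hu_mem x hx).1
    intro hzero
    rw [hzero] at h1
    linarith
  have hupos : ∀ x ∈ Set.Icc (0 : ℝ) 1, 0 < 1 - (1 - π) * x := by
    intro x hx
    exact lt_of_lt_of_le hπ0 (hu_mem x hx).1
  -- continuity of g on [0,1]
  have hgc : ContinuousOn g (Set.Icc (0 : ℝ) 1) := by
    have hf : ContinuousOn
        (fun x : ℝ => (1 - q) - (1 - p - q) * (π / (1 - (1 - π) * x)) ^ r)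
        (Set.Icc (0 : ℝ) 1) := by
      apply ContinuousOn.sub continuousOn_const
      apply ContinuousOn.mul continuousOn_const
      apply ContinuousOn.pow
      exact ContinuousOn.div continuousOn_const (by fun_prop) hden
    exact hf.congr fun x _ => hg x
  -- the fixed point of g
  have hg1 : g 1 = p := by
    rw [hg 1]
    have e : 1 - (1 - π) * 1 = π := by ring
    rw [e, div_self hπ0.ne', one_pow]
    ring
  have hg0 : p ≤ g 0 := by
    rw [hg 0]
    have e : 1 - (1 - π) * 0 = 1 := by ring
    rw [e, div_one]
    nlinarith [mul_le_mul_of_nonneg_left (show π ^ r ≤ 1 from pow_le_one₀ hπ0.le hπ1) hc.le]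
  have hFc : ContinuousOn (fun x => g x - x) (Set.Icc (0 : ℝ) 1) :=
    hgc.sub continuousOn_id
  have h0mem : (0 : ℝ) ∈ Set.Icc ((fun x => g x - x) 1) ((fun x => g x - x) 0) := by
    constructor
    · show g 1 - 1 ≤ 0
      rw [hg1]
      linarith
    · show (0 : ℝ) ≤ g 0 - 0
      linarith
  obtain ⟨xb, hxbmem, hxbfix0⟩ := intermediate_value_Icc' (by norm_num : (0:ℝ) ≤ 1) hFc h0mem
  have hxbfix : g xb = xb := by
    have h1 : g xb - xb = 0 := hxbfix0
    linarith
  obtain ⟨ub, hubdef⟩ : ∃ ub : ℝ, ub = 1 - (1 - π) * xb := ⟨_, rfl⟩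
  have hubmem : π ≤ ub ∧ ub ≤ 1 := by rw [hubdef]; exact hu_mem xb hxbmem
  have hub0 : 0 < ub := lt_of_lt_of_le hπ0 hubmem.1
  have hubfix : A + B / ub ^ r = ub := by
    have h1 := keyx xb (hden xb hxbmem)
    rw [hxbfix] at h1
    rw [← hubdef] at h1
    rw [eq_div_iff hσ.ne'] at h1
    linear_combination h1 - hubdef
  -- strict antitonicity of g on [0,1]
  have hganti : ∀ x y : ℝ, x ∈ Set.Icc (0:ℝ) 1 → y ∈ Set.Icc (0:ℝ) 1 → x < y →
      g y < g x := by
    intro x y hx hy hxy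
    rw [hg x, hg y]
    have hux : 0 < 1 - (1 - π) * x := hupos x hx
    have huy : 0 < 1 - (1 - π) * y := hupos y hy
    have huyx : 1 - (1 - π) * y < 1 - (1 - π) * x := by linarith [mul_lt_mul_of_pos_left hxy hσ]
    have hd : π / (1 - (1 - π) * x) < π / (1 - (1 - π) * y) :=
      div_lt_div_of_pos_left hπ0 huy huyx
    have hpow : (π / (1 - (1 - π) * x)) ^ r < (π / (1 - (1 - π) * y)) ^ r :=
      pow_lt_pow_left₀ hd (by positivity) (by omega)
    linarith [mul_lt_mul_of_pos_left hpow hc]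
  have hgfixu : ∀ x : ℝ, x ∈ Set.Icc (0:ℝ) 1 → g x = x → x = xb := by
    intro x hx hfx
    rcases lt_trichotomy x xb with h | h | h
    · have h2 := hganti x xb hx hxbmem h
      rw [hfx, hxbfix] at h2
      linarith
    · exact h
    · have h2 := hganti xb x hxbmem hx h
      rw [hfx, hxbfix] at h2
      linarith
  -- g maps [0,1] into itself
  have hgmaps : ∀ x ∈ Set.Icc (0:ℝ) 1, g x ∈ Set.Icc (0:ℝ) 1 := by
    intro x hx
    rw [hg x]
    have hux : 0 < 1 - (1 - π) * x := hupos x hx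
    have h1 : π / (1 - (1 - π) * x) ≤ 1 := by
      rw [div_le_one hux]
      linarith [(hu_mem x hx).1]
    have h0 : 0 ≤ π / (1 - (1 - π) * x) := by positivity
    have hple : (π / (1 - (1 - π) * x)) ^ r ≤ 1 := pow_le_one₀ h0 h1
    constructor
    · linarith [mul_le_mul_of_nonneg_left hple hc.le]
    · linarith [mul_nonneg hc.le (pow_nonneg h0 r)]
  -- g∘g in u-coordinates
  have hgg : ∀ x ∈ Set.Icc (0:ℝ) 1, g (g x) =
      (1 - (A + B / (A + B / (1 - (1 - π) * x) ^ r) ^ r)) / (1 - π) := by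
    intro x hx
    have hux : 0 < 1 - (1 - π) * x := hupos x hx
    have hφpos : 0 < A + B / (1 - (1 - π) * x) ^ r :=
      add_pos hA (div_pos hB (pow_pos hux r))
    have h1 : g x = (1 - (A + B / (1 - (1 - π) * x) ^ r)) / (1 - π) :=
      keyx x (hden x hx)
    have h2 : 1 - (1 - π) * g x = A + B / (1 - (1 - π) * x) ^ r := by
      rw [h1]
      field_simp
      ring
    have hne : 1 - (1 - π) * g x ≠ 0 := by rw [h2]; exact hφpos.ne'
    calc g (g x) = (1 - (A + B / (1 - (1 - π) * g x) ^ r)) / (1 - π) := keyx (g x) hne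
      _ = _ := by rw [h2]
  have hxbgg : g (g xb) = xb := by rw [hxbfix, hxbfix]
  -- the equivalence
  constructor
  · -- uniqueness implies the inequality
    intro hEU
    by_contra hcon
    push_neg at hcon
    have hineq' : A ^ (r + 1) * (r : ℝ) ^ r < ((r : ℝ) - 1) ^ (r + 1) * B := by
      rw [← eA, ← eB]
      exact hcon
    obtain ⟨w, hAw, hwub, hww⟩ := nbu_exists_below r hr A B hA hB hub0 hubfix hineq'
    obtain ⟨Fh, hFhdef⟩ : ∃ Fh : ℝ → ℝ,
        Fh = fun u => (A + B / (A + B / u ^ r) ^ r) - u := ⟨_, rfl⟩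
    have hFhc : ContinuousOn Fh (Set.Icc A w) := by
      rw [hFhdef]
      intro u hu
      have hu0 : 0 < u := lt_of_lt_of_le hA hu.1
      have hin : 0 < A + B / u ^ r := add_pos hA (div_pos hB (pow_pos hu0 r))
      have h1 := nbu_hasDerivAt_phi A B r hr hu0.ne'
      have h2 := nbu_hasDerivAt_phi A B r hr hin.ne'
      exact (((h2.comp u h1).sub (hasDerivAt_id u)).continuousAt).continuousWithinAt
    have hφA : 0 < A + B / A ^ r := add_pos hA (div_pos hB (pow_pos hA r))
    have hFhA : 0 ≤ Fh A := by
      rw [hFhdef]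
      have h3 : 0 < B / (A + B / A ^ r) ^ r := div_pos hB (pow_pos hφA r)
      dsimp only
      linarith
    have hFhw : Fh w ≤ 0 := by
      rw [hFhdef]
      dsimp only
      linarith [hww]
    obtain ⟨u1, hu1mem, hu1fix0⟩ :=
      intermediate_value_Icc' hAw.le hFhc ⟨hFhw, hFhA⟩
    have hu1fix : A + B / (A + B / u1 ^ r) ^ r = u1 := by
      have h4 : Fh u1 = 0 := hu1fix0
      rw [hFhdef] at h4
      dsimp only at h4
      linarith
    obtain ⟨x1, hx1def⟩ : ∃ x1 : ℝ, x1 = (1 - u1) / (1 - π) := ⟨_, rfl⟩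
    have hu1π : π ≤ u1 := le_trans hπA hu1mem.1
    have hu11 : u1 ≤ 1 := le_trans hu1mem.2 (le_trans hwub.le hubmem.2)
    have hx1mem : x1 ∈ Set.Icc (0:ℝ) 1 := by
      rw [hx1def]
      constructor
      · apply div_nonneg _ hσ.le
        linarith
      · rw [div_le_one hσ]
        linarith
    have hx1u : 1 - (1 - π) * x1 = u1 := by
      rw [hx1def]
      field_simp
      ring
    have hx1fix : g (g x1) = x1 := by
      rw [hgg x1 hx1mem, hx1u, hu1fix, hx1def]
    have hx1xb : x1 = xb := by
      obtain ⟨z, hz, hzuniq⟩ := hEU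
      have e1 := hzuniq x1 ⟨hx1mem, by simpa [Function.comp_apply] using hx1fix⟩
      have e2 := hzuniq xb ⟨hxbmem, by simpa [Function.comp_apply] using hxbgg⟩
      rw [e1, e2]
    have hu1ub : u1 = ub := by
      rw [hx1xb] at hx1u
      rw [hubdef]
      linarith [hx1u]
    have : u1 < ub := lt_of_le_of_lt hu1mem.2 hwub
    rw [hu1ub] at this
    exact lt_irrefl _ this
  · -- the inequality implies uniqueness
    intro hineq
    refine ⟨xb, ⟨hxbmem, by simpa [Function.comp_apply] using hxbgg⟩, ?_⟩
    rintro y ⟨hymem, hyfix⟩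
    simp only [Function.comp_apply] at hyfix
    by_cases hgy : g y = y
    · exact hgfixu y hymem hgy
    exfalso
    obtain ⟨uy, huydef⟩ : ∃ uy : ℝ, uy = 1 - (1 - π) * y := ⟨_, rfl⟩
    have huyπ : π ≤ uy := by rw [huydef]; exact (hu_mem y hymem).1
    have huy0 : 0 < uy := lt_of_lt_of_le hπ0 huyπ
    have hyrep : y = (1 - uy) / (1 - π) := by
      rw [huydef, eq_div_iff hσ.ne']
      ring
    have hfixuy : A + B / (A + B / uy ^ r) ^ r = uy := by
      have h1 := hgg y hymem
      rw [hyfix] at h1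
      rw [← huydef] at h1
      rw [eq_div_iff hσ.ne'] at h1
      linear_combination h1 - huydef
    obtain ⟨v, hvdef⟩ : ∃ v : ℝ, v = A + B / uy ^ r := ⟨_, rfl⟩
    have hv0 : 0 < v := by
      rw [hvdef]
      exact add_pos hA (div_pos hB (pow_pos huy0 r))
    have hfa : A + B / uy ^ r = v := hvdef.symm
    have hfb : A + B / v ^ r = uy := by rw [hvdef]; exact hfixuy
    have hvne : v ≠ uy := by
      intro he
      apply hgy
      have h1 := keyx y (hden y hymem)
      rw [← huydef, ← hvdef, he] at h1
      rw [h1, ← hyrep]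
    have hφanti : ∀ s t : ℝ, 0 < s → s < t → A + B / t ^ r < A + B / s ^ r := by
      intro s t hs hst
      have h1 : B / t ^ r < B / s ^ r :=
        div_lt_div_of_pos_left hB (pow_pos hs r) (pow_lt_pow_left₀ hst hs.le (by omega))
      linarith
    have hcontr : A ^ (r + 1) * (r : ℝ) ^ r < ((r : ℝ) - 1) ^ (r + 1) * B := by
      rcases lt_or_gt_of_ne hvne with hlt | hgt
      · -- v < uy : cycle (v, uy)
        have h1 : v < ub := by
          by_contra hcon
          push_neg at hcon
          rcases eq_or_lt_of_le hcon with he | hlt2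
          · rw [← he] at hfb
            linarith [hfb, hubfix, he, hlt]
          · have h2 := hφanti ub v hub0 hlt2
            rw [hfb, hubfix] at h2
            linarith
        have h2 : ub < uy := by
          by_contra hcon
          push_neg at hcon
          rcases eq_or_lt_of_le hcon with he | hlt2
          · rw [he] at hfa
            linarith [hfa, hubfix, he, hlt]
          · have h3 := hφanti uy ub huy0 hlt2
            rw [hubfix, hfa] at h3
            linarith
        exact nbu_cycle_forces r hr A B hA hB hv0 h1 h2 hfb hfa hubfix
      · -- uy < v : cycle (uy, v)
        have h1 : uy < ub := by
          by_contra hcon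
          push_neg at hcon
          rcases eq_or_lt_of_le hcon with he | hlt2
          · rw [← he] at hfa
            linarith [hfa, hubfix, he, hgt]
          · have h2 := hφanti ub uy hub0 hlt2
            rw [hfa, hubfix] at h2
            linarith
        have h2 : ub < v := by
          by_contra hcon
          push_neg at hcon
          rcases eq_or_lt_of_le hcon with he | hlt2
          · rw [he] at hfb
            linarith [hfb, hubfix, he, hgt]
          · have h3 := hφanti v ub hv0 hlt2
            rw [hubfix, hfb] at h3
            linarith
        exact nbu_cycle_forces r hr A B hA hB huy0 h1 h2 hfa hfb hubfix
    linarith [hineq, eA, eB, hcontr]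
end

section
/- For all such parameters π, p, q, the composition g∘g has exactly one fixed point in the interval [0,1]. -/
/-- Geometric(π) case: g∘g always has exactly one fixed point in [0,1]. -/
theorem geometric_unique_fixed_point
    (π p q : ℝ) (hπ0 : 0 < π) (hπ1 : π ≤ 1)
    (hp : 0 ≤ p) (hq : 0 ≤ q) (hpq0 : 0 < p + q) (hpq1 : p + q < 1)
    (g : ℝ → ℝ) (hg : ∀ x, g x = (1 - q) - (1 - p - q) * (π / (1 - (1 - π) * x))) :
    ∃! x, x ∈ Set.Icc (0 : ℝ) 1 ∧ (g ∘ g) x = x := by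
  have hb : 0 < 1 - p - q := by linarith
  have hq1 : 0 < 1 - q := by linarith
  have hd0 : 0 ≤ 1 - π := by linarith
  have hd1 : 1 - π < 1 := by linarith
  have hD : ∀ x ∈ Set.Icc (0:ℝ) 1, 0 < 1 - (1 - π) * x := by
    rintro x ⟨h0, h1⟩; nlinarith
  -- key cleared-denominator equation on [0,1]
  have heq : ∀ x ∈ Set.Icc (0:ℝ) 1,
      (1 - q - g x) * (1 - (1 - π) * x) = (1 - p - q) * π := by
    intro x hx
    have hDx := hD x hx
    rw [hg x]
    field_simp
    ring
  -- g maps [0,1] into [0,1]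
  have hmap : ∀ x ∈ Set.Icc (0:ℝ) 1, g x ∈ Set.Icc (0:ℝ) 1 := by
    intro x hx
    have hDx := hD x hx
    have hDπ : π ≤ 1 - (1 - π) * x := by nlinarith [hx.1, hx.2]
    have hE := heq x hx
    constructor
    · nlinarith
    · nlinarith
  -- any fixed point of g∘g in [0,1] is a fixed point of g
  have hfix : ∀ y ∈ Set.Icc (0:ℝ) 1, g (g y) = y → g y = y := by
    intro y hy hgy
    have hz := hmap y hy
    have e1 := heq y hy
    have e2 := heq (g y) hz
    rw [hgy] at e2
    have key : (y - g y) * (1 - (1 - q) * (1 - π)) = 0 := by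
      linear_combination e1 - e2
    have hpos : 0 < 1 - (1 - q) * (1 - π) := by nlinarith
    rcases mul_eq_zero.mp key with h | h
    · linarith
    · linarith
  -- uniqueness of g-fixed points in [0,1]
  have huniq : ∀ y ∈ Set.Icc (0:ℝ) 1, ∀ z ∈ Set.Icc (0:ℝ) 1,
      g y = y → g z = z → y = z := by
    intro y hy z hz hgy hgz
    have e1 := heq y hy; rw [hgy] at e1
    have e2 := heq z hz; rw [hgz] at e2
    have hDy := hD y hy
    have hDz := hD z hz
    have hya : y < 1 - q := by nlinarith
    have key : (y - z) * ((1 - π) * (y + z) - (1 - q) * (1 - π) - 1) = 0 := by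
      linear_combination e1 - e2
    have h1 : (1 - π) * z ≤ (1 - π) * 1 := mul_le_mul_of_nonneg_left hz.2 hd0
    have h2 : (1 - π) * (y - (1 - q)) ≤ 0 :=
      mul_nonpos_of_nonneg_of_nonpos hd0 (by linarith)
    have hneg : (1 - π) * (y + z) - (1 - q) * (1 - π) - 1 < 0 := by nlinarith
    rcases mul_eq_zero.mp key with h | h
    · linarith
    · linarith
  -- existence of a g-fixed point by IVT
  have hgF : g = fun x : ℝ => (1 - q) - (1 - p - q) * (π / (1 - (1 - π) * x)) :=
    funext hg
  have hcont : ContinuousOn (fun x => g x - x) (Set.Icc (0:ℝ) 1) := by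
    rw [hgF]
    apply ContinuousOn.sub _ continuousOn_id
    apply ContinuousOn.sub continuousOn_const
    apply ContinuousOn.mul continuousOn_const
    exact ContinuousOn.div continuousOn_const (by fun_prop)
      (fun x hx => (hD x hx).ne')
  have hval1 : g 1 - 1 ≤ 0 := by
    rw [hg 1]
    have h : 1 - (1 - π) * (1:ℝ) = π := by ring
    rw [h, div_self hπ0.ne']
    linarith
  have hval0 : 0 ≤ g 0 - 0 := by
    rw [hg 0]
    have h : 1 - (1 - π) * (0:ℝ) = 1 := by ring
    rw [h, div_one]
    nlinarith
  have hmem : (0:ℝ) ∈ Set.Icc ((fun x => g x - x) 1) ((fun x => g x - x) 0) :=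
    ⟨hval1, hval0⟩
  obtain ⟨c, hc, hfc⟩ :=
    intermediate_value_Icc' (by norm_num : (0:ℝ) ≤ 1) hcont hmem
  have hgc : g c = c := by
    have : g c - c = 0 := hfc
    linarith
  refine ⟨c, ⟨hc, ?_⟩, ?_⟩
  · simp [Function.comp, hgc]
  · rintro y ⟨hy, hyy⟩
    have h1 : g y = y := hfix y hy (by simpa [Function.comp] using hyy)
    exact huniq y hy c hc h1 hgc
end

section
/- The composition g∘g has exactly one fixed point in the interval [0,1] if and only if (1−p−q)·π·(π(1−q) + p(1−π))^{d−1} ≤ (d+1)^{d−1}/d^d. -/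
set_option maxHeartbeats 1000000

open Finset Set

-- AM-GM-ish lemma: ∑_{i<d} x^i > d * r^{d-1} where r = sqrt x
lemma sqsum_lemma (d : ℕ) (hd : 2 ≤ d) (r : ℝ) (hr0 : 0 ≤ r) (hr1 : r < 1) :
    (d : ℝ) * r ^ (d - 1) < ∑ i ∈ range d, (r ^ 2) ^ i := by
  have hterm : ∀ i ∈ range d, ((r ^ 2) ^ i + (r ^ 2) ^ (d - 1 - i)) - 2 * r ^ (d - 1)
      = (r ^ i - r ^ (d - 1 - i)) ^ 2 := by
    intro i hi
    rw [Finset.mem_range] at hi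
    have h1 : (r ^ 2) ^ i = (r ^ i) ^ 2 := by rw [← pow_mul, ← pow_mul, Nat.mul_comm]
    have h2 : (r ^ 2) ^ (d - 1 - i) = (r ^ (d - 1 - i)) ^ 2 := by
      rw [← pow_mul, ← pow_mul, Nat.mul_comm]
    have h3 : r ^ i * r ^ (d - 1 - i) = r ^ (d - 1) := by
      rw [← pow_add]; congr 1; omega
    rw [h1, h2, ← h3]; ring
  have hsum := Finset.sum_congr rfl hterm
  have hreflect : ∑ i ∈ range d, (r ^ 2) ^ (d - 1 - i) = ∑ i ∈ range d, (r ^ 2) ^ i :=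
    Finset.sum_range_reflect (fun i => (r ^ 2) ^ i) d
  have hpos : (1 - r ^ (d - 1)) ^ 2 ≤ ∑ i ∈ range d, (r ^ i - r ^ (d - 1 - i)) ^ 2 := by
    have h0 : (r ^ 0 - r ^ (d - 1 - 0)) ^ 2 = (1 - r ^ (d - 1)) ^ 2 := by norm_num
    calc (1 - r ^ (d - 1)) ^ 2 = (r ^ 0 - r ^ (d - 1 - 0)) ^ 2 := h0.symm
      _ ≤ ∑ i ∈ range d, (r ^ i - r ^ (d - 1 - i)) ^ 2 :=
        Finset.single_le_sum (f := fun i => (r ^ i - r ^ (d - 1 - i)) ^ 2)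
          (fun i _ => sq_nonneg _) (Finset.mem_range.2 (by omega : 0 < d))
  have hlt : r ^ (d - 1) < 1 := pow_lt_one₀ hr0 hr1 (by omega)
  have hsq : 0 < (1 - r ^ (d - 1)) ^ 2 := by
    have : 0 < 1 - r ^ (d - 1) := by linarith
    positivity
  have hexp : ∑ i ∈ range d, (((r ^ 2) ^ i + (r ^ 2) ^ (d - 1 - i)) - 2 * r ^ (d - 1))
      = 2 * (∑ i ∈ range d, (r ^ 2) ^ i) - 2 * (d : ℝ) * r ^ (d - 1) := by
    rw [Finset.sum_sub_distrib, Finset.sum_add_distrib, hreflect, Finset.sum_const,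
      card_range, nsmul_eq_mul]
    ring
  nlinarith [hsum, hexp, hpos, hsq]

lemma Dpos (d : ℕ) (hd : 2 ≤ d) (x : ℝ) (hx0 : 0 < x) (hx1 : x < 1) :
    0 < (1 - x ^ d) ^ 2 - (d : ℝ) ^ 2 * x ^ (d - 1) * (1 - x) ^ 2 := by
  set r := Real.sqrt x with hr
  have hr0 : 0 < r := Real.sqrt_pos.2 hx0
  have hr2 : r ^ 2 = x := Real.sq_sqrt hx0.le
  have hr1 : r < 1 := by nlinarith [hr2]
  have hG := sqsum_lemma d hd r hr0.le hr1
  set G : ℝ := ∑ i ∈ range d, (r ^ 2) ^ i with hGdef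
  have hG1 : (1:ℝ) ≤ G := by
    calc (1:ℝ) = (r ^ 2) ^ 0 := by norm_num
      _ ≤ G := Finset.single_le_sum (f := fun i => (r ^ 2) ^ i)
          (fun i _ => by positivity) (Finset.mem_range.2 (by omega : 0 < d))
  have hgeom : G * (x - 1) = x ^ d - 1 := by
    have h := geom_sum_mul (r ^ 2) d
    rw [hr2] at h
    rw [hGdef, hr2]
    exact h
  have hxd1 : x ^ (d - 1) = (r ^ (d - 1)) ^ 2 := by
    rw [← hr2, ← pow_mul, ← pow_mul, Nat.mul_comm]
  have hfac : (1 - x ^ d) ^ 2 - (d : ℝ) ^ 2 * x ^ (d - 1) * (1 - x) ^ 2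
      = (1 - x) ^ 2 * ((G - (d:ℝ) * r ^ (d - 1)) * (G + (d:ℝ) * r ^ (d - 1))) := by
    have h1 : 1 - x ^ d = G * (1 - x) := by linarith [hgeom]
    rw [h1, hxd1]; ring
  rw [hfac]
  have h2 : 0 < G - (d:ℝ) * r ^ (d - 1) := by linarith
  have h3 : 0 < G + (d:ℝ) * r ^ (d - 1) := by positivity
  have h4 : 0 < (1 - x) ^ 2 := by
    have : 0 < 1 - x := by linarith
    positivity
  positivity

lemma key1 (d : ℕ) (hd : 2 ≤ d) (t : ℝ) (ht0 : 0 ≤ t) (ht1 : t < 1) :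
    ((d : ℝ) + 1) ^ (d - 1) * (∑ i ∈ range d, t ^ i) ^ d
      < (d : ℝ) ^ d * (∑ i ∈ range (d + 1), t ^ i) ^ (d - 1) := by
  set S : ℝ → ℝ := fun u => ∑ i ∈ range d, u ^ i with hSdef
  set T : ℝ → ℝ := fun u => ∑ i ∈ range (d + 1), u ^ i with hTdef
  have hS1 : ∀ u : ℝ, 0 ≤ u → 1 ≤ S u := by
    intro u hu
    calc (1:ℝ) = u ^ 0 := by norm_num
      _ ≤ S u := Finset.single_le_sum (f := fun i => u ^ i)
          (fun i _ => pow_nonneg hu i) (Finset.mem_range.2 (by omega : 0 < d))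
  have hT1 : ∀ u : ℝ, 0 ≤ u → 1 ≤ T u := by
    intro u hu
    calc (1:ℝ) = u ^ 0 := by norm_num
      _ ≤ T u := Finset.single_le_sum (f := fun i => u ^ i)
          (fun i _ => pow_nonneg hu i) (Finset.mem_range.2 (by omega : 0 < d + 1))
  have hScont : Continuous S := continuous_finset_sum _ (fun i _ => continuous_pow i)
  have hTcont : Continuous T := continuous_finset_sum _ (fun i _ => continuous_pow i)
  set h : ℝ → ℝ := fun u => T u ^ (d - 1) / S u ^ d with hhdef
  have hcont : ContinuousOn h (Icc (0:ℝ) 1) := by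
    apply ContinuousOn.div ((hTcont.pow (d-1)).continuousOn) ((hScont.pow d).continuousOn)
    intro u hu
    have := hS1 u hu.1
    exact pow_ne_zero _ (ne_of_gt (by linarith))
  have hderiv : ∀ x ∈ Ioo (0:ℝ) 1, deriv h x < 0 := by
    intro x hx
    obtain ⟨hx0, hx1⟩ := hx
    have hxne : x ≠ 1 := ne_of_lt hx1
    have hxm : x - 1 ≠ 0 := sub_ne_zero.2 hxne
    set a : ℝ := x ^ (d - 1) with hadef
    have hxd : x ^ d = a * x := by
      show x ^ d = x ^ (d - 1) * x
      rw [← pow_succ]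
      congr 1
      omega
    have hxd1 : x ^ (d + 1) = a * x ^ 2 := by
      rw [pow_succ, hxd]; ring
    -- closed forms
    have hSx : S x = (a * x - 1) / (x - 1) := by
      rw [hSdef]; simp only []
      rw [geom_sum_eq hxne d, hxd]
    have hTx : T x = (a * x ^ 2 - 1) / (x - 1) := by
      rw [hTdef]; simp only []
      rw [geom_sum_eq hxne (d+1), hxd1]
    -- derivatives of closed forms
    have hfS : HasDerivAt (fun u : ℝ => (u ^ d - 1) / (u - 1))
        (((d:ℝ) * x ^ (d-1) * (x - 1) - (x ^ d - 1) * 1) / (x - 1) ^ 2) x := by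
      exact HasDerivAt.div ((hasDerivAt_pow d x).sub_const 1)
        ((hasDerivAt_id x).sub_const 1) hxm
    have hfT : HasDerivAt (fun u : ℝ => (u ^ (d+1) - 1) / (u - 1))
        ((((d:ℝ)+1) * x ^ d * (x - 1) - (x ^ (d+1) - 1) * 1) / (x - 1) ^ 2) x := by
      have h1 := HasDerivAt.div ((hasDerivAt_pow (d+1) x).sub_const 1)
        ((hasDerivAt_id x).sub_const 1) hxm
      simp only [Nat.cast_add, Nat.cast_one, Nat.add_sub_cancel] at h1
      exact h1
    -- transfer to S and T
    have hev : ∀ᶠ u in nhds x, u ≠ 1 := eventually_ne_nhds hxne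
    have hSev : S =ᶠ[nhds x] (fun u : ℝ => (u ^ d - 1) / (u - 1)) := by
      filter_upwards [hev] with u hu
      rw [hSdef]; simp only []; rw [geom_sum_eq hu d]
    have hTev : T =ᶠ[nhds x] (fun u : ℝ => (u ^ (d+1) - 1) / (u - 1)) := by
      filter_upwards [hev] with u hu
      rw [hTdef]; simp only []; rw [geom_sum_eq hu (d+1)]
    set S' : ℝ := ((d:ℝ) * a * (x - 1) - (a * x - 1)) / (x - 1) ^ 2 with hS'def
    set T' : ℝ := (((d:ℝ)+1) * a * x * (x - 1) - (a * x ^ 2 - 1)) / (x - 1) ^ 2 with hT'def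
    have hS'eq : (((d:ℝ) * x ^ (d-1) * (x - 1) - (x ^ d - 1) * 1) / (x - 1) ^ 2) = S' := by
      rw [hS'def, ← hadef, hxd]; ring
    have hT'eq : ((((d:ℝ)+1) * x ^ d * (x - 1) - (x ^ (d+1) - 1) * 1) / (x - 1) ^ 2) = T' := by
      rw [hT'def, hxd, hxd1]; ring
    have hSD : HasDerivAt S S' x := hS'eq ▸ (hfS.congr_of_eventuallyEq hSev)
    have hTD : HasDerivAt T T' x := hT'eq ▸ (hfT.congr_of_eventuallyEq hTev)
    -- derivative of h
    have hSxpos : 0 < S x := lt_of_lt_of_le one_pos (hS1 x hx0.le)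
    have hTxpos : 0 < T x := lt_of_lt_of_le one_pos (hT1 x hx0.le)
    have hSdne : S x ^ d ≠ 0 := pow_ne_zero _ hSxpos.ne'
    have hhD : HasDerivAt h
        ((((d:ℝ)-1) * T x ^ (d - 1 - 1) * T' * S x ^ d
          - T x ^ (d-1) * ((d:ℝ) * S x ^ (d - 1) * S')) / (S x ^ d) ^ 2) x := by
      have h1 := HasDerivAt.div (hTD.pow (d-1)) (hSD.pow d) hSdne
      have hc : ((d - 1 : ℕ) : ℝ) = (d : ℝ) - 1 := by
        rw [Nat.cast_sub (by omega : 1 ≤ d), Nat.cast_one]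
      rw [hc] at h1
      exact h1
    rw [hhD.deriv]
    apply div_neg_of_neg_of_pos
    · -- numerator negative
      have hfact : (((d:ℝ)-1) * T x ^ (d - 1 - 1) * T' * S x ^ d
          - T x ^ (d-1) * ((d:ℝ) * S x ^ (d - 1) * S'))
          = S x ^ (d-1) * T x ^ (d-2) * (((d:ℝ)-1) * T' * S x - (d:ℝ) * S' * T x) := by
        rw [show S x ^ d = S x ^ (d-1) * S x by
            rw [← pow_succ, show (d-1)+1 = d by omega],
          show T x ^ (d-1) = T x ^ (d-2) * T x by
            rw [← pow_succ, show (d-2)+1 = d-1 by omega],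
          show d - 1 - 1 = d - 2 by omega]
        ring
      rw [hfact]
      have hW : (d:ℝ) * S' * T x - ((d:ℝ)-1) * T' * S x
          = ((1 - a * x) ^ 2 - (d:ℝ) ^ 2 * a * (1 - x) ^ 2) / (1 - x) ^ 3 := by
        rw [hSx, hTx, hS'def, hT'def]
        have h1x : (1:ℝ) - x ≠ 0 := by intro hcon; apply hxm; linarith
        field_simp
        ring
      have hDp : 0 < (1 - a * x) ^ 2 - (d:ℝ) ^ 2 * a * (1 - x) ^ 2 := by
        have := Dpos d hd x hx0 hx1
        rw [hadef, ← hxd]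
        linarith
      have h1xp : (0:ℝ) < (1 - x) ^ 3 := by
        have : (0:ℝ) < 1 - x := by linarith
        positivity
      have hWpos : 0 < (d:ℝ) * S' * T x - ((d:ℝ)-1) * T' * S x := by
        rw [hW]; positivity
      have hSp : (0:ℝ) < S x ^ (d-1) := pow_pos hSxpos _
      have hTp : (0:ℝ) < T x ^ (d-2) := pow_pos hTxpos _
      nlinarith [mul_pos hSp hTp]
    · exact pow_pos (pow_pos hSxpos _) _
  have hanti : StrictAntiOn h (Icc (0:ℝ) 1) := by
    apply strictAntiOn_of_deriv_neg (convex_Icc 0 1) hcont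
    intro x hx
    rw [interior_Icc] at hx
    exact hderiv x hx
  have hmem_t : t ∈ Icc (0:ℝ) 1 := ⟨ht0, ht1.le⟩
  have hmem_1 : (1:ℝ) ∈ Icc (0:ℝ) 1 := ⟨zero_le_one, le_refl 1⟩
  have hlt := hanti hmem_t hmem_1 ht1
  -- h 1 = (d+1)^(d-1) / d^d
  have hS1v : S 1 = (d : ℝ) := by
    rw [hSdef]; simp
  have hT1v : T 1 = (d : ℝ) + 1 := by
    rw [hTdef]; simp
  rw [hhdef] at hlt
  simp only [] at hlt
  rw [hS1v, hT1v] at hlt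
  -- hlt : (d+1)^(d-1) / d^d < T t ^(d-1) / S t ^ d
  have hdpos : (0:ℝ) < (d:ℝ) ^ d := by positivity
  have hStpos : (0:ℝ) < S t ^ d := by
    have := hS1 t ht0; positivity
  rw [div_lt_div_iff₀ hdpos hStpos] at hlt
  calc ((d : ℝ) + 1) ^ (d - 1) * S t ^ d < T t ^ (d-1) * (d:ℝ) ^ d := hlt
    _ = (d : ℝ) ^ d * T t ^ (d - 1) := by ring

lemma key2 (d : ℕ) (hd : 2 ≤ d) (z y : ℝ) (hz : 0 ≤ z) (hzy : z < y) :
    ((d : ℝ) + 1) ^ (d - 1) * (∑ i ∈ range d, y ^ i * z ^ (d - 1 - i)) ^ d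
      < (d : ℝ) ^ d * (∑ i ∈ range (d + 1), y ^ i * z ^ (d - i)) ^ (d - 1) := by
  have hy : 0 < y := lt_of_le_of_lt hz hzy
  set t := z / y with htdef
  have ht0 : 0 ≤ t := div_nonneg hz hy.le
  have ht1 : t < 1 := (div_lt_one hy).2 hzy
  have hzt : z = t * y := by rw [htdef]; field_simp
  have hsum1 : ∑ i ∈ range d, y ^ i * z ^ (d - 1 - i)
      = y ^ (d - 1) * ∑ i ∈ range d, t ^ i := by
    rw [Finset.mul_sum]
    rw [← Finset.sum_range_reflect (fun i => y ^ (d-1) * t ^ i) d]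
    apply Finset.sum_congr rfl
    intro i hi
    rw [Finset.mem_range] at hi
    calc y ^ i * z ^ (d - 1 - i) = t ^ (d - 1 - i) * (y ^ i * y ^ (d - 1 - i)) := by
          rw [hzt, mul_pow]; ring
      _ = y ^ (d - 1) * t ^ (d - 1 - i) := by
          rw [← pow_add, show i + (d - 1 - i) = d - 1 by omega]; ring
  have hsum2 : ∑ i ∈ range (d + 1), y ^ i * z ^ (d - i)
      = y ^ d * ∑ i ∈ range (d + 1), t ^ i := by
    rw [Finset.mul_sum]
    rw [← Finset.sum_range_reflect (fun i => y ^ d * t ^ i) (d + 1)]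
    apply Finset.sum_congr rfl
    intro i hi
    rw [Finset.mem_range] at hi
    rw [show d + 1 - 1 - i = d - i by omega]
    calc y ^ i * z ^ (d - i) = t ^ (d - i) * (y ^ i * y ^ (d - i)) := by
          rw [hzt, mul_pow]; ring
      _ = y ^ d * t ^ (d - i) := by
          rw [← pow_add, show i + (d - i) = d by omega]; ring
  rw [hsum1, hsum2, mul_pow, mul_pow, ← pow_mul, ← pow_mul]
  rw [show (d - 1) * d = d * (d - 1) by ring]
  have hyp : (0:ℝ) < y ^ (d * (d - 1)) := by positivity
  have hk := key1 d hd t ht0 ht1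
  calc ((d : ℝ) + 1) ^ (d - 1) * (y ^ (d * (d-1)) * (∑ i ∈ range d, t ^ i) ^ d)
      = y ^ (d * (d-1)) * (((d : ℝ) + 1) ^ (d - 1) * (∑ i ∈ range d, t ^ i) ^ d) := by ring
    _ < y ^ (d * (d-1)) * ((d : ℝ) ^ d * (∑ i ∈ range (d + 1), t ^ i) ^ (d - 1)) :=
        (mul_lt_mul_iff_right₀ hyp).2 hk
    _ = (d : ℝ) ^ d * (y ^ (d * (d-1)) * (∑ i ∈ range (d + 1), t ^ i) ^ (d - 1)) := by ring

lemma pow_add_lb (d : ℕ) (hd : 2 ≤ d) (z u : ℝ) (hz : 0 ≤ z) (hu : 0 ≤ u) :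
    z ^ d + (d : ℝ) * z ^ (d - 1) * u ≤ (z + u) ^ d := by
  rcases eq_or_lt_of_le hz with hz0 | hz0
  · rw [← hz0]
    rw [zero_pow (by omega : d ≠ 0), zero_pow (by omega : d - 1 ≠ 0)]
    simpa using pow_nonneg hu d
  · have hdiv : (0:ℝ) ≤ u / z := div_nonneg hu hz0.le
    have h1 : 1 + (d:ℝ) * (u / z) ≤ (1 + u / z) ^ d :=
      one_add_mul_le_pow (by linarith : (-2:ℝ) ≤ u / z) d
    have h2 : z ^ d * (1 + (d:ℝ) * (u / z)) ≤ z ^ d * (1 + u / z) ^ d := by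
      apply mul_le_mul_of_nonneg_left h1 (by positivity)
    have h3 : z ^ d * (1 + u / z) ^ d = (z + u) ^ d := by
      rw [← mul_pow]
      congr 1
      field_simp
    have h4 : z ^ d * (1 + (d:ℝ) * (u / z)) = z ^ d + (d:ℝ) * z ^ (d - 1) * u := by
      have hzd : z ^ d = z ^ (d - 1) * z := by
        rw [← pow_succ]; congr 1; omega
      field_simp [hzd]
      rw [hzd]; ring
    rw [h4, h3] at h2
    exact h2

lemma cycle_implies (d : ℕ) (hd : 2 ≤ d) (b c zz yy : ℝ) (hb : 0 < b)
    (hzz : 0 ≤ zz) (hlt : zz < yy)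
    (h1 : b * zz ^ d + yy = c) (h2 : b * yy ^ d + zz = c) :
    ((d:ℝ)+1) ^ (d-1) / (d:ℝ) ^ d < b * c ^ (d-1) := by
  have hyy : 0 < yy := lt_of_le_of_lt hzz hlt
  set SS : ℝ := ∑ i ∈ range d, yy ^ i * zz ^ (d - 1 - i) with hSSdef
  set TT : ℝ := ∑ i ∈ range (d + 1), yy ^ i * zz ^ (d - i) with hTTdef
  have hgs : SS * (yy - zz) = yy ^ d - zz ^ d := geom_sum₂_mul yy zz d
  have hSpos : 0 < SS := by
    have hterm : yy ^ (d-1) * zz ^ (d - 1 - (d-1)) = yy ^ (d-1) := by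
      rw [show d - 1 - (d-1) = 0 by omega, pow_zero, mul_one]
    have hle : yy ^ (d-1) * zz ^ (d - 1 - (d-1)) ≤ SS :=
      Finset.single_le_sum (f := fun i => yy ^ i * zz ^ (d - 1 - i))
        (fun i _ => mul_nonneg (pow_nonneg hyy.le i) (pow_nonneg hzz _))
        (Finset.mem_range.2 (by omega : d - 1 < d))
    have : (0:ℝ) < yy ^ (d-1) := pow_pos hyy _
    linarith [hterm ▸ hle]
  have hbS : b * SS = 1 := by
    have h3 : b * (SS * (yy - zz)) = yy - zz := by rw [hgs]; linarith
    have h4 : (b * SS - 1) * (yy - zz) = 0 := by linarith [h3]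
    rcases mul_eq_zero.1 h4 with h5 | h5
    · linarith
    · exfalso; linarith
  have hTT : TT = zz ^ d + yy * SS := by
    rw [hTTdef, Finset.sum_range_succ', Finset.mul_sum]
    have : ∀ i ∈ range d, yy ^ (i+1) * zz ^ (d - (i+1)) = yy * (yy ^ i * zz ^ (d - 1 - i)) := by
      intro i hi
      rw [show d - (i+1) = d - 1 - i by omega, pow_succ]
      ring
    rw [Finset.sum_congr rfl this]
    simp [add_comm]
  have hcS : c * SS = TT := by
    calc c * SS = (b * zz ^ d + yy) * SS := by rw [h1]
      _ = zz ^ d * (b * SS) + yy * SS := by ring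
      _ = TT := by rw [hbS, hTT]; ring
  have hk := key2 d hd zz yy hzz hlt
  rw [← hSSdef, ← hTTdef] at hk
  have hTT2 : TT ^ (d-1) = c ^ (d-1) * SS ^ (d-1) := by rw [← hcS, mul_pow]
  have hSd : SS ^ d = SS ^ (d-1) * SS := by rw [← pow_succ]; congr 1; omega
  rw [hTT2, hSd] at hk
  have hSd1pos : (0:ℝ) < SS ^ (d-1) := pow_pos hSpos _
  have h5 : ((d:ℝ)+1) ^ (d-1) * SS < (d:ℝ) ^ d * c ^ (d-1) := by
    have h6 : (((d:ℝ)+1) ^ (d-1) * SS) * SS ^ (d-1) < ((d:ℝ) ^ d * c ^ (d-1)) * SS ^ (d-1) := by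
      nlinarith [hk]
    exact (mul_lt_mul_iff_left₀ hSd1pos).1 h6
  have h7 : ((d:ℝ)+1) ^ (d-1) * (b * SS) < (d:ℝ) ^ d * (b * c ^ (d-1)) := by nlinarith [h5, hb]
  rw [hbS, mul_one] at h7
  have hdpow : (0:ℝ) < (d:ℝ) ^ d := by
    have : (0:ℝ) < (d:ℝ) := by exact_mod_cast (by omega : 0 < d)
    positivity
  rw [div_lt_iff₀ hdpow]
  linarith [h7]

/-- offspring distribution supported on {0,d}: g∘g has exactly one fixed point
in [0,1] iff (1−p−q)·π·(π(1−q)+p(1−π))^{d−1} ≤ (d+1)^{d−1}/d^d. -/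
theorem zero_d_unique_fixed_point_iff
    (d : ℕ) (hd : 2 ≤ d) (π p q : ℝ) (hπ0 : 0 < π) (hπ1 : π < 1)
    (hp : 0 ≤ p) (hq : 0 ≤ q) (hpq0 : 0 < p + q) (hpq1 : p + q < 1)
    (g : ℝ → ℝ) (hg : ∀ x, g x = (1 - q) - (1 - p - q) * ((1 - π) + π * x ^ d)) :
    (∃! x, x ∈ Set.Icc (0 : ℝ) 1 ∧ (g ∘ g) x = x) ↔
      (1 - p - q) * π * (π * (1 - q) + p * (1 - π)) ^ (d - 1) ≤
        ((d : ℝ) + 1) ^ (d - 1) / (d : ℝ) ^ d := by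
  have hd0 : d ≠ 0 := by omega
  have hdR : (0:ℝ) < (d:ℝ) := by exact_mod_cast (by omega : 0 < d)
  set a : ℝ := 1 - p - q with hadef
  have ha0 : 0 < a := by rw [hadef]; linarith
  have ha1 : a < 1 := by rw [hadef]; linarith
  set b : ℝ := a * π with hbdef
  have hb0 : 0 < b := mul_pos ha0 hπ0
  have hb1 : b < 1 := by rw [hbdef]; nlinarith
  set c : ℝ := p + b with hcdef
  have hc0 : 0 < c := by rw [hcdef]; linarith
  have hc1 : c < 1 := by rw [hcdef, hbdef]; nlinarith
  have hgc : ∀ x : ℝ, g x = c - b * x ^ d := by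
    intro x; rw [hg, hcdef, hbdef, hadef]; ring
  have hRHSeq : (1 - p - q) * π * (π * (1 - q) + p * (1 - π)) ^ (d - 1)
      = b * c ^ (d - 1) := by
    rw [show π * (1 - q) + p * (1 - π) = c by rw [hcdef, hbdef, hadef]; ring,
      hbdef, hadef]
  rw [hRHSeq]
  -- g maps [0,1] into [0,1]
  have hmaps : ∀ x : ℝ, 0 ≤ x → x ≤ 1 → 0 ≤ g x ∧ g x ≤ 1 := by
    intro x h0 h1
    rw [hgc]
    have hxd0 : 0 ≤ x ^ d := pow_nonneg h0 d
    have hxd1 : x ^ d ≤ 1 := pow_le_one₀ h0 h1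
    constructor
    · nlinarith
    · nlinarith
  -- fixed point of g
  obtain ⟨x₀, hx₀mem, hx₀eq⟩ : ∃ x₀ ∈ Ioo (0:ℝ) 1, x₀ + b * x₀ ^ d = c := by
    have hcont : ContinuousOn (fun x : ℝ => x + b * x ^ d) (Icc 0 1) := by
      apply Continuous.continuousOn; continuity
    have hsub := intermediate_value_Ioo (zero_le_one) hcont
    have h00 : (0:ℝ) + b * 0 ^ d = 0 := by rw [zero_pow hd0]; ring
    have h11 : (1:ℝ) + b * 1 ^ d = 1 + b := by norm_num
    have hcmem : c ∈ Ioo ((0:ℝ) + b * 0 ^ d) ((1:ℝ) + b * 1 ^ d) := by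
      rw [h00, h11]; exact ⟨hc0, by linarith⟩
    obtain ⟨x₀, hx₀, heq⟩ := hsub hcmem
    exact ⟨x₀, hx₀, heq⟩
  obtain ⟨hx₀0, hx₀1⟩ := hx₀mem
  have hgx₀ : g x₀ = x₀ := by rw [hgc]; linarith
  set s : ℝ := b * (d:ℝ) * x₀ ^ (d - 1) with hsdef
  have hs0 : 0 < s := by
    have := pow_pos hx₀0 (d-1); rw [hsdef]; positivity
  have hdpow : (0:ℝ) < (d:ℝ) ^ d := by positivity
  have hident : (d:ℝ) ^ d * (b * c ^ (d - 1)) = s * ((d:ℝ) + s) ^ (d - 1) := by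
    have hxd : x₀ ^ d = x₀ ^ (d-1) * x₀ := by rw [← pow_succ]; congr 1; omega
    have hc_eq : c = x₀ * (1 + b * x₀ ^ (d - 1)) := by rw [← hx₀eq, hxd]; ring
    have hdd : (d:ℝ) ^ d = (d:ℝ) ^ (d-1) * (d:ℝ) := by rw [← pow_succ]; congr 1; omega
    rw [hc_eq, mul_pow, hdd,
      show ((d:ℝ) + s) = (d:ℝ) * (1 + b * x₀ ^ (d-1)) by rw [hsdef]; ring, mul_pow]
    ring
  have hcond : (b * c ^ (d - 1) ≤ ((d:ℝ)+1) ^ (d-1) / (d:ℝ) ^ d) ↔ s ≤ 1 := by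
    rw [le_div_iff₀ hdpow]
    constructor
    · intro h
      by_contra hs
      push_neg at hs
      have hple : ((d:ℝ)+1) ^ (d-1) ≤ ((d:ℝ)+s) ^ (d-1) :=
        pow_le_pow_left₀ (by positivity) (by linarith) _
      have hpp : (0:ℝ) < ((d:ℝ)+1) ^ (d-1) := by positivity
      have h2 : ((d:ℝ)+1) ^ (d-1) < s * ((d:ℝ)+s) ^ (d-1) := by
        calc ((d:ℝ)+1) ^ (d-1) = 1 * ((d:ℝ)+1) ^ (d-1) := (one_mul _).symm
          _ < s * ((d:ℝ)+1) ^ (d-1) := mul_lt_mul_of_pos_right hs hpp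
          _ ≤ s * ((d:ℝ)+s) ^ (d-1) := mul_le_mul_of_nonneg_left hple hs0.le
      rw [← hident] at h2
      linarith
    · intro hs
      have h2 : s * ((d:ℝ)+s) ^ (d-1) ≤ 1 * ((d:ℝ)+1) ^ (d-1) :=
        mul_le_mul hs (pow_le_pow_left₀ (by positivity) (by linarith) _)
          (by positivity) zero_le_one
      rw [← hident, one_mul] at h2
      linarith
  rw [hcond]
  have hgcont : Continuous g := by
    have hgfun : g = fun x => c - b * x ^ d := funext hgc
    rw [hgfun]; continuity
  constructor
  · -- uniqueness ⇒ s ≤ 1 (contrapositive)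
    intro H
    by_contra hs
    push_neg at hs
    -- find u > 0 small
    have hkcont : ContinuousAt (fun u : ℝ => s * (b * (d:ℝ) * (x₀ - u) ^ (d-1))) 0 := by
      fun_prop
    have hk0gt : 1 < s * (b * (d:ℝ) * (x₀ - 0) ^ (d-1)) := by
      rw [sub_zero, ← hsdef]; nlinarith
    have hev1 : ∀ᶠ u in nhds (0:ℝ), 1 < s * (b * (d:ℝ) * (x₀ - u) ^ (d-1)) :=
      hkcont (Ioi_mem_nhds hk0gt)
    have hev2 : ∀ᶠ u in nhds (0:ℝ), u < x₀ := Iio_mem_nhds hx₀0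
    have hev3 : ∀ᶠ u in nhdsWithin (0:ℝ) (Ioi 0),
        (1 < s * (b * (d:ℝ) * (x₀ - u) ^ (d-1)) ∧ u < x₀) ∧ u ∈ Ioi (0:ℝ) :=
      Filter.Eventually.and ((hev1.and hev2).filter_mono nhdsWithin_le_nhds)
        self_mem_nhdsWithin
    obtain ⟨u, ⟨hku, hux⟩, hu0⟩ := hev3.exists
    have hu0' : (0:ℝ) < u := hu0
    set z : ℝ := x₀ - u with hzdef
    have hz0 : 0 < z := by rw [hzdef]; linarith
    have hzx : z < x₀ := by rw [hzdef]; linarith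
    set v : ℝ := b * (x₀ ^ d - z ^ d) with hvdef
    have hv0 : 0 < v := by
      have := pow_lt_pow_left₀ hzx hz0.le hd0
      rw [hvdef]; nlinarith
    have hgz : g z = x₀ + v := by rw [hgc, ← hx₀eq, hvdef]; ring
    have hv1 : b * ((d:ℝ) * z ^ (d-1) * u) ≤ v := by
      have hlb := pow_add_lb d hd z u hz0.le hu0'.le
      have hzu : z + u = x₀ := by rw [hzdef]; ring
      rw [hzu] at hlb
      rw [hvdef]; nlinarith
    have hggz : g (g z) ≤ x₀ - s * v := by
      rw [hgz, hgc, ← hx₀eq, hsdef]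
      have hlb := pow_add_lb d hd x₀ v hx₀0.le hv0.le
      nlinarith
    have hsv : u < s * v := by
      have h1 : u = 1 * u := (one_mul u).symm
      have h2 : 1 * u < (s * (b * (d:ℝ) * z ^ (d-1))) * u := by
        apply mul_lt_mul_of_pos_right _ hu0'
        rw [hzdef]; exact hku
      have h3 : (s * (b * (d:ℝ) * z ^ (d-1))) * u = s * (b * ((d:ℝ) * z ^ (d-1) * u)) := by
        ring
      have h4 : s * (b * ((d:ℝ) * z ^ (d-1) * u)) ≤ s * v :=
        mul_le_mul_of_nonneg_left hv1 hs0.le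
      linarith
    have hFz : g (g z) < z := by rw [hzdef]; linarith
    have hF0 : 0 < g (g 0) := by
      rw [hgc, hgc, zero_pow hd0, mul_zero, sub_zero]
      have hcd : c ^ d = c ^ (d-1) * c := by rw [← pow_succ]; congr 1; omega
      have hcle : c ^ (d-1) ≤ 1 := pow_le_one₀ hc0.le hc1.le
      have hcp : (0:ℝ) ≤ c ^ (d-1) := pow_nonneg hc0.le _
      have h1 : b * c ^ (d-1) < 1 := by nlinarith
      have h2 : b * c ^ d < c := by
        calc b * c ^ d = (b * c ^ (d-1)) * c := by rw [hcd]; ring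
          _ < 1 * c := mul_lt_mul_of_pos_right h1 hc0
          _ = c := one_mul c
      linarith
    have hFcont : ContinuousOn (fun x => g (g x) - x) (Icc 0 z) :=
      ((hgcont.comp hgcont).sub continuous_id).continuousOn
    have hsub := intermediate_value_Ioo' hz0.le hFcont
    have h0mem : (0:ℝ) ∈ Ioo (g (g z) - z) (g (g 0) - 0) := by
      constructor
      · linarith
      · simpa using hF0
    obtain ⟨z', hz'mem, hz'eq⟩ := hsub h0mem
    obtain ⟨hz'0, hz'z⟩ := hz'mem
    have hz'fix : g (g z') = z' := by
      have : g (g z') - z' = 0 := hz'eq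
      linarith
    obtain ⟨w, _, huniq⟩ := H
    have e1 : z' = w := huniq z' ⟨⟨hz'0.le, by linarith⟩,
      by simp only [Function.comp_apply]; exact hz'fix⟩
    have e2 : x₀ = w := huniq x₀ ⟨⟨hx₀0.le, hx₀1.le⟩,
      by simp only [Function.comp_apply]; rw [hgx₀, hgx₀]⟩
    rw [← e2] at e1
    linarith [e1 ▸ hz'z]
  · -- s ≤ 1 ⇒ uniqueness
    intro hs
    refine ⟨x₀, ⟨⟨hx₀0.le, hx₀1.le⟩, by simp only [Function.comp_apply]; rw [hgx₀, hgx₀]⟩, ?_⟩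
    rintro z ⟨⟨hz0, hz1⟩, hzfix⟩
    simp only [Function.comp_apply] at hzfix
    set w : ℝ := g z with hwdef
    obtain ⟨hw0, hw1⟩ := hmaps z hz0 hz1
    rw [← hwdef] at hw0 hw1
    have hgw : g w = z := hzfix
    have hMle : b * c ^ (d - 1) ≤ ((d:ℝ)+1) ^ (d-1) / (d:ℝ) ^ d := hcond.2 hs
    rcases lt_trichotomy z w with hlt | heq | hlt
    · exfalso
      have h1 : b * z ^ d + w = c := by
        have := hgc z; rw [← hwdef] at this; linarith
      have h2 : b * w ^ d + z = c := by
        have := hgc w; rw [hgw] at this; linarith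
      have := cycle_implies d hd b c z w hb0 hz0 hlt h1 h2
      linarith
    · -- w = z: z is a fixed point of g
      have hzc : z + b * z ^ d = c := by
        have := hgc z; rw [← hwdef, heq.symm] at this; linarith
      rcases lt_trichotomy z x₀ with h | h | h
      · exfalso
        have : z ^ d ≤ x₀ ^ d := pow_le_pow_left₀ hz0 h.le d
        nlinarith [hx₀eq, hzc]
      · exact h
      · exfalso
        have : x₀ ^ d ≤ z ^ d := pow_le_pow_left₀ hx₀0.le h.le d
        nlinarith [hx₀eq, hzc]
    · exfalso
      have h1 : b * w ^ d + z = c := by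
        have := hgc w; rw [hgw] at this; linarith
      have h2 : b * z ^ d + w = c := by
        have := hgc z; rw [← hwdef] at this; linarith
      have := cycle_implies d hd b c w z hb0 hw0 hlt h1 h2
      linarith
end

section
/- The composition g∘g has exactly one fixed point in the interval [0,1] if and only if (1−p−q)·(1−q)^{d−1} ≤ (d+1)^{d−1}/d^d. -/
private lemma pow_pred_mul (d : ℕ) (hd : 2 ≤ d) (s : ℝ) : s ^ d = s ^ (d-1) * s := by
  rw [← pow_succ]; congr 1; omega

private lemma aux_mono (d : ℕ) (hd : 2 ≤ d) {u v : ℝ} (hu : 0 ≤ u) (huv : u < v) :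
    u * (1 + u) ^ (d - 1) < v * (1 + v) ^ (d - 1) := by
  have h1 : (1 + u) ^ (d-1) ≤ (1 + v) ^ (d-1) :=
    pow_le_pow_left₀ (by linarith) (by linarith) _
  have h2 : (0:ℝ) < (1 + v) ^ (d-1) := pow_pos (by linarith) _
  calc u * (1+u)^(d-1) ≤ u * (1+v)^(d-1) := mul_le_mul_of_nonneg_left h1 hu
    _ < v * (1+v)^(d-1) := mul_lt_mul_of_pos_right huv h2

set_option maxHeartbeats 1000000 in
/-- d-regular tree case: g∘g has exactly one fixed point in [0,1] iff
(1−p−q)·(1−q)^{d−1} ≤ (d+1)^{d−1}/d^d. -/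
theorem regular_tree_unique_fixed_point_iff
    (d : ℕ) (hd : 2 ≤ d) (p q : ℝ)
    (hp : 0 ≤ p) (hq : 0 ≤ q) (hpq0 : 0 < p + q) (hpq1 : p + q < 1)
    (g : ℝ → ℝ) (hg : ∀ x, g x = (1 - q) - (1 - p - q) * x ^ d) :
    (∃! x, x ∈ Set.Icc (0 : ℝ) 1 ∧ (g ∘ g) x = x) ↔
      (1 - p - q) * (1 - q) ^ (d - 1) ≤ ((d : ℝ) + 1) ^ (d - 1) / (d : ℝ) ^ d := by
  have hgE : g = fun x => (1 - q) - (1 - p - q) * x ^ d := funext hg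
  subst hgE
  set a : ℝ := 1 - q with ha_def
  set c : ℝ := 1 - p - q with hc_def
  simp only [Function.comp]
  have ha : 0 < a := by rw [ha_def]; linarith
  have ha1 : a ≤ 1 := by rw [ha_def]; linarith
  have hc : 0 < c := by rw [hc_def]; linarith
  have hc1 : c < 1 := by rw [hc_def]; linarith
  have hca : c ≤ a := by rw [ha_def, hc_def]; linarith
  have hd0 : d ≠ 0 := by omega
  have hd1 : (1:ℕ) ≤ d := by omega
  have hdpos : (0:ℝ) < d := by exact_mod_cast Nat.pos_of_ne_zero hd0
  -- existence of fixed point s of G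
  have hcont : ContinuousOn (fun x : ℝ => (a - c * x ^ d) - x) (Set.Icc 0 1) := by fun_prop
  have h0mem : (0:ℝ) ∈ Set.Icc ((fun x : ℝ => (a - c * x ^ d) - x) 1)
      ((fun x : ℝ => (a - c * x ^ d) - x) 0) := by
    simp only [one_pow, zero_pow hd0, mul_zero, mul_one, sub_zero]
    constructor <;> [skip; linarith] <;> rw [ha_def, hc_def] <;> linarith
  obtain ⟨s, hsIcc, hFs⟩ := intermediate_value_Icc' zero_le_one hcont h0mem
  simp only at hFs
  have hfix : a - c * s ^ d = s := by linarith
  have hs0 : 0 < s := by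
    rcases lt_or_eq_of_le hsIcc.1 with h | h
    · exact h
    · exfalso; rw [← h] at hfix; rw [zero_pow hd0] at hfix; simp at hfix; linarith
  have hs1 : s < 1 := by
    rcases lt_or_eq_of_le hsIcc.2 with h | h
    · exact h
    · exfalso; rw [h, one_pow, mul_one] at hfix
      rw [ha_def, hc_def] at hfix; linarith
  -- the algebraic equivalence
  have hu : 0 < c * s ^ (d-1) := by positivity
  have haeq : a = s * (1 + c * s ^ (d-1)) := by
    have h := hfix
    rw [pow_pred_mul d hd s] at h
    ring_nf at h ⊢; linarith
  have hca_eq : c * a ^ (d-1) = (c * s ^ (d-1)) * (1 + c * s ^ (d-1)) ^ (d-1) := by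
    rw [haeq, mul_pow]; ring
  have hthr : ((d : ℝ) + 1) ^ (d - 1) / (d:ℝ) ^ d = (1/(d:ℝ)) * (1 + 1/(d:ℝ)) ^ (d-1) := by
    have h1 : (1 : ℝ) + 1/(d:ℝ) = ((d:ℝ)+1)/(d:ℝ) := by field_simp
    rw [h1, div_pow, pow_pred_mul d hd ((d:ℝ))]
    field_simp
  have hAiff : (c * a ^ (d-1) ≤ ((d:ℝ)+1)^(d-1)/(d:ℝ)^d) ↔ (d:ℝ) * c * s^(d-1) ≤ 1 := by
    rw [hthr, hca_eq]
    have hcomm : (d:ℝ) * c * s^(d-1) = c * s^(d-1) * (d:ℝ) := by ring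
    constructor
    · intro h
      by_contra hlt
      push_neg at hlt
      have h2 : 1/(d:ℝ) < c * s^(d-1) := by
        rw [div_lt_iff₀ hdpos, ← hcomm]; linarith
      have := aux_mono d hd (by positivity) h2
      linarith
    · intro h
      have h2 : c * s^(d-1) ≤ 1/(d:ℝ) := by
        rw [le_div_iff₀ hdpos, ← hcomm]; linarith
      rcases eq_or_lt_of_le h2 with he | hl
      · rw [he]
      · exact (aux_mono d hd hu.le hl).le
  rw [hAiff]
  -- derivative machinery
  have hGd : ∀ x : ℝ, HasDerivAt (fun y : ℝ => a - c * y ^ d) (-(c * ((d:ℕ) * x ^ (d-1)))) x :=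
    fun x => ((hasDerivAt_pow d x).const_mul c).const_sub a
  have hHd : ∀ x : ℝ, HasDerivAt (fun y : ℝ => a - c * (a - c * y ^ d) ^ d - y)
      ((c * (d:ℝ))^2 * (x * (a - c * x ^ d)) ^ (d-1) - 1) x := by
    intro x
    have h2 : (-(c * ((d:ℕ) * (a - c * x ^ d) ^ (d-1)))) * (-(c * ((d:ℕ) * x ^ (d-1)))) - 1
        = (c * (d:ℝ))^2 * (x * (a - c * x ^ d)) ^ (d-1) - 1 := by
      rw [mul_pow x (a - c * x ^ d) (d-1)]; push_cast; ring
    rw [← h2]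
    exact ((hGd (a - c * x ^ d)).comp x (hGd x)).sub (hasDerivAt_id x)
  have hHcont : ContinuousOn (fun y : ℝ => a - c * (a - c * y ^ d) ^ d - y) (Set.Icc 0 1) := by
    fun_prop
  have hHs : a - c * (a - c * s ^ d) ^ d - s = 0 := by rw [hfix, hfix]; ring
  constructor
  · -- unique fixed point → t ≤ 1
    intro hEx
    by_contra hle
    push_neg at hle
    -- H 0 > 0
    have hH0 : (0:ℝ) < a - c * (a - c * (0:ℝ) ^ d) ^ d - 0 := by
      rw [zero_pow hd0, mul_zero, sub_zero, sub_zero]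
      have h1 : a ^ d ≤ a := by
        calc a ^ d ≤ a ^ 1 := pow_le_pow_of_le_one ha.le ha1 hd1
        _ = a := pow_one a
      nlinarith
    -- derivative at s is t^2 - 1 > 0
    have hds : HasDerivAt (fun y : ℝ => a - c * (a - c * y ^ d) ^ d - y)
        (((d:ℝ) * c * s ^ (d-1))^2 - 1) s := by
      have h1 := hHd s
      rw [hfix] at h1
      have h2 : (c * (d:ℝ))^2 * (s * s) ^ (d-1) - 1 = ((d:ℝ) * c * s ^ (d-1))^2 - 1 := by
        rw [mul_pow s s (d-1)]; ring
      rwa [h2] at h1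
    have hpos2 : 0 < ((d:ℝ) * c * s ^ (d-1))^2 - 1 := by nlinarith
    have hslope := hasDerivAt_iff_tendsto_slope.1 hds
    have hev1 : ∀ᶠ x in nhdsWithin s (Set.Iio s),
        0 < slope (fun y : ℝ => a - c * (a - c * y ^ d) ^ d - y) s x := by
      have h1 : ∀ᶠ x in nhdsWithin s {s}ᶜ,
          0 < slope (fun y : ℝ => a - c * (a - c * y ^ d) ^ d - y) s x :=
        hslope.eventually (eventually_gt_nhds hpos2)
      exact h1.filter_mono (nhdsWithin_mono s fun x hx => ne_of_lt hx)
    have hev2 : ∀ᶠ x in nhdsWithin s (Set.Iio s), x ∈ Set.Ioo 0 s :=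
      Ioo_mem_nhdsLT_of_mem ⟨hs0, le_refl s⟩
    obtain ⟨w, hw1, hw2⟩ := (hev1.and hev2).exists
    -- H w < 0
    have hHw : a - c * (a - c * w ^ d) ^ d - w < 0 := by
      rw [slope_def_field] at hw1
      rw [hHs] at hw1
      rcases div_pos_iff.1 hw1 with ⟨h1, h2⟩ | ⟨h1, h2⟩
      · exfalso; linarith [hw2.2]
      · linarith
    -- IVT on [0, w] gives another fixed point z < s
    have hcont2 : ContinuousOn (fun y : ℝ => a - c * (a - c * y ^ d) ^ d - y)
        (Set.Icc 0 w) := by fun_prop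
    have h0mem2 : (0:ℝ) ∈ Set.Icc ((fun y : ℝ => a - c * (a - c * y ^ d) ^ d - y) w)
        ((fun y : ℝ => a - c * (a - c * y ^ d) ^ d - y) 0) := ⟨hHw.le, hH0.le⟩
    obtain ⟨z, hzIcc, hHz⟩ := intermediate_value_Icc' hw2.1.le hcont2 h0mem2
    simp only at hHz
    have hzs : z < s := lt_of_le_of_lt hzIcc.2 hw2.2
    obtain ⟨y, _, hyuniq⟩ := hEx
    have h1 : z = y := hyuniq z ⟨⟨hzIcc.1, le_trans hzIcc.2 (le_trans hw2.2.le hs1.le)⟩,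
      by linarith⟩
    have h2 : s = y := hyuniq s ⟨⟨hs0.le, hs1.le⟩, by linarith⟩
    rw [← h2] at h1; linarith
  · -- t ≤ 1 → unique fixed point
    intro ht
    -- x * G x strictly monotone on [0, s]
    have hphi : StrictMonoOn (fun x : ℝ => x * (a - c * x ^ d)) (Set.Icc 0 s) := by
      apply strictMonoOn_of_deriv_pos (convex_Icc 0 s) (by fun_prop)
      intro x hx
      rw [interior_Icc] at hx
      have hder : HasDerivAt (fun x : ℝ => x * (a - c * x ^ d))
          (1 * (a - c * x ^ d) + x * (-(c * ((d:ℕ) * x ^ (d-1))))) x :=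
        (hasDerivAt_id x).mul (hGd x)
      rw [hder.deriv]
      have hkey : 1 * (a - c * x ^ d) + x * (-(c * ((d:ℕ) * x ^ (d-1))))
          = a - c * x ^ d - (d:ℝ) * c * x ^ d := by
        rw [pow_pred_mul d hd x]; push_cast; ring
      rw [hkey]
      have hxd : x ^ d < s ^ d := pow_lt_pow_left₀ hx.2 hx.1.le hd0
      have hsge : 0 ≤ s - (d:ℝ) * c * s ^ d := by
        have heq : (d:ℝ) * c * s ^ d = ((d:ℝ) * c * s ^ (d-1)) * s := by
          rw [pow_pred_mul d hd s]; ring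
        rw [heq]
        nlinarith
      have h1 : c * x ^ d < c * s ^ d := mul_lt_mul_of_pos_left hxd hc
      have h2 : (d:ℝ) * c * x ^ d < (d:ℝ) * c * s ^ d := by
        have := mul_lt_mul_of_pos_left hxd (mul_pos hdpos hc)
        linarith [this]
      linarith
    -- H strictly antitone on [0, s]
    have hanti : StrictAntiOn (fun x : ℝ => a - c * (a - c * x ^ d) ^ d - x) (Set.Icc 0 s) := by
      apply strictAntiOn_of_deriv_neg (convex_Icc 0 s) (by fun_prop)
      intro x hx
      rw [interior_Icc] at hx
      rw [(hHd x).deriv]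
      have hxmem : x ∈ Set.Icc (0:ℝ) s := ⟨hx.1.le, hx.2.le⟩
      have hsmem : s ∈ Set.Icc (0:ℝ) s := ⟨hs0.le, le_refl s⟩
      have h1 : x * (a - c * x ^ d) < s * s := by
        have := hphi hxmem hsmem hx.2
        simpa [hfix] using this
      have h2 : (0:ℝ) ≤ x * (a - c * x ^ d) := by
        have hxd : x ^ d ≤ s ^ d := pow_le_pow_left₀ hx.1.le hx.2.le d
        have : s ≤ a - c * x ^ d := by nlinarith
        exact mul_nonneg hx.1.le (by linarith)
      have h3 : (x * (a - c * x ^ d))^(d-1) < (s*s)^(d-1) :=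
        pow_lt_pow_left₀ h1 h2 (by omega)
      have h4 : (c * (d:ℝ))^2 * (s*s)^(d-1) = ((d:ℝ) * c * s ^ (d-1))^2 := by
        rw [mul_pow s s (d-1)]; ring
      have ht0 : 0 ≤ (d:ℝ) * c * s ^ (d-1) := by positivity
      have ht2 : ((d:ℝ) * c * s ^ (d-1))^2 ≤ 1 := by nlinarith
      have h5 : (c * (d:ℝ))^2 * (x * (a - c * x ^ d))^(d-1)
          < (c * (d:ℝ))^2 * (s*s)^(d-1) :=
        mul_lt_mul_of_pos_left h3 (by positivity)
      linarith
    -- H x > 0 strictly on [0, s)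
    have hHpos : ∀ x, 0 ≤ x → x < s → 0 < a - c * (a - c * x ^ d) ^ d - x := by
      intro x hx0 hxs
      have h : a - c * (a - c * s ^ d) ^ d - s < a - c * (a - c * x ^ d) ^ d - x :=
        hanti ⟨hx0, hxs.le⟩ ⟨hs0.le, le_refl s⟩ hxs
      linarith
    refine ⟨s, ⟨⟨hs0.le, hs1.le⟩, by linarith⟩, ?_⟩
    rintro z ⟨⟨hz0, hz1⟩, hzfix⟩
    rcases lt_trichotomy z s with h | h | h
    · exfalso
      have := hHpos z hz0 h
      linarith
    · exact h
    · exfalso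
      -- w := G z is a fixed point in [0, s)
      set w : ℝ := a - c * z ^ d with hw_def
      have hw0 : 0 ≤ w := by
        have h1 : z ^ d ≤ 1 := pow_le_one₀ hz0 hz1
        have h2 : c * z ^ d ≤ c := by nlinarith
        rw [hw_def]; linarith
      have hws : w < s := by
        have hzd : s ^ d < z ^ d := pow_lt_pow_left₀ h hs0.le hd0
        have : c * s ^ d < c * z ^ d := mul_lt_mul_of_pos_left hzd hc
        rw [hw_def]; linarith
      have hwfix : a - c * (a - c * w ^ d) ^ d - w = 0 := by
        have hGw : a - c * w ^ d = z := by rw [hw_def]; linarith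
        rw [hGw, hw_def]; ring
      have := hHpos w hw0 hws
      linarith
end

section
/- Set M = ((1−p−q)^{1/d}·π^{1/d}·d·(1−πq)^{(d−1)/d}·(d+1)^{−(d−1)/d})^{d+1}. Then for every x ∈ [0,1] the derivative of g∘g at x is at most M, and the derivative of g∘g at the point x_{p,q} equals M. -/
/-- Binomial(d,π) case: the derivative of g∘g on [0,1] is at most
M = ((1−p−q)^{1/d}·π^{1/d}·d·(1−πq)^{(d−1)/d}·(d+1)^{−(d−1)/d})^{d+1}, with equality at x_{p,q}. -/
theorem binomial_deriv_max
    (d : ℕ) (hd : 2 ≤ d) (π p q : ℝ) (hπ0 : 0 < π) (hπ1 : π ≤ 1)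
    (hp : 0 ≤ p) (hq : 0 ≤ q) (hpq0 : 0 < p + q) (hpq1 : p + q < 1)
    (g : ℝ → ℝ) (hg : ∀ x, g x = (1 - q) - (1 - p - q) * (π * x + 1 - π) ^ d)
    (xpq : ℝ)
    (hxpq : xpq = (1 / π) * ((1 - π * q) / (((d : ℝ) + 1) * π * (1 - p - q))) ^ ((1 : ℝ) / d)
        + 1 - 1 / π)
    (M : ℝ)
    (hM : M = ((1 - p - q) ^ ((1 : ℝ) / d) * π ^ ((1 : ℝ) / d) * (d : ℝ)
        * (1 - π * q) ^ (((d : ℝ) - 1) / d)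
        * ((d : ℝ) + 1) ^ (-(((d : ℝ) - 1) / d))) ^ (d + 1)) :
    (∀ x ∈ Set.Icc (0 : ℝ) 1, deriv (g ∘ g) x ≤ M) ∧ deriv (g ∘ g) xpq = M := by
  have hgfun : g = fun x => (1 - q) - (1 - p - q) * (π * x + 1 - π) ^ d := funext hg
  subst hgfun
  set s : ℝ := 1 - p - q with hs
  have hs0 : 0 < s := by rw [hs]; linarith
  set A : ℝ := 1 - π * q with hA
  set B : ℝ := π * s with hB
  have hA0 : 0 < A := by rw [hA]; nlinarith
  have hB0 : 0 < B := mul_pos hπ0 hs0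
  have hd0 : (0:ℝ) < (d:ℝ) := by exact_mod_cast Nat.lt_of_lt_of_le Nat.zero_lt_two hd
  have hd1 : (0:ℝ) < (d:ℝ) + 1 := by linarith
  -- derivative of g
  have hgd : ∀ x : ℝ, HasDerivAt (fun x => (1 - q) - s * (π * x + 1 - π) ^ d)
      (-(s * ((d:ℝ) * (π * x + 1 - π) ^ (d-1) * π))) x := by
    intro x
    have h1 : HasDerivAt (fun x : ℝ => π * x + 1 - π) π x := by
      simpa using (((hasDerivAt_id x).const_mul π).add_const 1).sub_const π
    exact ((h1.pow d).const_mul s).const_sub (1 - q)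
  set G : ℝ → ℝ := fun x => (1 - q) - s * (π * x + 1 - π) ^ d with hG
  have hderiv : ∀ x : ℝ, deriv (G ∘ G) x
      = (s * (d:ℝ) * π) ^ 2 * ((π * x + 1 - π) * (A - B * (π * x + 1 - π) ^ d)) ^ (d-1) := by
    intro x
    have hc := ((hgd (G x)).comp x (hgd x)).deriv
    rw [hc]
    have hGx : π * (G x) + 1 - π = A - B * (π * x + 1 - π) ^ d := by
      rw [hG, hA, hB]; ring
    rw [hGx, mul_pow (π*x+1-π) (A - B*(π*x+1-π)^d) (d-1)]
    ring
  set w : ℝ := (A / (((d:ℝ)+1) * B)) ^ ((1:ℝ)/(d:ℝ)) with hwdef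
  have hw0 : 0 < w := Real.rpow_pos_of_pos (by positivity) _
  have hwd : w ^ d = A / (((d:ℝ)+1) * B) := by
    rw [hwdef, one_div, Real.rpow_inv_natCast_pow (by positivity) (by omega)]
  have hBw : ((d:ℝ)+1) * (B * w ^ d) = A := by
    rw [hwd]; field_simp
  -- key inequality
  have key : ∀ u : ℝ, 0 ≤ u → u * (A - B * u ^ d) ≤ A * w * (d:ℝ) / ((d:ℝ)+1) := by
    intro u hu
    have hber := one_add_mul_le_pow (a := u / w - 1)
      (by nlinarith [div_nonneg hu hw0.le]) (d+1)
    have h1 : (1 : ℝ) + (u/w - 1) = u / w := by ring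
    rw [h1] at hber
    have hber2 : ((d:ℝ)+1) * u * w ^ d - (d:ℝ) * w ^ (d+1) ≤ u ^ (d+1) := by
      have h2 := mul_le_mul_of_nonneg_right hber (le_of_lt (pow_pos hw0 (d+1)))
      rw [div_pow, div_mul_cancel₀ _ (by positivity : (w:ℝ) ^ (d+1) ≠ 0)] at h2
      have h3 : (1 + (↑(d+1):ℝ) * (u/w - 1)) * w ^ (d+1)
          = ((d:ℝ)+1) * u * w ^ d - (d:ℝ) * w ^ (d+1) := by
        push_cast
        field_simp
        ring
      linarith [h3 ▸ h2]
    rw [le_div_iff₀ hd1]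
    have h4 := mul_le_mul_of_nonneg_left hber2 hB0.le
    have h5 := mul_le_mul_of_nonneg_left h4 hd1.le
    have hident : u * (A - B * u ^ d) * ((d:ℝ)+1) - A * w * (d:ℝ)
        = ((d:ℝ)+1) * (B * (((d:ℝ)+1) * u * w ^ d - (d:ℝ) * w ^ (d+1)))
          - ((d:ℝ)+1) * (B * u ^ (d+1)) := by
      rw [← hBw, pow_succ, pow_succ]; ring
    linarith
  -- value at the maximizer
  have hfw : w * (A - B * w ^ d) = A * w * (d:ℝ) / ((d:ℝ)+1) := by
    have h : B * w ^ d = A / ((d:ℝ)+1) := by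
      field_simp at hBw ⊢; linarith
    rw [h]; field_simp; ring
  -- the big rpow identity
  have hMval : (s * (d:ℝ) * π) ^ 2 * (A * w * (d:ℝ) / ((d:ℝ)+1)) ^ (d-1) = M := by
    have hL0' : 0 < (s * (d:ℝ) * π) ^ 2 * (A * w * (d:ℝ) / ((d:ℝ)+1)) ^ (d-1) := by positivity
    have hR0 : 0 < M := by
      rw [hM, hs, hA]
      positivity
    apply Real.log_injOn_pos (Set.mem_Ioi.2 hL0') (Set.mem_Ioi.2 hR0)
    have hABpos : (0:ℝ) < A / (((d:ℝ)+1) * B) := by positivity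
    have hcast : ((d - 1 : ℕ) : ℝ) = (d:ℝ) - 1 := by
      rw [Nat.cast_sub (by omega : 1 ≤ d), Nat.cast_one]
    have l1 : Real.log ((s * (d:ℝ) * π) ^ 2)
        = 2 * (Real.log s + Real.log (d:ℝ) + Real.log π) := by
      rw [Real.log_pow, Real.log_mul (mul_ne_zero hs0.ne' hd0.ne') hπ0.ne',
        Real.log_mul hs0.ne' hd0.ne']
      push_cast; ring
    have l3 : Real.log w
        = (1/(d:ℝ)) * (Real.log A - (Real.log ((d:ℝ)+1) + Real.log π + Real.log s)) := by
      rw [hwdef, Real.log_rpow hABpos, Real.log_div hA0.ne' (by positivity),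
        Real.log_mul hd1.ne' hB0.ne', hB, Real.log_mul hπ0.ne' hs0.ne']
      ring
    have l2 : Real.log ((A * w * (d:ℝ) / ((d:ℝ)+1)) ^ (d-1))
        = ((d:ℝ)-1) * (Real.log A + Real.log w + Real.log (d:ℝ) - Real.log ((d:ℝ)+1)) := by
      rw [Real.log_pow,
        Real.log_div (mul_ne_zero (mul_ne_zero hA0.ne' hw0.ne') hd0.ne') hd1.ne',
        Real.log_mul (mul_ne_zero hA0.ne' hw0.ne') hd0.ne',
        Real.log_mul hA0.ne' hw0.ne', hcast]
    have n1 : s ^ ((1:ℝ)/(d:ℝ)) ≠ 0 := by positivity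
    have n2 : π ^ ((1:ℝ)/(d:ℝ)) ≠ 0 := by positivity
    have n3 : A ^ (((d:ℝ)-1)/(d:ℝ)) ≠ 0 := by positivity
    have n4 : ((d:ℝ)+1) ^ (-(((d:ℝ)-1)/(d:ℝ))) ≠ 0 := by positivity
    have l4 : Real.log (s ^ ((1:ℝ)/(d:ℝ)) * π ^ ((1:ℝ)/(d:ℝ)) * (d:ℝ) * A ^ (((d:ℝ)-1)/(d:ℝ))
          * ((d:ℝ)+1) ^ (-(((d:ℝ)-1)/(d:ℝ))))
        = (1/(d:ℝ)) * Real.log s + (1/(d:ℝ)) * Real.log π + Real.log (d:ℝ)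
          + (((d:ℝ)-1)/(d:ℝ)) * Real.log A
          + (-(((d:ℝ)-1)/(d:ℝ))) * Real.log ((d:ℝ)+1) := by
      rw [Real.log_mul (mul_ne_zero (mul_ne_zero (mul_ne_zero n1 n2) hd0.ne') n3) n4,
        Real.log_mul (mul_ne_zero (mul_ne_zero n1 n2) hd0.ne') n3,
        Real.log_mul (mul_ne_zero n1 n2) hd0.ne',
        Real.log_mul n1 n2,
        Real.log_rpow hs0, Real.log_rpow hπ0, Real.log_rpow hA0, Real.log_rpow hd1]
    rw [hM, Real.log_mul (by positivity) (by positivity), l1, l2, l3, Real.log_pow, l4]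
    push_cast
    field_simp
    ring
  constructor
  · intro x hx
    obtain ⟨hx0, hx1⟩ := hx
    rw [hderiv x, ← hMval]
    set u : ℝ := π * x + 1 - π with hu
    have hπx : 0 ≤ π * x := mul_nonneg hπ0.le hx0
    have hπx1 : π * x ≤ π * 1 := mul_le_mul_of_nonneg_left hx1 hπ0.le
    have hu0 : 0 ≤ u := by rw [hu]; linarith
    have hu1 : u ≤ 1 := by rw [hu]; linarith
    have hAB : 0 ≤ A - B * u ^ d := by
      have h1 : u ^ d ≤ 1 := pow_le_one₀ hu0 hu1
      have h2 : B * u ^ d ≤ B * 1 := mul_le_mul_of_nonneg_left h1 hB0.le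
      have h3 : B ≤ A := by
        have hπp : 0 ≤ π * p := mul_nonneg hπ0.le hp
        rw [hA, hB, hs]; linarith [hπp]
      rw [mul_one] at h2
      linarith
    apply mul_le_mul_of_nonneg_left _ (by positivity)
    apply pow_le_pow_left₀ (mul_nonneg hu0 hAB) (key u hu0)
  · rw [hderiv xpq, ← hMval]
    have hux : π * xpq + 1 - π = w := by
      rw [hxpq, hwdef]
      have hπne : π ≠ 0 := ne_of_gt hπ0
      have harg : A / (((d:ℝ)+1) * π * s) = A / (((d:ℝ)+1) * B) := by
        rw [hB]; ring_nf
      field_simp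
      rw [← harg]
      rw [show π * ((d:ℝ)+1) * s = ((d:ℝ)+1) * π * s by ring]; ring
    rw [hux, hfw]
end

section
/- One has (g∘g)(x_{p,q}) ≤ x_{p,q}. -/
lemma core_amgm (d : ℕ) (hd : 1 ≤ d) (r s : ℝ) (hr : 0 ≤ r) (hs : 0 ≤ s) :
    s * r ^ d ≤ r ^ (d + 1) + (d : ℝ) ^ d / ((d : ℝ) + 1) ^ (d + 1) * s ^ (d + 1) := by
  have hD0 : (0:ℝ) < (d:ℝ) := by exact_mod_cast hd
  have hD1 : (0:ℝ) < (d:ℝ) + 1 := by linarith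
  set D : ℝ := (d : ℝ) with hDdef
  have hw : D / (D+1) + 1 / (D+1) = 1 := by field_simp
  have h := Real.geom_mean_le_arith_mean2_weighted
    (by positivity : (0:ℝ) ≤ D/(D+1)) (by positivity : (0:ℝ) ≤ 1/(D+1))
    (by positivity : (0:ℝ) ≤ (D+1)/D * r^(d+1))
    (by positivity : (0:ℝ) ≤ (D/(D+1))^d * s^(d+1)) hw
  have hL : ((D+1)/D * r^(d+1)) ^ (D/(D+1)) * (((D/(D+1))^d * s^(d+1)) ^ (1/(D+1)))
      = s * r ^ d := by
    rw [Real.mul_rpow (by positivity) (by positivity),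
        Real.mul_rpow (by positivity) (by positivity),
        ← Real.rpow_natCast r (d+1), ← Real.rpow_natCast s (d+1),
        ← Real.rpow_mul hr, ← Real.rpow_mul hs,
        ← Real.rpow_natCast (D/(D+1)) d, ← Real.rpow_mul (by positivity)]
    have e1' : ((d + 1 : ℕ) : ℝ) * (D/(D+1)) = D := by push_cast; field_simp; rw [hDdef]
    have e2 : ((d + 1 : ℕ) : ℝ) * (1/(D+1)) = 1 := by push_cast; field_simp; rw [hDdef]
    have e3 : (d : ℝ) * (1/(D+1)) = D/(D+1) := by ring
    rw [e1', e2, e3, Real.rpow_one]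
    have e4 : ((D+1)/D) ^ (D/(D+1)) * r ^ D * ((D/(D+1)) ^ (D/(D+1)) * s)
        = (((D+1)/D) ^ (D/(D+1)) * ((D/(D+1)) ^ (D/(D+1)))) * (r ^ D * s) := by ring
    rw [e4, ← Real.mul_rpow (by positivity) (by positivity)]
    have e5 : (D+1)/D * (D/(D+1)) = 1 := by field_simp
    rw [e5, Real.one_rpow, one_mul, Real.rpow_natCast]
    ring
  rw [hL] at h
  refine h.trans (le_of_eq ?_)
  have e6 : D/(D+1) * ((D+1)/D * r^(d+1)) = r^(d+1) := by field_simp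
  have e7 : 1/(D+1) * ((D/(D+1))^d * s^(d+1)) = D^d / (D+1)^(d+1) * s^(d+1) := by
    rw [div_pow, pow_succ]
    field_simp
    ring_nf
  rw [e6, e7]

/-- Binomial(d,π) case: (g∘g)(x_{p,q}) ≤ x_{p,q}. -/
theorem binomial_gg_xpq_le
    (d : ℕ) (hd : 2 ≤ d) (π p q : ℝ) (hπ0 : 0 < π) (hπ1 : π ≤ 1)
    (hp : 0 ≤ p) (hq : 0 ≤ q) (hpq0 : 0 < p + q) (hpq1 : p + q < 1)
    (g : ℝ → ℝ) (hg : ∀ x, g x = (1 - q) - (1 - p - q) * (π * x + 1 - π) ^ d)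
    (xpq : ℝ)
    (hxpq : xpq = (1 / π) * ((1 - π * q) / (((d : ℝ) + 1) * π * (1 - p - q))) ^ ((1 : ℝ) / d)
        + 1 - 1 / π) :
    (g ∘ g) xpq ≤ xpq := by
  have hd1 : (1:ℕ) ≤ d := by omega
  have hD0 : (0:ℝ) < (d:ℝ) := by exact_mod_cast hd1
  have hD1 : (0:ℝ) < (d:ℝ) + 1 := by linarith
  set D : ℝ := (d : ℝ) with hDdef
  set s : ℝ := 1 - π * q with hs_def
  set a : ℝ := 1 - p - q with ha_def
  have ha : 0 < a := by simp only [ha_def]; linarith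
  have hs : 0 < s := by
    have : π * q ≤ q := by nlinarith
    have hq1 : q < 1 := by linarith
    simp only [hs_def]; linarith
  have hbase : 0 < s / ((D + 1) * π * a) := by positivity
  set r : ℝ := (s / ((D + 1) * π * a)) ^ ((1 : ℝ) / d) with hr_def
  have hr : 0 < r := Real.rpow_pos_of_pos hbase _
  have hrd : r ^ d = s / ((D + 1) * π * a) := by
    rw [hr_def, ← Real.rpow_natCast (_ ^ ((1:ℝ)/d)) d, ← Real.rpow_mul hbase.le]
    rw [one_div, inv_mul_cancel₀ hD0.ne', Real.rpow_one]
  have e1 : π * xpq + 1 - π = r := by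
    rw [hxpq]; field_simp; ring
  have e2 : g xpq = 1 - q - s / ((D + 1) * π) := by
    rw [hg, e1, hrd]
    field_simp
  have e3 : π * g xpq + 1 - π = D * s / (D + 1) := by
    rw [e2, hs_def]
    field_simp
    ring
  have e4 : (g ∘ g) xpq = 1 - q - a * (D * s / (D + 1)) ^ d := by
    simp only [Function.comp_apply]
    rw [hg (g xpq), e3, ha_def]
  -- key inequality
  have hcore := core_amgm d hd1 r s hr.le hs.le
  have hpa : π * a * ((D + 1) * r ^ d) = s := by
    rw [hrd]; field_simp
  have hkey : s - π * a * (D * s / (D + 1)) ^ d ≤ r := by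
    have hv : π * a * (D * s / (D + 1)) ^ d = D ^ d * s ^ (d + 1) / ((D + 1) ^ (d + 1) * r ^ d) := by
      have hπa : π * a = s / ((D + 1) * r ^ d) := by
        field_simp at hpa ⊢
        linarith [hpa]
      rw [hπa, div_pow, mul_pow, pow_succ (D+1) d, pow_succ s d]
      field_simp
    rw [hv]
    have h2 : (s - r) * ((D + 1) ^ (d + 1) * r ^ d) ≤ D ^ d * s ^ (d + 1) := by
      have h3 : (s - r) * ((D + 1) ^ (d + 1) * r ^ d)
          = (s * r ^ d - r ^ (d + 1)) * (D + 1) ^ (d + 1) := by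
        rw [pow_succ r d]; ring
      rw [h3]
      have h4 : (s * r ^ d - r ^ (d + 1)) ≤ D ^ d / (D + 1) ^ (d + 1) * s ^ (d + 1) := by
        linarith
      have h5 : (0:ℝ) < (D + 1) ^ (d + 1) := by positivity
      calc (s * r ^ d - r ^ (d + 1)) * (D + 1) ^ (d + 1)
          ≤ (D ^ d / (D + 1) ^ (d + 1) * s ^ (d + 1)) * (D + 1) ^ (d + 1) := by
            exact mul_le_mul_of_nonneg_right h4 h5.le
        _ = D ^ d * s ^ (d + 1) := by field_simp
    have h6 : s - r ≤ D ^ d * s ^ (d + 1) / ((D + 1) ^ (d + 1) * r ^ d) := by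
      rw [le_div_iff₀ (by positivity)]
      exact h2
    linarith
  -- conclude
  have e5 : π * ((g ∘ g) xpq) + 1 - π ≤ π * xpq + 1 - π := by
    rw [e1, e4]
    have : π * (1 - q - a * (D * s / (D + 1)) ^ d) + 1 - π
        = s - π * a * (D * s / (D + 1)) ^ d := by
      rw [hs_def]; ring
    rw [this]
    exact hkey
  have : π * ((g ∘ g) xpq) ≤ π * xpq := by linarith
  exact le_of_mul_le_mul_left this hπ0
end

section
/- One has g(x_{p,q}) > x_{p,q} if and only if (1−p−q)·π·(1−πq)^{d−1} > (d+1)^{d−1}/d^d. -/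
/-- Binomial(d,π) case: g(x_{p,q}) > x_{p,q} iff
(1−p−q)·π·(1−πq)^{d−1} > (d+1)^{d−1}/d^d. -/
theorem binomial_g_xpq_gt_iff
    (d : ℕ) (hd : 2 ≤ d) (π p q : ℝ) (hπ0 : 0 < π) (hπ1 : π ≤ 1)
    (hp : 0 ≤ p) (hq : 0 ≤ q) (hpq0 : 0 < p + q) (hpq1 : p + q < 1)
    (g : ℝ → ℝ) (hg : ∀ x, g x = (1 - q) - (1 - p - q) * (π * x + 1 - π) ^ d)
    (xpq : ℝ)
    (hxpq : xpq = (1 / π) * ((1 - π * q) / (((d : ℝ) + 1) * π * (1 - p - q))) ^ ((1 : ℝ) / d)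
        + 1 - 1 / π) :
    g xpq > xpq ↔
      (1 - p - q) * π * (1 - π * q) ^ (d - 1) > ((d : ℝ) + 1) ^ (d - 1) / (d : ℝ) ^ d := by
  obtain ⟨m, rfl⟩ : ∃ m, d = m + 1 := ⟨d - 1, (Nat.succ_pred_eq_of_pos (by omega)).symm⟩
  simp only [Nat.add_sub_cancel] at *
  have hq1 : q < 1 := by linarith
  have ha : 0 < 1 - p - q := by linarith
  have hπq : π * q ≤ q := mul_le_of_le_one_left hq hπ1
  have hu : 0 < 1 - π * q := by linarith
  have hD : 0 < ((m + 1 : ℕ) : ℝ) := by positivity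
  have hdne : ((m + 1 : ℕ) : ℝ) ≠ 0 := hD.ne'
  set D : ℝ := ((m + 1 : ℕ) : ℝ) with hD_def
  set a : ℝ := 1 - p - q with ha_def
  set u : ℝ := 1 - π * q with hu_def
  set c : ℝ := u / ((D + 1) * π * a) with hc_def
  have hc : 0 < c := by positivity
  set y : ℝ := c ^ ((1 : ℝ) / (m + 1 : ℕ)) with hy_def
  have hy : 0 < y := Real.rpow_pos_of_pos hc _
  have hyd : y ^ (m + 1) = c := by
    rw [hy_def, ← Real.rpow_natCast (c ^ _) (m + 1), ← Real.rpow_mul hc.le]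
    rw [one_div, inv_mul_cancel₀ hdne, Real.rpow_one]
  have hx : π * xpq + 1 - π = y := by
    rw [hxpq]; field_simp; ring
  have key : g xpq - xpq = (u * D / (D + 1) - y) / π := by
    rw [hg, hx, hyd, hxpq, hc_def]
    have hx2 : xpq = (1 / π) * y + 1 - 1 / π := hxpq
    field_simp
    ring
  have step1 : g xpq > xpq ↔ y < u * D / (D + 1) := by
    rw [gt_iff_lt, ← sub_pos, key, lt_div_iff₀ hπ0, zero_mul, sub_pos]
  have step2 : y < u * D / (D + 1) ↔ c < (u * D / (D + 1)) ^ (m + 1) := by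
    rw [← hyd]
    exact (pow_lt_pow_iff_left₀ hy.le (by positivity) (by omega)).symm
  have step3 : c < (u * D / (D + 1)) ^ (m + 1) ↔
      (D + 1) ^ m / D ^ (m + 1) < a * π * u ^ m := by
    rw [hc_def, div_pow, div_lt_div_iff₀ (by positivity) (by positivity),
      div_lt_iff₀ (by positivity)]
    rw [show u * (D + 1) ^ (m + 1) = (D + 1) ^ m * (u * (D + 1)) by
        simp only [pow_succ]; ring,
      show (u * D) ^ (m + 1) * ((D + 1) * π * a) = a * π * u ^ m * D ^ (m + 1) * (u * (D + 1)) by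
        simp only [mul_pow, pow_succ]; ring,
      mul_lt_mul_iff_left₀ (by positivity)]
  rw [step1, step2, step3]
end

section
/- For every x ∈ ℝ, the derivative of g∘g at x is at most (1−p−q)·λ·exp(−λq−1), and the derivative of g∘g at the point x_{p,q} equals (1−p−q)·λ·exp(−λq−1). -/
lemma key_texp (t : ℝ) : t * Real.exp (-t) ≤ Real.exp (-1 : ℝ) := by
  have h1 : t ≤ Real.exp (t - 1) := by
    have := Real.add_one_le_exp (t - 1)
    linarith
  have h2 : 0 < Real.exp (-t) := Real.exp_pos _
  calc t * Real.exp (-t) ≤ Real.exp (t - 1) * Real.exp (-t) := by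
        exact mul_le_mul_of_nonneg_right h1 h2.le
    _ = Real.exp (-1 : ℝ) := by rw [← Real.exp_add]; ring_nf

/-- Poisson(λ) case: the derivative of g∘g is everywhere at most
(1−p−q)·λ·exp(−λq−1), with equality at x_{p,q}. -/
theorem poisson_deriv_max
    (lam p q : ℝ) (hlam : 0 < lam)
    (hp : 0 ≤ p) (hq : 0 ≤ q) (hpq0 : 0 < p + q) (hpq1 : p + q < 1)
    (g : ℝ → ℝ) (hg : ∀ x, g x = (1 - q) - (1 - p - q) * Real.exp (lam * (x - 1)))
    (xpq : ℝ) (hxpq : xpq = 1 - (Real.log lam + Real.log (1 - p - q)) / lam) :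
    (∀ x : ℝ, deriv (g ∘ g) x ≤ (1 - p - q) * lam * Real.exp (-(lam * q) - 1)) ∧
      deriv (g ∘ g) xpq = (1 - p - q) * lam * Real.exp (-(lam * q) - 1) := by
  have hc : 0 < 1 - p - q := by linarith
  have hgfun : g = fun x => (1 - q) - (1 - p - q) * Real.exp (lam * (x - 1)) :=
    funext hg
  have hgd : ∀ x : ℝ,
      HasDerivAt g (-((1 - p - q) * (Real.exp (lam * (x - 1)) * lam))) x := by
    intro x
    rw [hgfun]
    have h1 : HasDerivAt (fun y : ℝ => lam * (y - 1)) lam x := by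
      simpa using ((hasDerivAt_id x).sub_const 1).const_mul lam
    have h2 := (h1.exp.const_mul (1 - p - q))
    exact ((hasDerivAt_const x (1 - q)).sub h2).congr_deriv (by ring)
  have hcomp : ∀ x : ℝ, deriv (g ∘ g) x
      = (1 - p - q) ^ 2 * lam ^ 2 *
        (Real.exp (lam * (g x - 1)) * Real.exp (lam * (x - 1))) := by
    intro x
    have := ((hgd (g x)).comp x (hgd x)).deriv
    rw [this]; ring
  have hval : ∀ x : ℝ, deriv (g ∘ g) x
      = ((1 - p - q) * lam * Real.exp (-(lam * q))) *
        ((lam * ((1 - p - q) * Real.exp (lam * (x - 1)))) *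
          Real.exp (-(lam * ((1 - p - q) * Real.exp (lam * (x - 1)))))) := by
    intro x
    rw [hcomp x]
    have hx1 : lam * (g x - 1)
        = -(lam * q) + -(lam * ((1 - p - q) * Real.exp (lam * (x - 1)))) := by
      rw [hg x]; ring
    rw [hx1, Real.exp_add]; ring
  have hrhs : (1 - p - q) * lam * Real.exp (-(lam * q) - 1)
      = ((1 - p - q) * lam * Real.exp (-(lam * q))) * Real.exp (-1 : ℝ) := by
    rw [show -(lam * q) - 1 = -(lam * q) + (-1) by ring, Real.exp_add]; ring
  have hcoef : 0 < (1 - p - q) * lam * Real.exp (-(lam * q)) :=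
    mul_pos (mul_pos hc hlam) (Real.exp_pos _)
  constructor
  · intro x
    rw [hval x, hrhs]
    exact mul_le_mul_of_nonneg_left
      (key_texp (lam * ((1 - p - q) * Real.exp (lam * (x - 1))))) hcoef.le
  · rw [hval xpq, hrhs]
    have hu : Real.exp (lam * (xpq - 1)) = 1 / (lam * (1 - p - q)) := by
      have : lam * (xpq - 1) = -(Real.log lam + Real.log (1 - p - q)) := by
        rw [hxpq]; field_simp; ring
      rw [this, neg_add, Real.exp_add, Real.exp_neg, Real.exp_neg,
        Real.exp_log hlam, Real.exp_log hc]
      field_simp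
    have ht : lam * ((1 - p - q) * Real.exp (lam * (xpq - 1))) = 1 := by
      rw [hu]; field_simp
    rw [ht]
    norm_num
end

section
/- One has (g∘g)(x_{p,q}) ≤ x_{p,q}; equivalently, (1−q) − (1−p−q)·exp(−λq−1) ≤ 1 − (log λ + log(1−p−q))/λ. -/
/-- Poisson(λ) case: (g∘g)(x_{p,q}) ≤ x_{p,q}; equivalently,
(1−q) − (1−p−q)·exp(−λq−1) ≤ 1 − (log λ + log(1−p−q))/λ. -/
theorem poisson_gg_xpq_le
    (lam p q : ℝ) (hlam : 0 < lam)
    (hp : 0 ≤ p) (hq : 0 ≤ q) (hpq0 : 0 < p + q) (hpq1 : p + q < 1)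
    (g : ℝ → ℝ) (hg : ∀ x, g x = (1 - q) - (1 - p - q) * Real.exp (lam * (x - 1)))
    (xpq : ℝ) (hxpq : xpq = 1 - (Real.log lam + Real.log (1 - p - q)) / lam) :
    (g ∘ g) xpq ≤ xpq ∧
      (1 - q) - (1 - p - q) * Real.exp (-(lam * q) - 1) ≤
        1 - (Real.log lam + Real.log (1 - p - q)) / lam := by
  have hs : (0:ℝ) < 1 - p - q := by linarith
  set s : ℝ := 1 - p - q with hsdef
  have ht : 0 < lam * s * Real.exp (-(lam * q) - 1) := by positivity
  have hlog := Real.log_le_sub_one_of_pos ht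
  have hlogt : Real.log (lam * s * Real.exp (-(lam * q) - 1))
      = Real.log lam + Real.log s + (-(lam * q) - 1) := by
    rw [Real.log_mul (by positivity) (Real.exp_ne_zero _),
      Real.log_mul hlam.ne' hs.ne', Real.log_exp]
  have key : Real.log lam + Real.log s ≤ lam * s * Real.exp (-(lam * q) - 1) + lam * q := by
    rw [hlogt] at hlog; linarith
  have key2 : (Real.log lam + Real.log s) / lam ≤ q + s * Real.exp (-(lam * q) - 1) := by
    rw [div_le_iff₀ hlam]; nlinarith [key]
  have main : (1 - q) - s * Real.exp (-(lam * q) - 1)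
      ≤ 1 - (Real.log lam + Real.log s) / lam := by linarith
  have hgx : g xpq = 1 - q - 1 / lam := by
    rw [hg, hxpq]
    have h1 : lam * (1 - (Real.log lam + Real.log s) / lam - 1)
        = -(Real.log lam + Real.log s) := by field_simp; ring
    rw [h1, neg_add, Real.exp_add, Real.exp_neg, Real.exp_neg,
      Real.exp_log hlam, Real.exp_log hs]
    field_simp
  have hggx : (g ∘ g) xpq = (1 - q) - s * Real.exp (-(lam * q) - 1) := by
    have h2 : lam * (1 - q - 1 / lam - 1) = -(lam * q) - 1 := by
      field_simp; ring
    simp only [Function.comp_apply, hgx, hg, h2]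
  exact ⟨by rw [hggx, hxpq]; exact main, main⟩
end
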